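/- arXiv:math/9902091 — 7 statements merged into one kernel-verified Lean document; each statement's English description precedes it below -/
import Mathlib

section
/- Let ξ be a Γ-equivariant ADHM datum on (V,W) satisfying the ADHM equation. Then the stabilizer of ξ in GL_Γ(V) is trivial and the orbit GL_Γ(V)·ξ is closed in the space M of ADHM data if and only if ξ is stable and costable. (Lemma 1(ii).) -/
open Filter Topology

namespace ADHMAux

set_option linter.unusedSectionVars false
set_option maxHeartbeats 1000000

variable {V W : Type*} [NormedAddCommGroup V] [NormedSpace ℂ V] [FiniteDimensional ℂ V]
  [NormedAddCommGroup W] [NormedSpace ℂ W] [FiniteDimensional ℂ W]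

def ev (A B : V →L[ℂ] V) : List Bool → (V →L[ℂ] V)
  | [] => 1
  | b :: l => (bif b then A else B) * ev A B l

@[simp] lemma ev_nil (A B : V →L[ℂ] V) (v : V) : ev A B [] v = v := rfl

lemma ev_cons (A B : V →L[ℂ] V) (b : Bool) (l : List Bool) :
    ev A B (b :: l) = (bif b then A else B) * ev A B l := rfl

@[simp] lemma ev_true (A B : V →L[ℂ] V) (l : List Bool) (v : V) :
    ev A B (true :: l) v = A (ev A B l v) := rfl

@[simp] lemma ev_false (A B : V →L[ℂ] V) (l : List Bool) (v : V) :
    ev A B (false :: l) v = B (ev A B l v) := rfl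

lemma ev_append (A B : V →L[ℂ] V) (u w : List Bool) (v : V) :
    ev A B (u ++ w) v = ev A B u (ev A B w v) := by
  induction u with
  | nil => simp [ev]
  | cons b l ih => cases b <;> simp [ih]

lemma ev_continuous (l : List Bool) :
    Continuous fun p : (V →L[ℂ] V) × (V →L[ℂ] V) => ev p.1 p.2 l := by
  induction l with
  | nil => simpa [ev] using continuous_const
  | cons b t ih =>
    cases b
    · exact (continuous_snd.mul ih : Continuous fun p : (V →L[ℂ] V) × (V →L[ℂ] V) => p.2 * ev p.1 p.2 t)
    · exact (continuous_fst.mul ih : Continuous fun p : (V →L[ℂ] V) × (V →L[ℂ] V) => p.1 * ev p.1 p.2 t)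

/-- The core construction: if `ξ` is stable and costable and `η` has the same
Hankel invariants, then there is an intertwiner. -/
lemma key_intertwiner
    (Bx By : V →L[ℂ] V) (i : W →L[ℂ] V) (j : V →L[ℂ] W)
    (hst : ∀ V' : Submodule ℂ V, V' ≤ LinearMap.ker (j : V →ₗ[ℂ] W) →
        (∀ v ∈ V', Bx v ∈ V') → (∀ v ∈ V', By v ∈ V') → V' = ⊥)
    (hco : ∀ V' : Submodule ℂ V, LinearMap.range (i : W →ₗ[ℂ] V) ≤ V' →
        (∀ v ∈ V', Bx v ∈ V') → (∀ v ∈ V', By v ∈ V') → V' = ⊤)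
    (A B2 : V →L[ℂ] V) (i' : W →L[ℂ] V) (j' : V →L[ℂ] W)
    (hT : ∀ w : List Bool, ∀ x : W, j' (ev A B2 w (i' x)) = j (ev Bx By w (i x))) :
    ∃ e : V ≃ₗ[ℂ] V, (∀ v, e (Bx v) = A (e v)) ∧ (∀ v, e (By v) = B2 (e v)) ∧
      (∀ x, e (i x) = i' x) ∧ (∀ v, j' (e v) = j v) := by
  classical
  set Oξ : V →ₗ[ℂ] (List Bool → W) :=
    LinearMap.pi (fun w => ((j.comp (ev Bx By w) : V →L[ℂ] W) : V →ₗ[ℂ] W)) with hOξdef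
  set Oη : V →ₗ[ℂ] (List Bool → W) :=
    LinearMap.pi (fun w => ((j'.comp (ev A B2 w) : V →L[ℂ] W) : V →ₗ[ℂ] W)) with hOηdef
  have Oξ_apply : ∀ (v : V) (w : List Bool), Oξ v w = j (ev Bx By w v) := fun v w => rfl
  have Oη_apply : ∀ (v : V) (w : List Bool), Oη v w = j' (ev A B2 w v) := fun v w => rfl
  -- injectivity of Oξ from stability
  have hOξinj : Function.Injective Oξ := by
    rw [← LinearMap.ker_eq_bot]
    refine hst _ ?_ ?_ ?_
    · intro v hv
      have h0 := congrFun (LinearMap.mem_ker.mp hv) []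
      simpa [Oξ_apply] using h0
    · intro v hv
      rw [LinearMap.mem_ker] at hv ⊢
      funext w
      have h0 := congrFun hv (w ++ [true])
      simpa [Oξ_apply, ev_append] using h0
    · intro v hv
      rw [LinearMap.mem_ker] at hv ⊢
      funext w
      have h0 := congrFun hv (w ++ [false])
      simpa [Oξ_apply, ev_append] using h0
  -- spanning from costability
  set fξ : List Bool × W → V := fun p => ev Bx By p.1 (i p.2) with hfξdef
  set fη : List Bool × W → V := fun p => ev A B2 p.1 (i' p.2) with hfηdef
  have hspan : Submodule.span ℂ (Set.range fξ) = ⊤ := by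
    refine hco _ ?_ ?_ ?_
    · rintro v ⟨x, rfl⟩
      exact Submodule.subset_span ⟨([], x), rfl⟩
    · intro v hv
      refine Submodule.span_induction (p := fun v _ => Bx v ∈ Submodule.span ℂ (Set.range fξ))
        ?_ ?_ ?_ ?_ hv
      · rintro v ⟨⟨w, x⟩, rfl⟩
        exact Submodule.subset_span ⟨(true :: w, x), rfl⟩
      · simp
      · intro x y _ _ hx hy; rw [map_add]; exact Submodule.add_mem _ hx hy
      · intro a x _ hx; rw [map_smul]; exact Submodule.smul_mem _ a hx
    · intro v hv
      refine Submodule.span_induction (p := fun v _ => By v ∈ Submodule.span ℂ (Set.range fξ))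
        ?_ ?_ ?_ ?_ hv
      · rintro v ⟨⟨w, x⟩, rfl⟩
        exact Submodule.subset_span ⟨(false :: w, x), rfl⟩
      · simp
      · intro x y _ _ hx hy; rw [map_add]; exact Submodule.add_mem _ hx hy
      · intro a x _ hx; rw [map_smul]; exact Submodule.smul_mem _ a hx
  set Cξ : (List Bool × W →₀ ℂ) →ₗ[ℂ] V := Finsupp.linearCombination ℂ fξ with hCξdef
  set Cη : (List Bool × W →₀ ℂ) →ₗ[ℂ] V := Finsupp.linearCombination ℂ fη with hCηdef
  have hCξrange : LinearMap.range Cξ = ⊤ := by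
    rw [hCξdef, Finsupp.range_linearCombination, hspan]
  obtain ⟨s, hs⟩ := LinearMap.exists_rightInverse_of_surjective Cξ hCξrange
  -- the Hankel identity
  have hH : Oη ∘ₗ Cη = Oξ ∘ₗ Cξ := by
    refine Finsupp.lhom_ext fun a b => ?_
    obtain ⟨w, x⟩ := a
    simp only [LinearMap.comp_apply, hCξdef, hCηdef, Finsupp.linearCombination_single]
    funext u
    simp only [map_smul]
    have h1 : Oη (fη (w, x)) u = j' (ev A B2 (u ++ w) (i' x)) := by
      rw [Oη_apply, ev_append]
    have h2 : Oξ (fξ (w, x)) u = j (ev Bx By (u ++ w) (i x)) := by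
      rw [Oξ_apply, ev_append]
    simp only [Pi.smul_apply, h1, h2, hT]
  set gl : V →ₗ[ℂ] V := Cη ∘ₗ s with hgldef
  have hOg : ∀ v, Oη (gl v) = Oξ v := by
    intro v
    have h1 : Oη (Cη (s v)) = Oξ (Cξ (s v)) := LinearMap.congr_fun hH (s v)
    have h2 : Cξ (s v) = v := LinearMap.congr_fun hs v
    simpa [hgldef, h2] using h1
  have hglinj : Function.Injective gl := by
    intro u v huv
    exact hOξinj (by rw [← hOg, ← hOg, huv])
  have hglsurj : Function.Surjective gl := LinearMap.injective_iff_surjective.mp hglinj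
  have hOηinj : Function.Injective Oη := by
    intro z₁ z₂ h
    obtain ⟨u₁, rfl⟩ := hglsurj z₁
    obtain ⟨u₂, rfl⟩ := hglsurj z₂
    rw [hOg, hOg] at h
    exact congrArg gl (hOξinj h)
  have hgC : ∀ y, gl (Cξ y) = Cη y := by
    intro y
    apply hOηinj
    rw [hOg]
    exact (LinearMap.congr_fun hH y).symm
  have hgen : ∀ (w : List Bool) (x : W), gl (ev Bx By w (i x)) = ev A B2 w (i' x) := by
    intro w x
    have := hgC (Finsupp.single (w, x) 1)
    simpa [hCξdef, hCηdef, Finsupp.linearCombination_single] using this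
  have hmem : ∀ v : V, v ∈ Submodule.span ℂ (Set.range fξ) := by
    intro v; rw [hspan]; trivial
  have hix : ∀ v, gl (Bx v) = A (gl v) := by
    intro v
    refine Submodule.span_induction (p := fun v _ => gl (Bx v) = A (gl v)) ?_ ?_ ?_ ?_ (hmem v)
    · rintro v ⟨⟨w, x⟩, rfl⟩
      have h1 : Bx (fξ (w, x)) = ev Bx By (true :: w) (i x) := rfl
      rw [h1, hgen, hgen]
      rfl
    · simp
    · intro x y _ _ hx hy; simp only [map_add, hx, hy]
    · intro a x _ hx; simp only [map_smul, hx]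
  have hiy : ∀ v, gl (By v) = B2 (gl v) := by
    intro v
    refine Submodule.span_induction (p := fun v _ => gl (By v) = B2 (gl v)) ?_ ?_ ?_ ?_ (hmem v)
    · rintro v ⟨⟨w, x⟩, rfl⟩
      have h1 : By (fξ (w, x)) = ev Bx By (false :: w) (i x) := rfl
      rw [h1, hgen, hgen]
      rfl
    · simp
    · intro x y _ _ hx hy; simp only [map_add, hx, hy]
    · intro a x _ hx; simp only [map_smul, hx]
  have hii : ∀ x, gl (i x) = i' x := by
    intro x
    have := hgen [] x
    simpa using this
  have hij : ∀ v, j' (gl v) = j v := by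
    intro v
    refine Submodule.span_induction (p := fun v _ => j' (gl v) = j v) ?_ ?_ ?_ ?_ (hmem v)
    · rintro v ⟨⟨w, x⟩, rfl⟩
      rw [show fξ (w, x) = ev Bx By w (i x) from rfl, hgen]
      exact hT w x
    · simp
    · intro x y _ _ hx hy; simp only [map_add, hx, hy]
    · intro a x _ hx; simp only [map_smul, hx]
  exact ⟨LinearEquiv.ofBijective gl ⟨hglinj, hglsurj⟩, hix, hiy, hii, hij⟩

/-- uniqueness of intertwiners, given costability of the source -/
lemma intertwiner_unique
    (Bx By : V →L[ℂ] V) (i : W →L[ℂ] V)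
    (hco : ∀ V' : Submodule ℂ V, LinearMap.range (i : W →ₗ[ℂ] V) ≤ V' →
        (∀ v ∈ V', Bx v ∈ V') → (∀ v ∈ V', By v ∈ V') → V' = ⊤)
    (A B2 : V →L[ℂ] V) (i' : W →L[ℂ] V)
    (f₁ f₂ : V →ₗ[ℂ] V)
    (h₁x : ∀ v, f₁ (Bx v) = A (f₁ v)) (h₁y : ∀ v, f₁ (By v) = B2 (f₁ v))
    (h₁i : ∀ x, f₁ (i x) = i' x)
    (h₂x : ∀ v, f₂ (Bx v) = A (f₂ v)) (h₂y : ∀ v, f₂ (By v) = B2 (f₂ v))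
    (h₂i : ∀ x, f₂ (i x) = i' x) : ∀ v, f₁ v = f₂ v := by
  have hK : LinearMap.ker (f₁ - f₂) = ⊤ := by
    refine hco _ ?_ ?_ ?_
    · rintro v ⟨x, rfl⟩
      simp [LinearMap.mem_ker, h₁i, h₂i]
    · intro v hv
      rw [LinearMap.mem_ker] at hv ⊢
      rw [LinearMap.sub_apply] at hv ⊢
      rw [h₁x, h₂x, ← map_sub, hv, map_zero]
    · intro v hv
      rw [LinearMap.mem_ker] at hv ⊢
      rw [LinearMap.sub_apply] at hv ⊢
      rw [h₁y, h₂y, ← map_sub, hv, map_zero]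
  intro v
  have : v ∈ LinearMap.ker (f₁ - f₂) := by rw [hK]; trivial
  have := LinearMap.mem_ker.mp this
  rw [LinearMap.sub_apply] at this
  exact sub_eq_zero.mp this


/-- averaging: an equivariant continuous projection onto an invariant subspace -/
lemma exists_equivariant_proj {G : Type*} [Group G] [Finite G]
    (ρ : Representation ℂ G V) (V' : Submodule ℂ V)
    (hinv : ∀ (g : G), ∀ v ∈ V', ρ g v ∈ V') :
    ∃ π : V →L[ℂ] V, (∀ v, π v ∈ V') ∧ (∀ v ∈ V', π v = v) ∧
      (∀ (g : G) (v : V), ρ g (π v) = π (ρ g v)) := by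
  classical
  have := Fintype.ofFinite G
  obtain ⟨q, hc⟩ := V'.exists_isCompl
  set p₀ : V →ₗ[ℂ] V := V'.subtype ∘ₗ V'.projectionOnto q hc with hp₀def
  have hp₀mem : ∀ v, p₀ v ∈ V' := fun v => (V'.projectionOnto q hc v).2
  have hp₀fix : ∀ v ∈ V', p₀ v = v := by
    intro v hv
    have := Submodule.linearProjOfIsCompl_apply_left hc ⟨v, hv⟩
    simp only [hp₀def, LinearMap.comp_apply, this]
    rfl
  have hρmul : ∀ (a b : G) (v : V), ρ (a * b) v = ρ a (ρ b v) := by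
    intro a b v; rw [map_mul]; rfl
  have hρinv : ∀ (a : G) (v : V), ρ a (ρ a⁻¹ v) = v := by
    intro a v; rw [← hρmul, mul_inv_cancel, map_one]; rfl
  have hρinv2 : ∀ (a : G) (v : V), ρ a⁻¹ (ρ a v) = v := by
    intro a v; rw [← hρmul, inv_mul_cancel, map_one]; rfl
  set n : ℂ := (Fintype.card G : ℂ) with hndef
  have hn : n ≠ 0 := by
    simp [hndef, Nat.cast_ne_zero, Fintype.card_ne_zero]
  set πl : V →ₗ[ℂ] V := n⁻¹ • ∑ g : G, (ρ g) ∘ₗ p₀ ∘ₗ (ρ g⁻¹) with hπldef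
  have hπlapp : ∀ v, πl v = n⁻¹ • ∑ g : G, ρ g (p₀ (ρ g⁻¹ v)) := by
    intro v
    simp [hπldef, LinearMap.sum_apply]
  refine ⟨πl.toContinuousLinearMap, ?_, ?_, ?_⟩
  · intro v
    rw [show πl.toContinuousLinearMap v = πl v from rfl, hπlapp]
    exact Submodule.smul_mem _ _ (Submodule.sum_mem _ fun g _ =>
      hinv g _ (hp₀mem _))
  · intro v hv
    rw [show πl.toContinuousLinearMap v = πl v from rfl, hπlapp]
    have : ∀ g : G, ρ g (p₀ (ρ g⁻¹ v)) = v := by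
      intro g
      rw [hp₀fix _ (hinv g⁻¹ v hv), hρinv]
    rw [Finset.sum_congr rfl (fun g _ => this g), Finset.sum_const]
    simp only [Finset.card_univ, ← Nat.cast_smul_eq_nsmul ℂ]
    rw [smul_smul, inv_mul_cancel₀ hn, one_smul]
  · intro g v
    rw [show πl.toContinuousLinearMap v = πl v from rfl,
      show πl.toContinuousLinearMap (ρ g v) = πl (ρ g v) from rfl, hπlapp, hπlapp,
      map_smul]
    congr 1
    rw [map_sum]
    refine Fintype.sum_bijective (fun a => g * a) (Group.mulLeft_bijective g) _ _ ?_
    intro a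
    have hin : ρ ((g * a)⁻¹) (ρ g v) = ρ a⁻¹ v := by
      rw [mul_inv_rev, hρmul, hρinv2]
    rw [hin, ← hρmul]

/-- the one-parameter family `1 - π + t • π` as a continuous linear equivalence -/
noncomputable def projEquiv (π : V →L[ℂ] V) (hπ : ∀ v, π (π v) = π v) (t : ℂ) (ht : t ≠ 0) : V ≃L[ℂ] V :=
  ContinuousLinearEquiv.equivOfInverse (1 - π + t • π) (1 - π + t⁻¹ • π)
    (by
      intro v
      simp only [ContinuousLinearMap.add_apply, ContinuousLinearMap.sub_apply,
        ContinuousLinearMap.one_apply, ContinuousLinearMap.smul_apply]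
      set u := v - π v + t • π v with hu
      have hπu : π u = t • π v := by
        simp [hu, map_add, map_sub, map_smul, hπ]
      rw [show v - π v + t • π v - π (v - π v + t • π v) + t⁻¹ • π (v - π v + t • π v)
          = u - π u + t⁻¹ • π u from rfl, hπu, hu]
      rw [smul_smul, inv_mul_cancel₀ ht, one_smul]
      abel)
    (by
      intro v
      simp only [ContinuousLinearMap.add_apply, ContinuousLinearMap.sub_apply,
        ContinuousLinearMap.one_apply, ContinuousLinearMap.smul_apply]
      set u := v - π v + t⁻¹ • π v with hu
      have hπu : π u = t⁻¹ • π v := by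
        simp [hu, map_add, map_sub, map_smul, hπ]
      rw [show v - π v + t⁻¹ • π v - π (v - π v + t⁻¹ • π v) + t • π (v - π v + t⁻¹ • π v)
          = u - π u + t • π u from rfl, hπu, hu]
      rw [smul_smul, mul_inv_cancel₀ ht, one_smul]
      abel)

lemma projEquiv_apply (π : V →L[ℂ] V) (hπ : ∀ v, π (π v) = π v) (t : ℂ) (ht : t ≠ 0) (v : V) :
    projEquiv π hπ t ht v = v - π v + t • π v := rfl

lemma projEquiv_symm_apply (π : V →L[ℂ] V) (hπ : ∀ v, π (π v) = π v) (t : ℂ) (ht : t ≠ 0)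
    (v : V) : (projEquiv π hπ t ht).symm v = v - π v + t⁻¹ • π v := rfl

/-- conjugation formula, case of invariant `range π`: `π T π = T π` -/
lemma projEquiv_conj_A (π : V →L[ℂ] V) (hπ : ∀ v, π (π v) = π v) (t : ℂ) (ht : t ≠ 0)
    (T : V →L[ℂ] V) (hT : ∀ v, π (T (π v)) = T (π v)) (v : V) :
    projEquiv π hπ t ht (T ((projEquiv π hπ t ht).symm v))
      = T v - π (T v) + T (π v) + t • (π (T v) - T (π v)) := by
  rw [projEquiv_symm_apply, projEquiv_apply]
  have h1 : T (v - π v + t⁻¹ • π v) = T v - T (π v) + t⁻¹ • T (π v) := by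
    simp [map_add, map_sub, map_smul]
  rw [h1]
  have h2 : π (T v - T (π v) + t⁻¹ • T (π v)) = π (T v) - T (π v) + t⁻¹ • T (π v) := by
    simp [map_add, map_sub, map_smul, hT]
  have h3 : t • (π (T v) - T (π v) + t⁻¹ • T (π v))
      = t • π (T v) - t • T (π v) + T (π v) := by
    rw [smul_add, smul_sub, smul_smul, mul_inv_cancel₀ ht, one_smul]
  rw [h2, h3, smul_sub]
  abel

/-- conjugation formula, case `π T π = π T` (kernel of `π` invariant complement...)-/
lemma projEquiv_conj_B (π : V →L[ℂ] V) (hπ : ∀ v, π (π v) = π v) (t : ℂ) (ht : t ≠ 0)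
    (T : V →L[ℂ] V) (hT : ∀ v, π (T (π v)) = π (T v)) (v : V) :
    projEquiv π hπ t ht (T ((projEquiv π hπ t ht).symm v))
      = T v - T (π v) + π (T v) + t⁻¹ • (T (π v) - π (T v)) := by
  rw [projEquiv_symm_apply, projEquiv_apply]
  have h1 : T (v - π v + t⁻¹ • π v) = T v - T (π v) + t⁻¹ • T (π v) := by
    simp [map_add, map_sub, map_smul]
  rw [h1]
  have h2 : π (T v - T (π v) + t⁻¹ • T (π v)) = t⁻¹ • π (T v) := by
    simp [map_add, map_sub, map_smul, hT]
  rw [h2, smul_smul, mul_inv_cancel₀ ht, one_smul, smul_sub]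
  abel

/-- if `π` commutes with `T` then conjugation by `projEquiv` fixes `T` -/
lemma projEquiv_conj_comm (π : V →L[ℂ] V) (hπ : ∀ v, π (π v) = π v) (t : ℂ) (ht : t ≠ 0)
    (T : V →L[ℂ] V) (hT : ∀ v, π (T v) = T (π v)) (v : V) :
    projEquiv π hπ t ht (T ((projEquiv π hπ t ht).symm v)) = T v := by
  have h := projEquiv_conj_A π hπ t ht T (fun w => by rw [hT, hπ]) v
  rw [h, hT]
  simp

lemma ev_conj (g : V ≃L[ℂ] V) (A B : V →L[ℂ] V) (l : List Bool) (v : V) :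
    ev ((g : V →L[ℂ] V).comp (A.comp (g.symm : V →L[ℂ] V)))
      ((g : V →L[ℂ] V).comp (B.comp (g.symm : V →L[ℂ] V))) l v
      = g (ev A B l (g.symm v)) := by
  induction l with
  | nil => simp [ev]
  | cons b t ih =>
    cases b
    · show ((g : V →L[ℂ] V).comp (B.comp (g.symm : V →L[ℂ] V))) (ev _ _ t v) = _
      rw [ih]
      show g (B (g.symm (g (ev A B t (g.symm v))))) = g (B (ev A B t (g.symm v)))
      rw [g.symm_apply_apply]
    · show ((g : V →L[ℂ] V).comp (A.comp (g.symm : V →L[ℂ] V))) (ev _ _ t v) = _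
      rw [ih]
      show g (A (g.symm (g (ev A B t (g.symm v))))) = g (A (ev A B t (g.symm v)))
      rw [g.symm_apply_apply]

lemma stab_transport
    {Γ : Type*} [Group Γ] (ρV : Representation ℂ Γ V)
    (Bx By : V →L[ℂ] V) (i : W →L[ℂ] V) (j : V →L[ℂ] W)
    (hstab : ∀ g : V ≃L[ℂ] V, (∀ γ : Γ, ∀ v : V, g (ρV γ v) = ρV γ (g v)) →
        (∀ v : V, g (Bx (g.symm v)) = Bx v) →
        (∀ v : V, g (By (g.symm v)) = By v) →
        (∀ x : W, g (i x) = i x) →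
        (∀ v : V, j (g.symm v) = j v) →
        ∀ v : V, g v = v)
    (A₀ C₀ : V →L[ℂ] V) (i₀ : W →L[ℂ] V) (j₀ : V →L[ℂ] W) (h g₂ : V ≃L[ℂ] V)
    (hheq : ∀ γ : Γ, ∀ v, h (ρV γ v) = ρV γ (h v))
    (hg₂eq : ∀ γ : Γ, ∀ v, g₂ (ρV γ v) = ρV γ (g₂ v))
    (hhx : A₀ = (h : V →L[ℂ] V).comp (Bx.comp (h.symm : V →L[ℂ] V)))
    (hhy : C₀ = (h : V →L[ℂ] V).comp (By.comp (h.symm : V →L[ℂ] V)))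
    (hhi : i₀ = (h : V →L[ℂ] V).comp i)
    (hhj : j₀ = j.comp (h.symm : V →L[ℂ] V))
    (hsx : ∀ v, g₂ (A₀ (g₂.symm v)) = A₀ v)
    (hsy : ∀ v, g₂ (C₀ (g₂.symm v)) = C₀ v)
    (hsi : ∀ x, g₂ (i₀ x) = i₀ x)
    (hsj : ∀ v, j₀ (g₂.symm v) = j₀ v) : ∀ v, g₂ v = v := by
  have hhx' : ∀ v, A₀ v = h (Bx (h.symm v)) := fun v => by rw [hhx]; rfl
  have hhy' : ∀ v, C₀ v = h (By (h.symm v)) := fun v => by rw [hhy]; rfl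
  have hhi' : ∀ x, i₀ x = h (i x) := fun x => by rw [hhi]; rfl
  have hhj' : ∀ v, j₀ v = j (h.symm v) := fun v => by rw [hhj]; rfl
  set k : V ≃L[ℂ] V := ContinuousLinearEquiv.equivOfInverse
      ((h.symm : V →L[ℂ] V).comp ((g₂ : V →L[ℂ] V).comp (h : V →L[ℂ] V)))
      ((h.symm : V →L[ℂ] V).comp ((g₂.symm : V →L[ℂ] V).comp (h : V →L[ℂ] V)))
      (fun v => by simp) (fun v => by simp) with hkdef
  have hk : ∀ v, k v = h.symm (g₂ (h v)) := fun v => rfl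
  have hks : ∀ v, k.symm v = h.symm (g₂.symm (h v)) := fun v => rfl
  have hsymm : ∀ γ : Γ, ∀ v, h.symm (ρV γ v) = ρV γ (h.symm v) := by
    intro γ v
    have hh := hheq γ (h.symm v)
    rw [h.apply_symm_apply] at hh
    rw [← hh, h.symm_apply_apply]
  have hkeq : ∀ γ : Γ, ∀ v, k (ρV γ v) = ρV γ (k v) := by
    intro γ v
    rw [hk, hk, hheq, hg₂eq, hsymm]
  have hkx : ∀ v, k (Bx (k.symm v)) = Bx v := by
    intro v
    rw [hk, hks, ← hhx', hsx, hhx', h.symm_apply_apply, h.symm_apply_apply]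
  have hky : ∀ v, k (By (k.symm v)) = By v := by
    intro v
    rw [hk, hks, ← hhy', hsy, hhy', h.symm_apply_apply, h.symm_apply_apply]
  have hki : ∀ x, k (i x) = i x := by
    intro x
    rw [hk, ← hhi', hsi, hhi', h.symm_apply_apply]
  have hkj : ∀ v, j (k.symm v) = j v := by
    intro v
    rw [hks, ← hhj', hsj, hhj', h.symm_apply_apply]
  have hmain := hstab k hkeq hkx hky hki hkj
  intro u
  have h1 := hmain (h.symm u)
  rw [hk, h.apply_symm_apply] at h1
  simpa using congrArg h h1


end ADHMAux

set_option maxHeartbeats 2000000 in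
/-- Lemma 1(ii).
Let `ξ=(Bx,By,i,j)` be a `Γ`-equivariant ADHM datum on `(V,W)` satisfying the ADHM
equation.  Then the stabilizer of `ξ` in `GL_Γ(V)` is trivial and the orbit
`GL_Γ(V)·ξ` is closed in the space `M` of ADHM data if and only if `ξ` is stable
and costable. -/
theorem stmt_1
    (V W : Type*) [NormedAddCommGroup V] [NormedSpace ℂ V] [FiniteDimensional ℂ V]
    [NormedAddCommGroup W] [NormedSpace ℂ W] [FiniteDimensional ℂ W]
    (Γ : Subgroup (Matrix.SpecialLinearGroup (Fin 2) ℂ)) (hΓfin : Finite Γ)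
    (ρV : Representation ℂ Γ V) (ρW : Representation ℂ Γ W)
    (Bx By : V →L[ℂ] V) (i : W →L[ℂ] V) (j : V →L[ℂ] W)
    -- Γ-equivariance of the datum
    (hΓB : ∀ γ : Γ, ∀ v : V,
      (γ : Matrix.SpecialLinearGroup (Fin 2) ℂ).val 0 0 • ρV γ (Bx v)
        + (γ : Matrix.SpecialLinearGroup (Fin 2) ℂ).val 0 1 • ρV γ (By v)
        = Bx (ρV γ v)
      ∧ (γ : Matrix.SpecialLinearGroup (Fin 2) ℂ).val 1 0 • ρV γ (Bx v)
        + (γ : Matrix.SpecialLinearGroup (Fin 2) ℂ).val 1 1 • ρV γ (By v)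
        = By (ρV γ v))
    (hΓi : ∀ γ : Γ, ∀ x : W, ρV γ (i x) = i (ρW γ x))
    (hΓj : ∀ γ : Γ, ∀ v : V, ρW γ (j v) = j (ρV γ v))
    -- the ADHM equation
    (hADHM : ∀ v : V, Bx (By v) - By (Bx v) = i (j v)) :
    -- the stabilizer of ξ in GL_Γ(V) is trivial:
    ((∀ g : V ≃L[ℂ] V, (∀ γ : Γ, ∀ v : V, g (ρV γ v) = ρV γ (g v)) →
        (∀ v : V, g (Bx (g.symm v)) = Bx v) →
        (∀ v : V, g (By (g.symm v)) = By v) →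
        (∀ x : W, g (i x) = i x) →
        (∀ v : V, j (g.symm v) = j v) →
        ∀ v : V, g v = v) ∧
      -- and the orbit GL_Γ(V)·ξ is closed in the space of ADHM data:
      IsClosed {p : (V →L[ℂ] V) × (V →L[ℂ] V) × (W →L[ℂ] V) × (V →L[ℂ] W) |
        ∃ g : V ≃L[ℂ] V, (∀ γ : Γ, ∀ v : V, g (ρV γ v) = ρV γ (g v)) ∧
          p.1 = (g : V →L[ℂ] V).comp (Bx.comp (g.symm : V →L[ℂ] V)) ∧
          p.2.1 = (g : V →L[ℂ] V).comp (By.comp (g.symm : V →L[ℂ] V)) ∧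
          p.2.2.1 = (g : V →L[ℂ] V).comp i ∧
          p.2.2.2 = j.comp (g.symm : V →L[ℂ] V)})
    ↔
    -- ξ is stable:
    ((∀ V' : Submodule ℂ V, V' ≤ LinearMap.ker (j : V →ₗ[ℂ] W) →
        (∀ v ∈ V', Bx v ∈ V') → (∀ v ∈ V', By v ∈ V') → V' = ⊥) ∧
      -- and costable:
      (∀ V' : Submodule ℂ V, LinearMap.range (i : W →ₗ[ℂ] V) ≤ V' →
        (∀ v ∈ V', Bx v ∈ V') → (∀ v ∈ V', By v ∈ V') → V' = ⊤)) := by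
  classical
  have hmulV : ∀ (a b : Γ) (v : V), ρV (a * b) v = ρV a (ρV b v) := fun a b v => by
    rw [map_mul]; rfl
  have honeV : ∀ v : V, ρV (1 : Γ) v = v := fun v => by rw [map_one]; rfl
  have hinvV : ∀ (a : Γ) (v : V), ρV a (ρV a⁻¹ v) = v := fun a v => by
    rw [← hmulV, mul_inv_cancel]; exact honeV v
  have hinvV2 : ∀ (a : Γ) (v : V), ρV a⁻¹ (ρV a v) = v := fun a v => by
    rw [← hmulV, inv_mul_cancel]; exact honeV v
  have hmulW : ∀ (a b : Γ) (x : W), ρW (a * b) x = ρW a (ρW b x) := fun a b x => by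
    rw [map_mul]; rfl
  have honeW : ∀ x : W, ρW (1 : Γ) x = x := fun x => by rw [map_one]; rfl
  have hinvW : ∀ (a : Γ) (x : W), ρW a (ρW a⁻¹ x) = x := fun a x => by
    rw [← hmulW, mul_inv_cancel]; exact honeW x
  constructor
  · rintro ⟨hstab, hclosed⟩
    -- shared scalar sequence
    set tk : ℕ → ℂ := fun k => ((k : ℂ) + 1)⁻¹ with htkdef
    have hkne : ∀ k : ℕ, ((k : ℂ) + 1) ≠ 0 := by
      intro k
      have h0 := Nat.cast_ne_zero (R := ℂ).mpr (Nat.succ_ne_zero k)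
      rwa [Nat.cast_succ] at h0
    have htkne : ∀ k, tk k ≠ 0 := fun k => inv_ne_zero (hkne k)
    have htkto : Filter.Tendsto tk Filter.atTop (nhds 0) := by
      have h1 : Filter.Tendsto (fun k : ℕ => ((1 : ℝ) / ((k : ℝ) + 1) : ℝ))
          Filter.atTop (nhds 0) := tendsto_one_div_add_atTop_nhds_zero_nat
      have h2 := (Complex.continuous_ofReal.tendsto 0).comp h1
      have h2' : Filter.Tendsto tk Filter.atTop (nhds ((0 : ℝ) : ℂ)) := by
        refine Filter.Tendsto.congr ?_ h2
        intro k
        show (((1 : ℝ) / ((k : ℝ) + 1) : ℝ) : ℂ) = tk k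
        rw [htkdef]
        push_cast
        rw [one_div]
      simpa using h2'
    constructor
    -- ================= stability =================
    · intro V' hVj hVx hVy
      set V'' : Submodule ℂ V := ⨆ γ : Γ, V'.map (ρV γ) with hV''def
      have hmemV'' : ∀ γ : Γ, ∀ v ∈ V', ρV γ v ∈ V'' := fun γ v hv =>
        le_iSup (fun γ : Γ => V'.map (ρV γ)) γ ⟨v, hv, rfl⟩
      have hV'le : V' ≤ V'' := fun v hv => by
        have h0 := hmemV'' 1 v hv
        rwa [honeV] at h0
      have hV''all : ∀ v ∈ V'', j v = 0 ∧ Bx v ∈ V'' ∧ By v ∈ V'' ∧ ∀ δ : Γ, ρV δ v ∈ V'' := by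
        intro v hv
        refine Submodule.iSup_induction
          (motive := fun v => j v = 0 ∧ Bx v ∈ V'' ∧ By v ∈ V'' ∧ ∀ δ : Γ, ρV δ v ∈ V'')
          _ hv ?_ ?_ ?_
        · rintro γ v ⟨u, hu, rfl⟩
          refine ⟨?_, ?_, ?_, ?_⟩
          · rw [← hΓj, show j u = 0 from LinearMap.mem_ker.mp (hVj hu), map_zero]
          · rw [← (hΓB γ u).1]
            exact Submodule.add_mem _ (Submodule.smul_mem _ _ (hmemV'' γ _ (hVx u hu)))
              (Submodule.smul_mem _ _ (hmemV'' γ _ (hVy u hu)))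
          · rw [← (hΓB γ u).2]
            exact Submodule.add_mem _ (Submodule.smul_mem _ _ (hmemV'' γ _ (hVx u hu)))
              (Submodule.smul_mem _ _ (hmemV'' γ _ (hVy u hu)))
          · intro δ
            rw [← hmulV]
            exact hmemV'' _ _ hu
        · exact ⟨map_zero j, by rw [map_zero]; exact Submodule.zero_mem _,
            by rw [map_zero]; exact Submodule.zero_mem _,
            fun δ => by rw [map_zero]; exact Submodule.zero_mem _⟩
        · intro x y hx hy
          exact ⟨by rw [map_add, hx.1, hy.1, add_zero],
            by rw [map_add]; exact Submodule.add_mem _ hx.2.1 hy.2.1,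
            by rw [map_add]; exact Submodule.add_mem _ hx.2.2.1 hy.2.2.1,
            fun δ => by rw [map_add]; exact Submodule.add_mem _ (hx.2.2.2 δ) (hy.2.2.2 δ)⟩
      obtain ⟨π, hπmem, hπfix, hπeq⟩ := ADHMAux.exists_equivariant_proj ρV V''
        (fun γ v hv => (hV''all v hv).2.2.2 γ)
      have hπ2 : ∀ v, π (π v) = π v := fun v => hπfix _ (hπmem v)
      have hπBx : ∀ v, π (Bx (π v)) = Bx (π v) := fun v => hπfix _ (hV''all _ (hπmem v)).2.1
      have hπBy : ∀ v, π (By (π v)) = By (π v) := fun v => hπfix _ (hV''all _ (hπmem v)).2.2.1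
      have hjπ : ∀ v, j (π v) = 0 := fun v => (hV''all _ (hπmem v)).1
      set A₀ : V →L[ℂ] V := Bx - π.comp Bx + Bx.comp π with hA₀def
      set RA : V →L[ℂ] V := π.comp Bx - Bx.comp π with hRAdef
      set C₀ : V →L[ℂ] V := By - π.comp By + By.comp π with hC₀def
      set RC : V →L[ℂ] V := π.comp By - By.comp π with hRCdef
      set i₀ : W →L[ℂ] V := i - π.comp i with hi₀def
      have hmemk : ∀ k : ℕ,
          (A₀ + tk k • RA, C₀ + tk k • RC, i₀ + tk k • π.comp i, j) ∈
          {p : (V →L[ℂ] V) × (V →L[ℂ] V) × (W →L[ℂ] V) × (V →L[ℂ] W) |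
            ∃ g : V ≃L[ℂ] V, (∀ γ : Γ, ∀ v : V, g (ρV γ v) = ρV γ (g v)) ∧
              p.1 = (g : V →L[ℂ] V).comp (Bx.comp (g.symm : V →L[ℂ] V)) ∧
              p.2.1 = (g : V →L[ℂ] V).comp (By.comp (g.symm : V →L[ℂ] V)) ∧
              p.2.2.1 = (g : V →L[ℂ] V).comp i ∧
              p.2.2.2 = j.comp (g.symm : V →L[ℂ] V)} := by
        intro k
        refine ⟨ADHMAux.projEquiv π hπ2 (tk k) (htkne k), ?_, ?_, ?_, ?_, ?_⟩
        · intro γ v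
          rw [ADHMAux.projEquiv_apply, ADHMAux.projEquiv_apply, map_add, map_sub,
            map_smul, hπeq]
        · ext v
          show (A₀ + tk k • RA) v
            = (ADHMAux.projEquiv π hπ2 (tk k) (htkne k))
                (Bx ((ADHMAux.projEquiv π hπ2 (tk k) (htkne k)).symm v))
          rw [ADHMAux.projEquiv_conj_A π hπ2 (tk k) (htkne k) Bx hπBx v, hA₀def, hRAdef]
          simp only [ContinuousLinearMap.add_apply, ContinuousLinearMap.sub_apply,
            ContinuousLinearMap.smul_apply, ContinuousLinearMap.comp_apply]
        · ext v
          show (C₀ + tk k • RC) v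
            = (ADHMAux.projEquiv π hπ2 (tk k) (htkne k))
                (By ((ADHMAux.projEquiv π hπ2 (tk k) (htkne k)).symm v))
          rw [ADHMAux.projEquiv_conj_A π hπ2 (tk k) (htkne k) By hπBy v, hC₀def, hRCdef]
          simp only [ContinuousLinearMap.add_apply, ContinuousLinearMap.sub_apply,
            ContinuousLinearMap.smul_apply, ContinuousLinearMap.comp_apply]
        · ext x
          show (i₀ + tk k • π.comp i) x
            = (ADHMAux.projEquiv π hπ2 (tk k) (htkne k)) (i x)
          rw [ADHMAux.projEquiv_apply, hi₀def]
          simp only [ContinuousLinearMap.add_apply, ContinuousLinearMap.sub_apply,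
            ContinuousLinearMap.smul_apply, ContinuousLinearMap.comp_apply]
        · ext v
          show j v = j ((ADHMAux.projEquiv π hπ2 (tk k) (htkne k)).symm v)
          rw [ADHMAux.projEquiv_symm_apply]
          simp [map_add, map_sub, map_smul, hjπ]
      have htend : Filter.Tendsto
          (fun k : ℕ => (A₀ + tk k • RA, C₀ + tk k • RC, i₀ + tk k • π.comp i, j))
          Filter.atTop (nhds (A₀, C₀, i₀, j)) := by
        have hA : Filter.Tendsto (fun k => A₀ + tk k • RA) Filter.atTop (nhds A₀) := by
          have h0 := htkto.smul_const RA
          rw [zero_smul] at h0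
          simpa using (tendsto_const_nhds (x := A₀) (f := (Filter.atTop : Filter ℕ))).add h0
        have hC : Filter.Tendsto (fun k => C₀ + tk k • RC) Filter.atTop (nhds C₀) := by
          have h0 := htkto.smul_const RC
          rw [zero_smul] at h0
          simpa using (tendsto_const_nhds (x := C₀) (f := (Filter.atTop : Filter ℕ))).add h0
        have hI : Filter.Tendsto (fun k => i₀ + tk k • π.comp i) Filter.atTop (nhds i₀) := by
          have h0 := htkto.smul_const (π.comp i)
          rw [zero_smul] at h0
          simpa using (tendsto_const_nhds (x := i₀) (f := (Filter.atTop : Filter ℕ))).add h0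
        exact hA.prodMk_nhds (hC.prodMk_nhds (hI.prodMk_nhds tendsto_const_nhds))
      obtain ⟨h, hheq, hhx, hhy, hhi, hhj⟩ :=
        hclosed.mem_of_tendsto htend (Filter.Eventually.of_forall hmemk)
      have hcommA : ∀ v, π (A₀ v) = A₀ (π v) := by
        intro v
        rw [hA₀def]
        simp only [ContinuousLinearMap.add_apply, ContinuousLinearMap.sub_apply,
          ContinuousLinearMap.comp_apply, map_add, map_sub, hπ2, hπBx]
        abel
      have hcommC : ∀ v, π (C₀ v) = C₀ (π v) := by
        intro v
        rw [hC₀def]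
        simp only [ContinuousLinearMap.add_apply, ContinuousLinearMap.sub_apply,
          ContinuousLinearMap.comp_apply, map_add, map_sub, hπ2, hπBy]
        abel
      have hg₂eq : ∀ (γ : Γ) (v : V),
          (ADHMAux.projEquiv π hπ2 2 two_ne_zero) (ρV γ v)
            = ρV γ ((ADHMAux.projEquiv π hπ2 2 two_ne_zero) v) := by
        intro γ v
        rw [ADHMAux.projEquiv_apply, ADHMAux.projEquiv_apply, map_add, map_sub,
          map_smul, hπeq]
      have hstabi : ∀ x, (ADHMAux.projEquiv π hπ2 2 two_ne_zero) (i₀ x) = i₀ x := by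
        intro x
        rw [ADHMAux.projEquiv_apply]
        have h0 : π (i₀ x) = 0 := by
          rw [hi₀def]
          simp [map_sub, hπ2]
        rw [h0]
        simp
      have hstabj : ∀ v, j ((ADHMAux.projEquiv π hπ2 2 two_ne_zero).symm v) = j v := by
        intro v
        rw [ADHMAux.projEquiv_symm_apply]
        simp [map_add, map_sub, map_smul, hjπ]
      have hg₂id : ∀ v, (ADHMAux.projEquiv π hπ2 2 two_ne_zero) v = v :=
        ADHMAux.stab_transport ρV Bx By i j hstab A₀ C₀ i₀ j h
          (ADHMAux.projEquiv π hπ2 2 two_ne_zero) hheq hg₂eq hhx hhy hhi hhj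
          (ADHMAux.projEquiv_conj_comm π hπ2 2 two_ne_zero A₀ hcommA)
          (ADHMAux.projEquiv_conj_comm π hπ2 2 two_ne_zero C₀ hcommC)
          hstabi hstabj
      have hπ0 : ∀ v, π v = 0 := by
        intro v
        have h1 := hg₂id v
        rw [ADHMAux.projEquiv_apply] at h1
        have h2 : v - π v + (2 : ℂ) • π v = v + π v := by
          rw [two_smul]; abel
        rw [h2] at h1
        exact add_eq_left.mp h1
      rw [eq_bot_iff]
      intro v hv
      rw [Submodule.mem_bot]
      have h1 : π v = v := hπfix v (hV'le hv)
      rw [← h1]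
      exact hπ0 v
    -- ================= costability =================
    · intro V' hVi hVx hVy
      set V'' : Submodule ℂ V := ⨅ γ : Γ, V'.map (ρV γ) with hV''def
      have hmem'' : ∀ v : V, v ∈ V'' ↔ ∀ γ : Γ, v ∈ V'.map (ρV γ) := fun v =>
        Submodule.mem_iInf _
      have hV''le : V'' ≤ V' := by
        intro v hv
        obtain ⟨u, hu, huv⟩ := (hmem'' v).mp hv 1
        rw [honeV] at huv
        rwa [← huv]
      have hV''i : ∀ x : W, i x ∈ V'' := by
        intro x
        rw [hmem'']
        intro γ
        refine ⟨i (ρW γ⁻¹ x), hVi ⟨_, rfl⟩, ?_⟩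
        rw [hΓi, hinvW]
      have hV''x : ∀ v ∈ V'', Bx v ∈ V'' := by
        intro v hv
        rw [hmem''] at hv ⊢
        intro γ
        obtain ⟨u, hu, rfl⟩ := hv γ
        rw [← (hΓB γ u).1]
        exact Submodule.add_mem _ (Submodule.smul_mem _ _ ⟨Bx u, hVx u hu, rfl⟩)
          (Submodule.smul_mem _ _ ⟨By u, hVy u hu, rfl⟩)
      have hV''y : ∀ v ∈ V'', By v ∈ V'' := by
        intro v hv
        rw [hmem''] at hv ⊢
        intro γ
        obtain ⟨u, hu, rfl⟩ := hv γ
        rw [← (hΓB γ u).2]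
        exact Submodule.add_mem _ (Submodule.smul_mem _ _ ⟨Bx u, hVx u hu, rfl⟩)
          (Submodule.smul_mem _ _ ⟨By u, hVy u hu, rfl⟩)
      have hV''inv : ∀ (δ : Γ), ∀ v ∈ V'', ρV δ v ∈ V'' := by
        intro δ v hv
        rw [hmem''] at hv ⊢
        intro γ
        obtain ⟨u, hu, huv⟩ := hv (δ⁻¹ * γ)
        refine ⟨u, hu, ?_⟩
        rw [← huv, ← hmulV, mul_inv_cancel_left]
      obtain ⟨π, hπmem, hπfix, hπeq⟩ := ADHMAux.exists_equivariant_proj ρV V'' hV''inv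
      have hπ2 : ∀ v, π (π v) = π v := fun v => hπfix _ (hπmem v)
      have hπBx : ∀ v, π (Bx (π v)) = Bx (π v) := fun v => hπfix _ (hV''x _ (hπmem v))
      have hπBy : ∀ v, π (By (π v)) = By (π v) := fun v => hπfix _ (hV''y _ (hπmem v))
      have hπi : ∀ x, π (i x) = i x := fun x => hπfix _ (hV''i x)
      set σ : V →L[ℂ] V := 1 - π with hσdef
      have hσapp : ∀ v, σ v = v - π v := fun v => by rw [hσdef]; simp
      have hσ2 : ∀ v, σ (σ v) = σ v := by
        intro v
        rw [hσapp, hσapp, map_sub, hπ2]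
        abel
      have hσeq : ∀ (γ : Γ) (v : V), ρV γ (σ v) = σ (ρV γ v) := by
        intro γ v
        rw [hσapp, hσapp, map_sub, hπeq]
      have hσBx : ∀ v, σ (Bx (σ v)) = σ (Bx v) := by
        intro v
        rw [hσapp v, hσapp, hσapp, map_sub Bx, map_sub, hπBx]
        abel
      have hσBy : ∀ v, σ (By (σ v)) = σ (By v) := by
        intro v
        rw [hσapp v, hσapp, hσapp, map_sub By, map_sub, hπBy]
        abel
      have hσi : ∀ x, σ (i x) = 0 := fun x => by rw [hσapp, hπi, sub_self]
      set A₀ : V →L[ℂ] V := Bx - Bx.comp σ + σ.comp Bx with hA₀def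
      set RA : V →L[ℂ] V := Bx.comp σ - σ.comp Bx with hRAdef
      set C₀ : V →L[ℂ] V := By - By.comp σ + σ.comp By with hC₀def
      set RC : V →L[ℂ] V := By.comp σ - σ.comp By with hRCdef
      set j₀ : V →L[ℂ] W := j - j.comp σ with hj₀def
      have hmemk : ∀ k : ℕ,
          (A₀ + tk k • RA, C₀ + tk k • RC, i, j₀ + tk k • j.comp σ) ∈
          {p : (V →L[ℂ] V) × (V →L[ℂ] V) × (W →L[ℂ] V) × (V →L[ℂ] W) |
            ∃ g : V ≃L[ℂ] V, (∀ γ : Γ, ∀ v : V, g (ρV γ v) = ρV γ (g v)) ∧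
              p.1 = (g : V →L[ℂ] V).comp (Bx.comp (g.symm : V →L[ℂ] V)) ∧
              p.2.1 = (g : V →L[ℂ] V).comp (By.comp (g.symm : V →L[ℂ] V)) ∧
              p.2.2.1 = (g : V →L[ℂ] V).comp i ∧
              p.2.2.2 = j.comp (g.symm : V →L[ℂ] V)} := by
        intro k
        refine ⟨ADHMAux.projEquiv σ hσ2 ((k : ℂ) + 1) (hkne k), ?_, ?_, ?_, ?_, ?_⟩
        · intro γ v
          rw [ADHMAux.projEquiv_apply, ADHMAux.projEquiv_apply, map_add, map_sub,
            map_smul, hσeq]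
        · ext v
          show (A₀ + tk k • RA) v
            = (ADHMAux.projEquiv σ hσ2 ((k : ℂ) + 1) (hkne k))
                (Bx ((ADHMAux.projEquiv σ hσ2 ((k : ℂ) + 1) (hkne k)).symm v))
          rw [ADHMAux.projEquiv_conj_B σ hσ2 ((k : ℂ) + 1) (hkne k) Bx hσBx v,
            hA₀def, hRAdef, htkdef]
          simp only [ContinuousLinearMap.add_apply, ContinuousLinearMap.sub_apply,
            ContinuousLinearMap.smul_apply, ContinuousLinearMap.comp_apply]
        · ext v
          show (C₀ + tk k • RC) v
            = (ADHMAux.projEquiv σ hσ2 ((k : ℂ) + 1) (hkne k))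
                (By ((ADHMAux.projEquiv σ hσ2 ((k : ℂ) + 1) (hkne k)).symm v))
          rw [ADHMAux.projEquiv_conj_B σ hσ2 ((k : ℂ) + 1) (hkne k) By hσBy v,
            hC₀def, hRCdef, htkdef]
          simp only [ContinuousLinearMap.add_apply, ContinuousLinearMap.sub_apply,
            ContinuousLinearMap.smul_apply, ContinuousLinearMap.comp_apply]
        · ext x
          show i x = (ADHMAux.projEquiv σ hσ2 ((k : ℂ) + 1) (hkne k)) (i x)
          rw [ADHMAux.projEquiv_apply, hσi]
          simp
        · ext v
          show (j₀ + tk k • j.comp σ) v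
            = j ((ADHMAux.projEquiv σ hσ2 ((k : ℂ) + 1) (hkne k)).symm v)
          rw [ADHMAux.projEquiv_symm_apply, hj₀def, htkdef]
          simp only [ContinuousLinearMap.add_apply, ContinuousLinearMap.sub_apply,
            ContinuousLinearMap.smul_apply, ContinuousLinearMap.comp_apply,
            map_add, map_sub, map_smul]
      have htend : Filter.Tendsto
          (fun k : ℕ => (A₀ + tk k • RA, C₀ + tk k • RC, i, j₀ + tk k • j.comp σ))
          Filter.atTop (nhds (A₀, C₀, i, j₀)) := by
        have hA : Filter.Tendsto (fun k => A₀ + tk k • RA) Filter.atTop (nhds A₀) := by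
          have h0 := htkto.smul_const RA
          rw [zero_smul] at h0
          simpa using (tendsto_const_nhds (x := A₀) (f := (Filter.atTop : Filter ℕ))).add h0
        have hC : Filter.Tendsto (fun k => C₀ + tk k • RC) Filter.atTop (nhds C₀) := by
          have h0 := htkto.smul_const RC
          rw [zero_smul] at h0
          simpa using (tendsto_const_nhds (x := C₀) (f := (Filter.atTop : Filter ℕ))).add h0
        have hJ : Filter.Tendsto (fun k => j₀ + tk k • j.comp σ) Filter.atTop (nhds j₀) := by
          have h0 := htkto.smul_const (j.comp σ)
          rw [zero_smul] at h0
          simpa using (tendsto_const_nhds (x := j₀) (f := (Filter.atTop : Filter ℕ))).add h0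
        exact hA.prodMk_nhds (hC.prodMk_nhds (tendsto_const_nhds.prodMk_nhds hJ))
      obtain ⟨h, hheq, hhx, hhy, hhi, hhj⟩ :=
        hclosed.mem_of_tendsto htend (Filter.Eventually.of_forall hmemk)
      have hcommA : ∀ v, σ (A₀ v) = A₀ (σ v) := by
        intro v
        rw [hA₀def]
        simp only [ContinuousLinearMap.add_apply, ContinuousLinearMap.sub_apply,
          ContinuousLinearMap.comp_apply, map_add, map_sub, hσ2, hσBx]
        abel
      have hcommC : ∀ v, σ (C₀ v) = C₀ (σ v) := by
        intro v
        rw [hC₀def]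
        simp only [ContinuousLinearMap.add_apply, ContinuousLinearMap.sub_apply,
          ContinuousLinearMap.comp_apply, map_add, map_sub, hσ2, hσBy]
        abel
      have hg₂eq : ∀ (γ : Γ) (v : V),
          (ADHMAux.projEquiv σ hσ2 2 two_ne_zero) (ρV γ v)
            = ρV γ ((ADHMAux.projEquiv σ hσ2 2 two_ne_zero) v) := by
        intro γ v
        rw [ADHMAux.projEquiv_apply, ADHMAux.projEquiv_apply, map_add, map_sub,
          map_smul, hσeq]
      have hstabi : ∀ x, (ADHMAux.projEquiv σ hσ2 2 two_ne_zero) (i x) = i x := by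
        intro x
        rw [ADHMAux.projEquiv_apply, hσi]
        simp
      have hj₀σ : ∀ v, j₀ (σ v) = 0 := by
        intro v
        rw [hj₀def]
        simp only [ContinuousLinearMap.sub_apply, ContinuousLinearMap.comp_apply, hσ2,
          sub_self]
      have hstabj : ∀ v, j₀ ((ADHMAux.projEquiv σ hσ2 2 two_ne_zero).symm v) = j₀ v := by
        intro v
        rw [ADHMAux.projEquiv_symm_apply]
        simp [map_add, map_sub, map_smul, hj₀σ]
      have hg₂id : ∀ v, (ADHMAux.projEquiv σ hσ2 2 two_ne_zero) v = v :=
        ADHMAux.stab_transport ρV Bx By i j hstab A₀ C₀ i j₀ h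
          (ADHMAux.projEquiv σ hσ2 2 two_ne_zero) hheq hg₂eq hhx hhy hhi hhj
          (ADHMAux.projEquiv_conj_comm σ hσ2 2 two_ne_zero A₀ hcommA)
          (ADHMAux.projEquiv_conj_comm σ hσ2 2 two_ne_zero C₀ hcommC)
          hstabi hstabj
      have hσ0 : ∀ v, σ v = 0 := by
        intro v
        have h1 := hg₂id v
        rw [ADHMAux.projEquiv_apply] at h1
        have h2 : v - σ v + (2 : ℂ) • σ v = v + σ v := by
          rw [two_smul]; abel
        rw [h2] at h1
        exact add_eq_left.mp h1
      rw [eq_top_iff]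
      intro v _
      have h1 : π v = v := by
        have h0 := hσ0 v
        rw [hσapp] at h0
        have := sub_eq_zero.mp h0
        exact this.symm
      exact hV''le (by rw [← h1]; exact hπmem v)

  · rintro ⟨hst, hco⟩
    constructor
    -- ============ trivial stabilizer ============
    · intro g hgeq hgx hgy hgi hgj
      set D : V →L[ℂ] V := (g : V →L[ℂ] V) - 1 with hDdef
      have hDapp : ∀ v, D v = g v - v := fun v => by
        rw [hDdef]; simp
      have hK : LinearMap.ker (D : V →ₗ[ℂ] V) = ⊤ := by
        refine hco _ ?_ ?_ ?_
        · rintro v ⟨x, rfl⟩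
          rw [LinearMap.mem_ker, ContinuousLinearMap.coe_coe, ContinuousLinearMap.coe_coe, hDapp, hgi, sub_self]
        · intro v hv
          rw [LinearMap.mem_ker, ContinuousLinearMap.coe_coe, hDapp] at hv ⊢
          have hgv : g v = v := by
            have := sub_eq_zero.mp hv; exact this
          have hgsv : g.symm v = v := by
            conv_lhs => rw [← hgv]
            rw [g.symm_apply_apply]
          have := hgx v
          rw [hgsv] at this
          rw [this, sub_self]
        · intro v hv
          rw [LinearMap.mem_ker, ContinuousLinearMap.coe_coe, hDapp] at hv ⊢
          have hgv : g v = v := sub_eq_zero.mp hv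
          have hgsv : g.symm v = v := by
            conv_lhs => rw [← hgv]
            rw [g.symm_apply_apply]
          have := hgy v
          rw [hgsv] at this
          rw [this, sub_self]
      intro v
      have hv : v ∈ LinearMap.ker (D : V →ₗ[ℂ] V) := by rw [hK]; trivial
      rw [LinearMap.mem_ker, ContinuousLinearMap.coe_coe, hDapp] at hv
      exact sub_eq_zero.mp hv
    -- ============ closed orbit ============
    · have hset : {p : (V →L[ℂ] V) × (V →L[ℂ] V) × (W →L[ℂ] V) × (V →L[ℂ] W) |
        ∃ g : V ≃L[ℂ] V, (∀ γ : Γ, ∀ v : V, g (ρV γ v) = ρV γ (g v)) ∧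
          p.1 = (g : V →L[ℂ] V).comp (Bx.comp (g.symm : V →L[ℂ] V)) ∧
          p.2.1 = (g : V →L[ℂ] V).comp (By.comp (g.symm : V →L[ℂ] V)) ∧
          p.2.2.1 = (g : V →L[ℂ] V).comp i ∧
          p.2.2.2 = j.comp (g.symm : V →L[ℂ] V)} =
        {p : (V →L[ℂ] V) × (V →L[ℂ] V) × (W →L[ℂ] V) × (V →L[ℂ] W) |
          (∀ (γ : Γ) (v : V),
            (γ : Matrix.SpecialLinearGroup (Fin 2) ℂ).val 0 0 • ρV γ (p.1 v)
              + (γ : Matrix.SpecialLinearGroup (Fin 2) ℂ).val 0 1 • ρV γ (p.2.1 v)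
              = p.1 (ρV γ v)) ∧
          (∀ (γ : Γ) (v : V),
            (γ : Matrix.SpecialLinearGroup (Fin 2) ℂ).val 1 0 • ρV γ (p.1 v)
              + (γ : Matrix.SpecialLinearGroup (Fin 2) ℂ).val 1 1 • ρV γ (p.2.1 v)
              = p.2.1 (ρV γ v)) ∧
          (∀ (γ : Γ) (x : W), ρV γ (p.2.2.1 x) = p.2.2.1 (ρW γ x)) ∧
          (∀ (γ : Γ) (v : V), ρW γ (p.2.2.2 v) = p.2.2.2 (ρV γ v)) ∧
          (∀ (w : List Bool) (x : W),
            p.2.2.2 (ADHMAux.ev p.1 p.2.1 w (p.2.2.1 x)) = j (ADHMAux.ev Bx By w (i x)))} := by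
        ext p
        constructor
        · rintro ⟨g, hgeq, h1, h2, h3, h4⟩
          have hgsymm : ∀ (γ : Γ) (v : V), g.symm (ρV γ v) = ρV γ (g.symm v) := by
            intro γ v
            have hh := hgeq γ (g.symm v)
            rw [g.apply_symm_apply] at hh
            rw [← hh, g.symm_apply_apply]
          have hp1 : ∀ v, p.1 v = g (Bx (g.symm v)) := fun v => by rw [h1]; rfl
          have hp2 : ∀ v, p.2.1 v = g (By (g.symm v)) := fun v => by rw [h2]; rfl
          have hp3 : ∀ x, p.2.2.1 x = g (i x) := fun x => by rw [h3]; rfl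
          have hp4 : ∀ v, p.2.2.2 v = j (g.symm v) := fun v => by rw [h4]; rfl
          refine ⟨?_, ?_, ?_, ?_, ?_⟩
          · intro γ v
            rw [hp1, hp2, hp1, hgsymm, ← (hΓB γ (g.symm v)).1, map_add, map_smul, map_smul,
              hgeq, hgeq]
          · intro γ v
            rw [hp1, hp2, hp2, hgsymm, ← (hΓB γ (g.symm v)).2, map_add, map_smul, map_smul,
              hgeq, hgeq]
          · intro γ x
            rw [hp3, hp3, ← hgeq, hΓi]
          · intro γ v
            rw [hp4, hp4, hΓj, hgsymm]
          · intro w x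
            rw [h1, h2, hp3, hp4]
            have e2 := ADHMAux.ev_conj g Bx By w (g (i x))
            rw [g.symm_apply_apply] at e2
            rw [e2, g.symm_apply_apply]
        · rintro ⟨c1, c2, c3, c4, c5⟩
          obtain ⟨e, hex, hey, hei, hej⟩ :=
            ADHMAux.key_intertwiner Bx By i j hst hco p.1 p.2.1 p.2.2.1 p.2.2.2 c5
          have heeq : ∀ (γ : Γ) (v : V), e (ρV γ v) = ρV γ (e v) := by
            intro γ v
            set c : V →ₗ[ℂ] V := ((ρV γ) ∘ₗ (e : V →ₗ[ℂ] V)) ∘ₗ (ρV γ⁻¹) with hcdef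
            have happ : ∀ z, c z = ρV γ (e (ρV γ⁻¹ z)) := fun z => rfl
            have hcx : ∀ u, c (Bx u) = p.1 (c u) := by
              intro u
              have hr : Bx u
                  = (γ : Matrix.SpecialLinearGroup (Fin 2) ℂ).val 0 0
                      • ρV γ (Bx (ρV γ⁻¹ u))
                    + (γ : Matrix.SpecialLinearGroup (Fin 2) ℂ).val 0 1
                      • ρV γ (By (ρV γ⁻¹ u)) := by
                have h0 := (hΓB γ (ρV γ⁻¹ u)).1
                rw [hinvV] at h0
                exact h0.symm
              rw [happ, happ, hr, map_add, map_smul, map_smul, hinvV2, hinvV2,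
                map_add, map_smul, map_smul, hex, hey, map_add, map_smul, map_smul]
              exact c1 γ (e (ρV γ⁻¹ u))
            have hcy : ∀ u, c (By u) = p.2.1 (c u) := by
              intro u
              have hr : By u
                  = (γ : Matrix.SpecialLinearGroup (Fin 2) ℂ).val 1 0
                      • ρV γ (Bx (ρV γ⁻¹ u))
                    + (γ : Matrix.SpecialLinearGroup (Fin 2) ℂ).val 1 1
                      • ρV γ (By (ρV γ⁻¹ u)) := by
                have h0 := (hΓB γ (ρV γ⁻¹ u)).2
                rw [hinvV] at h0
                exact h0.symm
              rw [happ, happ, hr, map_add, map_smul, map_smul, hinvV2, hinvV2,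
                map_add, map_smul, map_smul, hex, hey, map_add, map_smul, map_smul]
              exact c2 γ (e (ρV γ⁻¹ u))
            have hci : ∀ x, c (i x) = p.2.2.1 x := by
              intro x
              rw [happ, hΓi γ⁻¹ x, hei, c3 γ, hinvW]
            have huniq := ADHMAux.intertwiner_unique Bx By i hco p.1 p.2.1 p.2.2.1
              (e : V →ₗ[ℂ] V) c (fun v => hex v) (fun v => hey v) (fun x => hei x)
              hcx hcy hci
            have h2 := huniq (ρV γ v)
            have h3 : c (ρV γ v) = ρV γ (e v) := by
              rw [happ, hinvV2]
            rw [← h3]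
            exact h2
          refine ⟨e.toContinuousLinearEquiv, ?_, ?_, ?_, ?_, ?_⟩
          · intro γ v
            exact heeq γ v
          · ext v
            show p.1 v = e (Bx (e.symm v))
            rw [hex, e.apply_symm_apply]
          · ext v
            show p.2.1 v = e (By (e.symm v))
            rw [hey, e.apply_symm_apply]
          · ext x
            show p.2.2.1 x = e (i x)
            rw [hei]
          · ext v
            show p.2.2.2 v = j (e.symm v)
            rw [← hej (e.symm v), e.apply_symm_apply]
      rw [hset]
      -- closedness of the equational set
      have q1 : Continuous fun p : (V →L[ℂ] V) × (V →L[ℂ] V) × (W →L[ℂ] V) × (V →L[ℂ] W)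
          => p.1 := continuous_fst
      have q2 : Continuous fun p : (V →L[ℂ] V) × (V →L[ℂ] V) × (W →L[ℂ] V) × (V →L[ℂ] W)
          => p.2.1 := continuous_fst.comp continuous_snd
      have q3 : Continuous fun p : (V →L[ℂ] V) × (V →L[ℂ] V) × (W →L[ℂ] V) × (V →L[ℂ] W)
          => p.2.2.1 := continuous_fst.comp (continuous_snd.comp continuous_snd)
      have q4 : Continuous fun p : (V →L[ℂ] V) × (V →L[ℂ] V) × (W →L[ℂ] V) × (V →L[ℂ] W)
          => p.2.2.2 := continuous_snd.comp (continuous_snd.comp continuous_snd)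
      have hevVV : Continuous fun q : (V →L[ℂ] V) × V => q.1 q.2 :=
        isBoundedBilinearMap_apply.continuous
      have hevWV : Continuous fun q : (W →L[ℂ] V) × W => q.1 q.2 :=
        isBoundedBilinearMap_apply.continuous
      have hevVW : Continuous fun q : (V →L[ℂ] W) × V => q.1 q.2 :=
        isBoundedBilinearMap_apply.continuous
      have hρVc : ∀ γ : Γ, Continuous (ρV γ) := fun γ =>
        LinearMap.continuous_of_finiteDimensional (ρV γ)
      have hρWc : ∀ γ : Γ, Continuous (ρW γ) := fun γ =>
        LinearMap.continuous_of_finiteDimensional (ρW γ)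
      rw [Set.setOf_and, Set.setOf_and, Set.setOf_and, Set.setOf_and]
      refine IsClosed.inter ?_ (IsClosed.inter ?_ (IsClosed.inter ?_ (IsClosed.inter ?_ ?_)))
      · rw [Set.setOf_forall]
        refine isClosed_iInter fun γ => ?_
        rw [Set.setOf_forall]
        refine isClosed_iInter fun v => ?_
        refine isClosed_eq ?_ ?_
        · exact (((hρVc γ).comp (hevVV.comp (q1.prodMk continuous_const))).const_smul _).add
            (((hρVc γ).comp (hevVV.comp (q2.prodMk continuous_const))).const_smul _)
        · exact hevVV.comp (q1.prodMk continuous_const)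
      · rw [Set.setOf_forall]
        refine isClosed_iInter fun γ => ?_
        rw [Set.setOf_forall]
        refine isClosed_iInter fun v => ?_
        refine isClosed_eq ?_ ?_
        · exact (((hρVc γ).comp (hevVV.comp (q1.prodMk continuous_const))).const_smul _).add
            (((hρVc γ).comp (hevVV.comp (q2.prodMk continuous_const))).const_smul _)
        · exact hevVV.comp (q2.prodMk continuous_const)
      · rw [Set.setOf_forall]
        refine isClosed_iInter fun γ => ?_
        rw [Set.setOf_forall]
        refine isClosed_iInter fun x => ?_
        refine isClosed_eq ?_ ?_
        · exact (hρVc γ).comp (hevWV.comp (q3.prodMk continuous_const))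
        · exact hevWV.comp (q3.prodMk continuous_const)
      · rw [Set.setOf_forall]
        refine isClosed_iInter fun γ => ?_
        rw [Set.setOf_forall]
        refine isClosed_iInter fun v => ?_
        refine isClosed_eq ?_ ?_
        · exact (hρWc γ).comp (hevVW.comp (q4.prodMk continuous_const))
        · exact hevVW.comp (q4.prodMk continuous_const)
      · rw [Set.setOf_forall]
        refine isClosed_iInter fun w => ?_
        rw [Set.setOf_forall]
        refine isClosed_iInter fun x => ?_
        refine isClosed_eq ?_ continuous_const
        exact hevVW.comp (q4.prodMk (hevVV.comp
          (((ADHMAux.ev_continuous w).comp (q1.prodMk q2)).prodMk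
            (hevWV.comp (q3.prodMk continuous_const)))))
end

section
/- Let ξ=(B_x,B_y,i,j) be an ADHM datum on (V,W), and suppose V = V₁ ⊕ V₂ where V₁, V₂ are invariant under B_x and B_y, range(i) ⊆ V₁, V₂ ⊆ ker(j), and the restricted datum ξ₁=(B_x|V₁, B_y|V₁, i, j|V₁) on (V₁,W) is stable and costable. Then V₁ is the smallest subspace of V that is invariant under B_x and B_y and contains range(i), and V₂ is the largest subspace of V that is invariant under B_x and B_y and is contained in ker(j); in particular the splitting (V₁,V₂) is unique. (Uniqueness part of Lemma 1(iii).) -/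
lemma adhm_aux
    (V W : Type*) [AddCommGroup V] [Module ℂ V]
    [AddCommGroup W] [Module ℂ W]
    (Bx By : V →ₗ[ℂ] V) (i : W →ₗ[ℂ] V) (j : V →ₗ[ℂ] W)
    (V₁ V₂ : Submodule ℂ V)
    (hcompl : IsCompl V₁ V₂)
    (hBx₁ : ∀ v ∈ V₁, Bx v ∈ V₁) (hBy₁ : ∀ v ∈ V₁, By v ∈ V₁)
    (hBx₂ : ∀ v ∈ V₂, Bx v ∈ V₂) (hBy₂ : ∀ v ∈ V₂, By v ∈ V₂)
    (hi : LinearMap.range i ≤ V₁) (hj : V₂ ≤ LinearMap.ker j)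
    (hstable : ∀ V' : Submodule ℂ V, V' ≤ V₁ → V' ≤ LinearMap.ker j →
      (∀ v ∈ V', Bx v ∈ V') → (∀ v ∈ V', By v ∈ V') → V' = ⊥)
    (hcostable : ∀ V' : Submodule ℂ V, V' ≤ V₁ → LinearMap.range i ≤ V' →
      (∀ v ∈ V', Bx v ∈ V') → (∀ v ∈ V', By v ∈ V') → V' = V₁) :
    (∀ U : Submodule ℂ V, (∀ v ∈ U, Bx v ∈ U) → (∀ v ∈ U, By v ∈ U) →
        LinearMap.range i ≤ U → V₁ ≤ U) ∧
    (∀ U : Submodule ℂ V, (∀ v ∈ U, Bx v ∈ U) → (∀ v ∈ U, By v ∈ U) →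
        U ≤ LinearMap.ker j → U ≤ V₂) := by
  constructor
  · intro U hUx hUy hiU
    have h := hcostable (U ⊓ V₁) inf_le_right (le_inf hiU hi)
      (fun v hv => ⟨hUx v hv.1, hBx₁ v hv.2⟩)
      (fun v hv => ⟨hUy v hv.1, hBy₁ v hv.2⟩)
    calc V₁ = U ⊓ V₁ := h.symm
    _ ≤ U := inf_le_left
  · intro U hUx hUy hjU
    -- projection onto V₁ along V₂, as a map V → V
    set P : V →ₗ[ℂ] V := V₁.subtype.comp (Submodule.projectionOnto V₁ V₂ hcompl)
      with hP
    have hPmem : ∀ v, P v ∈ V₁ := fun v => (Submodule.projectionOnto V₁ V₂ hcompl v).2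
    have hP1 : ∀ v ∈ V₁, P v = v := fun v hv => by
      simp [hP, Submodule.projectionOnto_apply_of_mem_left hcompl hv]
    have hP2 : ∀ v ∈ V₂, P v = 0 := fun v hv => by
      simp [hP, Submodule.projectionOnto_apply_of_mem_right hcompl hv]
    have hPsub : ∀ v, v - P v ∈ V₂ := fun v => by
      have h : (V₁.projectionOnto V₂ hcompl v : V) + (V₂.linearProjOfIsCompl V₁ hcompl.symm v : V) = v :=
        Submodule.projection_add_projection_eq_self hcompl v
      have : v - P v = (V₂.linearProjOfIsCompl V₁ hcompl.symm v : V) := by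
        simp only [hP, LinearMap.comp_apply, Submodule.subtype_apply]
        linear_combination (norm := abel) -h
      rw [this]; exact (V₂.linearProjOfIsCompl V₁ hcompl.symm v).2
    have hadd : ∀ a ∈ V₁, ∀ b ∈ V₂, P (a + b) = a := fun a ha b hb => by
      rw [map_add, hP1 a ha, hP2 b hb, add_zero]
    have hcomm : ∀ (B : V →ₗ[ℂ] V), (∀ v ∈ V₁, B v ∈ V₁) → (∀ v ∈ V₂, B v ∈ V₂) →
        ∀ v, P (B v) = B (P v) := by
      intro B hB1 hB2 v
      have : B v = B (P v) + B (v - P v) := by rw [← map_add, add_sub_cancel]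
      rw [this, hadd _ (hB1 _ (hPmem v)) _ (hB2 _ (hPsub v))]
    set T : Submodule ℂ V := Submodule.map P U with hT
    have hTbot : T = ⊥ := by
      apply hstable
      · rintro _ ⟨u, _, rfl⟩; exact hPmem u
      · rintro _ ⟨u, hu, rfl⟩
        have h1 : j u = 0 := hjU hu
        have h2 : j (u - P u) = 0 := hj (hPsub u)
        have h3 : j (P u) = j u - j (u - P u) := by rw [map_sub]; abel
        simp [h3, h1, h2]
      · rintro _ ⟨u, hu, rfl⟩
        exact ⟨Bx u, hUx u hu, (hcomm Bx hBx₁ hBx₂ u)⟩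
      · rintro _ ⟨u, hu, rfl⟩
        exact ⟨By u, hUy u hu, (hcomm By hBy₁ hBy₂ u)⟩
    intro u hu
    have hP0 : P u = 0 := by
      have : P u ∈ T := ⟨u, hu, rfl⟩
      rwa [hTbot, Submodule.mem_bot] at this
    have h := hPsub u
    rwa [hP0, sub_zero] at h

/-- uniqueness part of Lemma 1(iii).
Let `ξ=(Bx,By,i,j)` be an ADHM datum on `(V,W)`, and suppose `V = V₁ ⊕ V₂`
where `V₁, V₂` are invariant under `Bx` and `By`, `range i ⊆ V₁`, `V₂ ⊆ ker j`,
and the restricted datum `ξ₁` on `(V₁,W)` is stable and costable.  Then `V₁` is the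
smallest `Bx,By`-invariant subspace of `V` containing `range i`, and `V₂` is the
largest `Bx,By`-invariant subspace of `V` contained in `ker j`; in particular the
splitting `(V₁,V₂)` is unique. -/
theorem stmt_3
    (V W : Type*) [AddCommGroup V] [Module ℂ V] [FiniteDimensional ℂ V]
    [AddCommGroup W] [Module ℂ W] [FiniteDimensional ℂ W]
    (Bx By : V →ₗ[ℂ] V) (i : W →ₗ[ℂ] V) (j : V →ₗ[ℂ] W)
    (V₁ V₂ : Submodule ℂ V)
    (hcompl : IsCompl V₁ V₂)
    (hBx₁ : ∀ v ∈ V₁, Bx v ∈ V₁) (hBy₁ : ∀ v ∈ V₁, By v ∈ V₁)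
    (hBx₂ : ∀ v ∈ V₂, Bx v ∈ V₂) (hBy₂ : ∀ v ∈ V₂, By v ∈ V₂)
    (hi : LinearMap.range i ≤ V₁) (hj : V₂ ≤ LinearMap.ker j)
    -- the restricted datum `ξ₁ = (Bx|V₁, By|V₁, i, j|V₁)` on `(V₁, W)` is stable:
    (hstable : ∀ V' : Submodule ℂ V, V' ≤ V₁ → V' ≤ LinearMap.ker j →
      (∀ v ∈ V', Bx v ∈ V') → (∀ v ∈ V', By v ∈ V') → V' = ⊥)
    -- and costable:
    (hcostable : ∀ V' : Submodule ℂ V, V' ≤ V₁ → LinearMap.range i ≤ V' →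
      (∀ v ∈ V', Bx v ∈ V') → (∀ v ∈ V', By v ∈ V') → V' = V₁) :
    (∀ U : Submodule ℂ V, (∀ v ∈ U, Bx v ∈ U) → (∀ v ∈ U, By v ∈ U) →
        LinearMap.range i ≤ U → V₁ ≤ U) ∧
    (∀ U : Submodule ℂ V, (∀ v ∈ U, Bx v ∈ U) → (∀ v ∈ U, By v ∈ U) →
        U ≤ LinearMap.ker j → U ≤ V₂) ∧
    (∀ V₁' V₂' : Submodule ℂ V, IsCompl V₁' V₂' →
      (∀ v ∈ V₁', Bx v ∈ V₁') → (∀ v ∈ V₁', By v ∈ V₁') →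
      (∀ v ∈ V₂', Bx v ∈ V₂') → (∀ v ∈ V₂', By v ∈ V₂') →
      LinearMap.range i ≤ V₁' → V₂' ≤ LinearMap.ker j →
      (∀ V' : Submodule ℂ V, V' ≤ V₁' → V' ≤ LinearMap.ker j →
        (∀ v ∈ V', Bx v ∈ V') → (∀ v ∈ V', By v ∈ V') → V' = ⊥) →
      (∀ V' : Submodule ℂ V, V' ≤ V₁' → LinearMap.range i ≤ V' →
        (∀ v ∈ V', Bx v ∈ V') → (∀ v ∈ V', By v ∈ V') → V' = V₁') →
      V₁' = V₁ ∧ V₂' = V₂) := by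
  obtain ⟨h1, h2⟩ := adhm_aux V W Bx By i j V₁ V₂ hcompl hBx₁ hBy₁ hBx₂ hBy₂ hi hj
    hstable hcostable
  refine ⟨h1, h2, ?_⟩
  intro V₁' V₂' hcompl' hBx₁' hBy₁' hBx₂' hBy₂' hi' hj' hstable' hcostable'
  obtain ⟨h1', h2'⟩ := adhm_aux V W Bx By i j V₁' V₂' hcompl' hBx₁' hBy₁' hBx₂' hBy₂'
    hi' hj' hstable' hcostable'
  exact ⟨le_antisymm (h1' V₁ hBx₁ hBy₁ hi) (h1 V₁' hBx₁' hBy₁' hi'),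
         le_antisymm (h2 V₂' hBx₂' hBy₂' hj') (h2' V₂ hBx₂ hBy₂ hj)⟩
end

section
/- Let ξ¹=(B¹_x,B¹_y,i¹,j¹) and ξ²=(B²_x,B²_y,i²,j²) be ADHM data on (V,W) satisfying the ADHM equation. Suppose α, γ ∈ GL(V) and β ∈ GL((ℂ²⊗V)⊕W) satisfy β∘a_{ξ¹}(x,y,z) = a_{ξ²}(x,y,z)∘α and γ∘b_{ξ¹}(x,y,z) = b_{ξ²}(x,y,z)∘β for all (x,y,z) ∈ ℂ³. Then γ = α, β maps ℂ²⊗V to itself acting there as 1_{ℂ²}⊗α, β maps W to itself with restriction β_W ∈ GL(W), and B²_x∘α = α∘B¹_x, B²_y∘α = α∘B¹_y, i²∘β_W = α∘i¹, β_W∘j¹ = j²∘α. In particular, if β restricts to the identity on W then ξ² = α·ξ¹. (Rigidity of monad isomorphisms, Part 3 of the proof of Theorem 1.) -/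
/-- rigidity of monad isomorphisms, Part 3 of the proof of Theorem 1.
Here `ℂ²⊗V` is modelled as `V × V` (components along `e₁, e₂`).  For an ADHM datum
`ξ=(Bx,By,i,j)` and `(x,y,z) ∈ ℂ³`, the maps of the monad are
`a_ξ(x,y,z) : V → (V×V)×W`, `v ↦ ((z•Bx v − x•v, z•By v − y•v), z•j v)` and
`b_ξ(x,y,z) : (V×V)×W → V`, `((u,u'),w) ↦ (z•By−y)u − (z•Bx−x)u' + z•i w`.
If `α, γ ∈ GL(V)` and `β ∈ GL((ℂ²⊗V)⊕W)` intertwine the monads of two data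
`ξ¹, ξ²` satisfying the ADHM equation, then `γ = α`, `β` preserves `ℂ²⊗V` acting
there as `1⊗α`, `β` preserves `W` with restriction `β_W ∈ GL(W)`, and
`B²x∘α = α∘B¹x`, `B²y∘α = α∘B¹y`, `i²∘β_W = α∘i¹`, `β_W∘j¹ = j²∘α`.
In particular, if `β` restricts to the identity on `W` then `ξ² = α·ξ¹`. -/
theorem stmt_5
    (V W : Type*) [AddCommGroup V] [Module ℂ V] [FiniteDimensional ℂ V]
    [AddCommGroup W] [Module ℂ W] [FiniteDimensional ℂ W]
    (B1x B1y : V →ₗ[ℂ] V) (i1 : W →ₗ[ℂ] V) (j1 : V →ₗ[ℂ] W)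
    (B2x B2y : V →ₗ[ℂ] V) (i2 : W →ₗ[ℂ] V) (j2 : V →ₗ[ℂ] W)
    (hADHM1 : ∀ v : V, B1x (B1y v) - B1y (B1x v) = i1 (j1 v))
    (hADHM2 : ∀ v : V, B2x (B2y v) - B2y (B2x v) = i2 (j2 v))
    (α γ : V ≃ₗ[ℂ] V) (β : ((V × V) × W) ≃ₗ[ℂ] ((V × V) × W))
    -- β ∘ a_{ξ¹}(x,y,z) = a_{ξ²}(x,y,z) ∘ α for all (x,y,z) ∈ ℂ³
    (ha : ∀ x y z : ℂ, ∀ v : V,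
      β ((z • B1x v - x • v, z • B1y v - y • v), z • j1 v)
        = ((z • B2x (α v) - x • α v, z • B2y (α v) - y • α v), z • j2 (α v)))
    -- γ ∘ b_{ξ¹}(x,y,z) = b_{ξ²}(x,y,z) ∘ β for all (x,y,z) ∈ ℂ³
    (hb : ∀ x y z : ℂ, ∀ u u' : V, ∀ w : W,
      γ ((z • B1y u - y • u) - (z • B1x u' - x • u') + z • i1 w)
        = (z • B2y (β ((u, u'), w)).1.1 - y • (β ((u, u'), w)).1.1)
          - (z • B2x (β ((u, u'), w)).1.2 - x • (β ((u, u'), w)).1.2)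
          + z • i2 (β ((u, u'), w)).2) :
    (∀ v : V, γ v = α v) ∧
    (∀ u u' : V, β ((u, u'), (0 : W)) = ((α u, α u'), 0)) ∧
    (∃ βW : W ≃ₗ[ℂ] W,
      (∀ w : W, β ((0, 0), w) = ((0, 0), βW w)) ∧
      (∀ v : V, B2x (α v) = α (B1x v)) ∧
      (∀ v : V, B2y (α v) = α (B1y v)) ∧
      (∀ w : W, i2 (βW w) = α (i1 w)) ∧
      (∀ v : V, βW (j1 v) = j2 (α v)) ∧
      -- in particular, if β restricts to the identity on W then ξ² = α·ξ¹
      ((∀ w : W, βW w = w) →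
        (∀ v : V, B2x v = α (B1x (α.symm v))) ∧
        (∀ v : V, B2y v = α (B1y (α.symm v))) ∧
        (∀ w : W, i2 w = α (i1 w)) ∧
        (∀ v : V, j2 v = j1 (α.symm v)))) := by

  -- β on (V×V)×{0} acts as α ⊕ α
  have hβ1 : ∀ u u' : V, β ((u, u'), (0 : W)) = ((α u, α u'), 0) := by
    have h1 : ∀ v : V, β ((v, 0), (0 : W)) = ((α v, 0), 0) := by
      intro v
      have h := ha (-1) 0 0 v
      simpa using h
    have h2 : ∀ v : V, β ((0, v), (0 : W)) = ((0, α v), 0) := by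
      intro v
      have h := ha 0 (-1) 0 v
      simpa using h
    intro u u'
    have hs : ((u, u'), (0 : W)) = ((u, (0:V)), (0:W)) + (((0:V), u'), (0:W)) := by
      simp [Prod.ext_iff]
    rw [hs, map_add, h1, h2]
    simp [Prod.ext_iff]
  have hc2' : ∀ (u u' : V) (w : W), γ u' = (β ((u, u'), w)).1.2 := by
    intro u u' w
    have h := hb 1 0 0 u u' w
    simpa using h
  have hγ : ∀ v : V, γ v = α v := by
    intro v
    have h := hc2' 0 v 0
    rw [hβ1] at h
    simpa using h
  have hc1' : ∀ (u u' : V) (w : W), γ u = (β ((u, u'), w)).1.1 := by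
    intro u u' w
    have h := hb 0 (-1) 0 u u' w
    simpa using h
  set f : W →ₗ[ℂ] W :=
    (LinearMap.snd ℂ (V × V) W).comp (β.toLinearMap.comp (LinearMap.inr ℂ (V × V) W)) with hf
  have hfw : ∀ w : W, f w = (β (((0:V), (0:V)), w)).2 := fun w => rfl
  have hdecomp : ∀ (u u' : V) (w : W), β ((u, u'), w) = ((α u, α u'), f w) := by
    intro u u' w
    have h0 : (β (((0:V), (0:V)), w)).1.1 = 0 := by
      have h := hc1' 0 0 w; rw [hγ] at h; simpa using h.symm
    have h0' : (β (((0:V), (0:V)), w)).1.2 = 0 := by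
      have h := hc2' 0 0 w; rw [hγ] at h; simpa using h.symm
    have hw : β (((0:V), (0:V)), w) = (((0:V), (0:V)), f w) := by
      rw [Prod.ext_iff, Prod.ext_iff]
      exact ⟨⟨h0, h0'⟩, (hfw w).symm⟩
    have hs : ((u, u'), w) = ((u, u'), (0:W)) + (((0:V), (0:V)), w) := by
      simp [Prod.ext_iff]
    rw [hs, map_add, hβ1, hw]
    simp [Prod.ext_iff]
  have hmain : ∀ v : V, (((α (B1x v) : V), (α (B1y v) : V)), f (j1 v))
      = ((B2x (α v), B2y (α v)), j2 (α v)) := by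
    intro v
    have h := ha 0 0 1 v
    simp only [one_smul, zero_smul, sub_zero] at h
    rw [hdecomp] at h
    exact h
  have hBx : ∀ v : V, B2x (α v) = α (B1x v) := fun v =>
    ((Prod.ext_iff.mp (Prod.ext_iff.mp (hmain v)).1).1).symm
  have hBy : ∀ v : V, B2y (α v) = α (B1y v) := fun v =>
    ((Prod.ext_iff.mp (Prod.ext_iff.mp (hmain v)).1).2).symm
  have hj : ∀ v : V, f (j1 v) = j2 (α v) := fun v => (Prod.ext_iff.mp (hmain v)).2
  have hi : ∀ w : W, i2 (f w) = α (i1 w) := by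
    intro w
    have h := hb 0 0 1 0 0 w
    rw [hdecomp] at h
    simp only [map_zero, one_smul, zero_smul, sub_zero, zero_sub, sub_self] at h
    rw [hγ] at h
    simpa using h.symm
  have hinj : Function.Injective f := by
    intro w w' h
    have he : β (((0:V), (0:V)), w) = β (((0:V), (0:V)), w') := by
      rw [hdecomp, hdecomp, h]
    have := β.injective he
    exact (Prod.ext_iff.mp this).2
  have hsurj : Function.Surjective f := by
    intro w'
    obtain ⟨p, hp⟩ := β.surjective ((((0:V), (0:V)), w'))
    refine ⟨p.2, ?_⟩
    have h := hdecomp p.1.1 p.1.2 p.2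
    rw [show ((p.1.1, p.1.2), p.2) = p from rfl, hp] at h
    exact ((Prod.ext_iff.mp h).2).symm
  refine ⟨hγ, hβ1, LinearEquiv.ofBijective f ⟨hinj, hsurj⟩, ?_, hBx, hBy, hi, hj, ?_⟩
  · intro w
    have h := hdecomp 0 0 w
    simp only [map_zero] at h
    exact h
  · intro hid
    have hid' : ∀ w : W, f w = w := hid
    refine ⟨fun v => ?_, fun v => ?_, fun w => ?_, fun v => ?_⟩
    · have := hBx (α.symm v); rwa [α.apply_symm_apply] at this
    · have := hBy (α.symm v); rwa [α.apply_symm_apply] at this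
    · have := hi w; rwa [hid' w] at this
    · have := hj (α.symm v); rw [hid', α.apply_symm_apply] at this; exact this.symm
end

section
/- Let ξ=(B_x,B_y,i,j) be an ADHM datum on (V,W) satisfying the ADHM equation which is both stable and costable. Let q₀, t₀ ∈ ℂ× be such that q₀^m t₀^l = 1 for integers m,l implies m = l = 0. If there exists g ∈ GL(V) with g∘B_x∘g⁻¹ = q₀·B_x, g∘B_y∘g⁻¹ = t₀·B_y, g∘i = q₀t₀·i and j∘g⁻¹ = j, then V = 0. (The core of Lemma 2: a nonzero stable and costable datum is not fixed, modulo GL(V), by a general torus element (q₀,t₀).) -/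
/-- Vectors generated from the range of `i` by applying words in `Bx`, `By`. -/
inductive AdhmGen {V W : Type*} [AddCommGroup V] [Module ℂ V] [AddCommGroup W] [Module ℂ W]
    (Bx By : V →ₗ[ℂ] V) (i : W →ₗ[ℂ] V) : V → Prop
  | base (x : W) : AdhmGen Bx By i (i x)
  | stepx {v : V} : AdhmGen Bx By i v → AdhmGen Bx By i (Bx v)
  | stepy {v : V} : AdhmGen Bx By i v → AdhmGen Bx By i (By v)
/-- core of Lemma 2.
Let `ξ=(Bx,By,i,j)` be an ADHM datum on `(V,W)` satisfying the ADHM equation which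
is both stable and costable.  Let `q₀, t₀ ∈ ℂˣ` be such that `q₀^m t₀^l = 1` for
integers `m,l` implies `m = l = 0`.  If there exists `g ∈ GL(V)` with
`g∘Bx∘g⁻¹ = q₀·Bx`, `g∘By∘g⁻¹ = t₀·By`, `g∘i = q₀t₀·i` and `j∘g⁻¹ = j`,
then `V = 0`. -/
theorem stmt_6
    (V W : Type*) [AddCommGroup V] [Module ℂ V] [FiniteDimensional ℂ V]
    [AddCommGroup W] [Module ℂ W] [FiniteDimensional ℂ W]
    (Bx By : V →ₗ[ℂ] V) (i : W →ₗ[ℂ] V) (j : V →ₗ[ℂ] W)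
    (hADHM : ∀ v : V, Bx (By v) - By (Bx v) = i (j v))
    (hstable : ∀ V' : Submodule ℂ V, V' ≤ LinearMap.ker j →
      (∀ v ∈ V', Bx v ∈ V') → (∀ v ∈ V', By v ∈ V') → V' = ⊥)
    (hcostable : ∀ V' : Submodule ℂ V, LinearMap.range i ≤ V' →
      (∀ v ∈ V', Bx v ∈ V') → (∀ v ∈ V', By v ∈ V') → V' = ⊤)
    (q₀ t₀ : ℂˣ)
    (hgen : ∀ m l : ℤ, q₀ ^ m * t₀ ^ l = 1 → m = 0 ∧ l = 0)
    (g : V ≃ₗ[ℂ] V)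
    (hgBx : ∀ v : V, g (Bx (g.symm v)) = (q₀ : ℂ) • Bx v)
    (hgBy : ∀ v : V, g (By (g.symm v)) = (t₀ : ℂ) • By v)
    (hgi : ∀ x : W, g (i x) = ((q₀ : ℂ) * (t₀ : ℂ)) • i x)
    (hgj : ∀ v : V, j (g.symm v) = j v) :
    ∀ v : V, v = 0 := by
  -- g acts on each generated vector by a scalar q^(a+1) t^(b+1)
  have hscale : ∀ v : V, AdhmGen Bx By i v →
      ∃ a b : ℕ, g v = ((q₀ : ℂ) ^ (a + 1) * (t₀ : ℂ) ^ (b + 1)) • v := by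
    intro v hv
    induction hv with
    | base x => exact ⟨0, 0, by simpa using hgi x⟩
    | @stepx v hv ih =>
        obtain ⟨a, b, hab⟩ := ih
        refine ⟨a + 1, b, ?_⟩
        have h1 : g (Bx v) = (q₀ : ℂ) • Bx (g v) := by
          have := hgBx (g v); simpa using this
        rw [h1, hab, map_smul, smul_smul]
        all_goals (congr 1; ring)
    | @stepy v hv ih =>
        obtain ⟨a, b, hab⟩ := ih
        refine ⟨a, b + 1, ?_⟩
        have h1 : g (By v) = (t₀ : ℂ) • By (g v) := by
          have := hgBy (g v); simpa using this
        rw [h1, hab, map_smul, smul_smul]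
        all_goals (congr 1; ring)
  -- j vanishes on generated vectors
  have hj0 : ∀ v : V, AdhmGen Bx By i v → j v = 0 := by
    intro v hv
    obtain ⟨a, b, hab⟩ := hscale v hv
    have h1 : j v = j (g v) := by simpa using hgj (g v)
    rw [hab, map_smul] at h1
    have hc : ((q₀ : ℂ) ^ (a + 1) * (t₀ : ℂ) ^ (b + 1)) ≠ 1 := by
      intro h
      have hu : q₀ ^ ((a : ℤ) + 1) * t₀ ^ ((b : ℤ) + 1) = 1 := by
        apply Units.ext
        push_cast
        rw [show ((a:ℤ)+1) = ((a+1 : ℕ) : ℤ) by omega, show ((b:ℤ)+1) = ((b+1 : ℕ) : ℤ) by omega, zpow_natCast, zpow_natCast]; exact h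
      have := (hgen _ _ hu).1
      omega
    have h2 : (1 - ((q₀ : ℂ) ^ (a + 1) * (t₀ : ℂ) ^ (b + 1))) • j v = 0 := by
      rw [sub_smul, one_smul, ← h1, sub_self]
    rcases smul_eq_zero.mp h2 with h | h
    · exact absurd (by linear_combination -h) hc
    · exact h
  set S : Set V := {v | AdhmGen Bx By i v} with hS
  have hinvx : ∀ v ∈ Submodule.span ℂ S, Bx v ∈ Submodule.span ℂ S := by
    intro v hv
    induction hv using Submodule.span_induction with
    | mem v hv => exact Submodule.subset_span (AdhmGen.stepx hv)
    | zero => simp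
    | add x y _ _ hx hy => rw [map_add]; exact Submodule.add_mem _ hx hy
    | smul c x _ hx => rw [map_smul]; exact Submodule.smul_mem _ c hx
  have hinvy : ∀ v ∈ Submodule.span ℂ S, By v ∈ Submodule.span ℂ S := by
    intro v hv
    induction hv using Submodule.span_induction with
    | mem v hv => exact Submodule.subset_span (AdhmGen.stepy hv)
    | zero => simp
    | add x y _ _ hx hy => rw [map_add]; exact Submodule.add_mem _ hx hy
    | smul c x _ hx => rw [map_smul]; exact Submodule.smul_mem _ c hx
  have hrange : LinearMap.range i ≤ Submodule.span ℂ S := by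
    rintro _ ⟨x, rfl⟩
    exact Submodule.subset_span (AdhmGen.base x)
  have htop : Submodule.span ℂ S = ⊤ := hcostable _ hrange hinvx hinvy
  have hker : Submodule.span ℂ S ≤ LinearMap.ker j :=
    Submodule.span_le.mpr fun v hv => hj0 v hv
  have hkertop : (⊤ : Submodule ℂ V) ≤ LinearMap.ker j := htop ▸ hker
  have hbot : (⊤ : Submodule ℂ V) = ⊥ :=
    hstable ⊤ hkertop (fun v _ => Submodule.mem_top) (fun v _ => Submodule.mem_top)
  intro v
  have : v ∈ (⊥ : Submodule ℂ V) := hbot ▸ Submodule.mem_top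
  simpa using this
end

section
/- Let ξ=(B_x,B_y,i,j) be a stable ADHM datum on (V,W). Suppose W = ⊕_{a=1}^w W_a, let t₁,…,t_w ∈ ℂ× be pairwise distinct, and let h ∈ GL(W) act as multiplication by t_a on W_a. Suppose g ∈ GL(V) satisfies g∘B_x = B_x∘g, g∘B_y = B_y∘g, g∘i = i∘h⁻¹ and j∘g⁻¹ = h∘j. Then V = ⊕_{a=1}^w V_a, where V_a is the generalized eigenspace of g for the eigenvalue t_a⁻¹ (in particular every eigenvalue of g is of the form t_a⁻¹); moreover each V_a is invariant under B_x and B_y, i(W_a) ⊆ V_a, j(V_a) ⊆ W_a, and each restricted datum (B_x|V_a, B_y|V_a, i|W_a, j|V_a) on (V_a, W_a) is stable. (The linear-algebra core of Lemma 3(i).) -/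
open Module LinearMap

lemma aux_intertwine_pow {R M N : Type*} [CommRing R] [AddCommGroup M] [Module R M]
    [AddCommGroup N] [Module R N] (j : M →ₗ[R] N) (P : Module.End R M) (Q : Module.End R N)
    (hPQ : ∀ v, j (P v) = Q (j v)) : ∀ (k : ℕ) (v : M), j ((P ^ k) v) = (Q ^ k) (j v) := by
  intro k
  induction k with
  | zero => intro v; simp
  | succ n ih =>
      intro v
      rw [pow_succ, pow_succ, Module.End.mul_apply, Module.End.mul_apply, ih (P v), hPQ v]

lemma aux_key_inv_pow {M : Type*} [AddCommGroup M] [Module ℂ M] (g : M ≃ₗ[ℂ] M)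
    (c : ℂ) (hc : c ≠ 0) (N : ℕ) (v : M)
    (hv : ((g.toLinearMap - c • (1 : Module.End ℂ M)) ^ N) v = 0) :
    ((g.symm.toLinearMap - c⁻¹ • (1 : Module.End ℂ M)) ^ N) v = 0 := by
  set A := g.toLinearMap with hA
  set A' := g.symm.toLinearMap with hA'
  have hAA' : A' * A = 1 := by ext x; simp [hA, hA', Module.End.mul_apply]
  have hA'A : A * A' = 1 := by ext x; simp [hA, hA', Module.End.mul_apply]
  have hid : A' - c⁻¹ • 1 = (-c⁻¹) • (A' * (A - c • 1)) := by
    have h1 : A' * (A - c • 1) = 1 - c • A' := by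
      rw [mul_sub, hAA', mul_smul_comm, mul_one]
    rw [h1, smul_sub, smul_smul, neg_mul, inv_mul_cancel₀ hc, neg_smul, neg_smul,
      one_smul, sub_neg_eq_add, neg_add_eq_sub]
  have hcomm : Commute A' (A - c • 1) := by
    show A' * (A - c • 1) = (A - c • 1) * A'
    rw [mul_sub, sub_mul, hAA', hA'A, mul_smul_comm, smul_mul_assoc, mul_one, one_mul]
  rw [hid, smul_pow, hcomm.mul_pow]
  simp only [LinearMap.smul_apply, Module.End.mul_apply, hv, map_zero, smul_zero]

/-- the linear-algebra core of Lemma 3(i).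
Let `ξ=(Bx,By,i,j)` be a stable ADHM datum on `(V,W)`.  Suppose `W = ⊕_{a} W_a`,
let `t₁,…,t_w` be pairwise distinct nonzero complex numbers, and let `h ∈ GL(W)`
act as `t_a` on `W_a`.  If `g ∈ GL(V)` commutes with `Bx, By` and satisfies
`g∘i = i∘h⁻¹`, `j∘g⁻¹ = h∘j`, then `V = ⊕_a V_a` where
`V_a = ⋃_N ker((g − t_a⁻¹)^N)` is the generalized eigenspace of `g` for `t_a⁻¹`;
each `V_a` is `Bx,By`-invariant, `i(W_a) ⊆ V_a`, `j(V_a) ⊆ W_a`, and each restricted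
datum on `(V_a, W_a)` is stable. -/
theorem stmt_7
    (V W : Type*) [AddCommGroup V] [Module ℂ V] [FiniteDimensional ℂ V]
    [AddCommGroup W] [Module ℂ W] [FiniteDimensional ℂ W]
    (Bx By : V →ₗ[ℂ] V) (i : W →ₗ[ℂ] V) (j : V →ₗ[ℂ] W)
    (hstable : ∀ V' : Submodule ℂ V, V' ≤ LinearMap.ker j →
      (∀ v ∈ V', Bx v ∈ V') → (∀ v ∈ V', By v ∈ V') → V' = ⊥)
    (w : ℕ) (Wa : Fin w → Submodule ℂ W)
    (hW : DirectSum.IsInternal Wa)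
    (t : Fin w → ℂ) (ht0 : ∀ a, t a ≠ 0) (htinj : Function.Injective t)
    (h : W ≃ₗ[ℂ] W) (hh : ∀ a : Fin w, ∀ x ∈ Wa a, h x = t a • x)
    (g : V ≃ₗ[ℂ] V)
    (hgBx : ∀ v : V, g (Bx v) = Bx (g v))
    (hgBy : ∀ v : V, g (By v) = By (g v))
    (hgi : ∀ x : W, g (i x) = i (h.symm x))
    (hgj : ∀ v : V, j (g.symm v) = h (j v)) :
    -- the generalized eigenspaces of g for the eigenvalues t_a⁻¹:
    let Va : Fin w → Submodule ℂ V := fun a =>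
      ⨆ N : ℕ, LinearMap.ker ((g.toLinearMap - (t a)⁻¹ • (1 : Module.End ℂ V)) ^ N)
    DirectSum.IsInternal Va ∧
    (∀ a, ∀ v ∈ Va a, Bx v ∈ Va a) ∧
    (∀ a, ∀ v ∈ Va a, By v ∈ Va a) ∧
    (∀ a, ∀ x ∈ Wa a, i x ∈ Va a) ∧
    (∀ a, ∀ v ∈ Va a, j v ∈ Wa a) ∧
    -- each restricted datum `(Bx|V_a, By|V_a, i|W_a, j|V_a)` on `(V_a, W_a)` is stable
    (∀ a, ∀ V' : Submodule ℂ V, V' ≤ Va a → V' ≤ LinearMap.ker j →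
      (∀ v ∈ V', Bx v ∈ V') → (∀ v ∈ V', By v ∈ V') → V' = ⊥) := by
  intro Va
  set A : Module.End ℂ V := g.toLinearMap with hAdef
  set H : Module.End ℂ W := h.toLinearMap with hHdef
  have hVa : ∀ a, Va a = A.maxGenEigenspace (t a)⁻¹ := by
    intro a
    show (⨆ N : ℕ, LinearMap.ker ((A - (t a)⁻¹ • 1) ^ N)) = _
    simp_rw [← Module.End.genEigenspace_nat]
    exact Module.End.iSup_genEigenspace_eq A (t a)⁻¹
  have hcBx : Commute A Bx := by
    ext v; exact hgBx v
  have hcBy : Commute A By := by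
    ext v; exact hgBy v
  have hBxVa : ∀ a, ∀ v ∈ Va a, Bx v ∈ Va a := by
    intro a v hv
    rw [hVa a] at hv ⊢
    exact Module.End.mapsTo_maxGenEigenspace_of_comm hcBx (t a)⁻¹ hv
  have hByVa : ∀ a, ∀ v ∈ Va a, By v ∈ Va a := by
    intro a v hv
    rw [hVa a] at hv ⊢
    exact Module.End.mapsTo_maxGenEigenspace_of_comm hcBy (t a)⁻¹ hv
  -- h-side infrastructure
  have hWaH : ∀ a, Wa a ≤ H.maxGenEigenspace (t a) := by
    intro a x hx
    rw [Module.End.mem_maxGenEigenspace]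
    refine ⟨1, ?_⟩
    have hx' : H x = t a • x := hh a x hx
    rw [pow_one]
    simp [LinearMap.sub_apply, LinearMap.smul_apply, hx', sub_self]
  have hsupH : ⨆ a, H.maxGenEigenspace (t a) = ⊤ := by
    apply le_antisymm le_top
    rw [← hW.submodule_iSup_eq_top]
    exact iSup_mono hWaH
  have hindH := Module.End.independent_maxGenEigenspace H
  have hHbot : ∀ c : ℂ, (∀ a, c ≠ t a) → H.maxGenEigenspace c = ⊥ := by
    intro c hc
    refine (hindH c).eq_bot_of_le ?_
    calc H.maxGenEigenspace c ≤ ⊤ := le_top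
      _ = ⨆ a, H.maxGenEigenspace (t a) := hsupH.symm
      _ ≤ ⨆ μ, ⨆ _ : μ ≠ c, H.maxGenEigenspace μ :=
        iSup_le fun a => le_iSup₂_of_le (t a) (Ne.symm (hc a)) le_rfl
  have hHWa : ∀ a, H.maxGenEigenspace (t a) ≤ Wa a := by
    intro a
    set X : Submodule ℂ W := ⨆ b, ⨆ _ : b ≠ a, Wa b with hX
    have hXle : X ≤ ⨆ μ, ⨆ _ : μ ≠ t a, H.maxGenEigenspace μ := by
      apply iSup₂_le; intro b hb
      exact le_iSup₂_of_le (t b) (fun e => hb (htinj e)) (hWaH b)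
    have hdisj : X ⊓ H.maxGenEigenspace (t a) = ⊥ :=
      disjoint_iff.mp ((hindH (t a)).mono_right hXle).symm
    have htop : Wa a ⊔ X = ⊤ := by
      apply le_antisymm le_top
      rw [← hW.submodule_iSup_eq_top]
      apply iSup_le; intro b
      by_cases hb : b = a
      · subst hb; exact le_sup_left
      · exact le_sup_of_le_right (le_iSup₂_of_le b hb le_rfl)
    calc H.maxGenEigenspace (t a) = (Wa a ⊔ X) ⊓ H.maxGenEigenspace (t a) := by
          rw [htop, top_inf_eq]
      _ = Wa a ⊔ (X ⊓ H.maxGenEigenspace (t a)) := sup_inf_assoc_of_le X (hWaH a)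
      _ = Wa a := by rw [hdisj, sup_bot_eq]
      _ ≤ Wa a := le_rfl
  -- j intertwining
  have hjmap : ∀ (c : ℂ) (k : ℕ) (v : V),
      j (((g.symm.toLinearMap - c • 1) ^ k) v) = ((H - c • 1) ^ k) (j v) := by
    intro c
    apply aux_intertwine_pow j _ _
    intro v
    simp only [LinearMap.sub_apply, LinearMap.smul_apply, Module.End.one_apply, map_sub, map_smul]
    rw [show j (g.symm.toLinearMap v) = H (j v) from hgj v]
  have hjVa : ∀ a, ∀ v ∈ Va a, j v ∈ Wa a := by
    intro a v hv
    rw [hVa a, Module.End.mem_maxGenEigenspace] at hv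
    obtain ⟨k, hk⟩ := hv
    apply hHWa a
    rw [Module.End.mem_maxGenEigenspace]
    refine ⟨k, ?_⟩
    have h1 : ((g.symm.toLinearMap - (t a) • 1) ^ k) v = 0 := by
      have h2 := aux_key_inv_pow g (t a)⁻¹ (inv_ne_zero (ht0 a)) k v hk
      rwa [inv_inv] at h2
    rw [← hjmap (t a) k v, h1, map_zero]
  -- i maps Wa into Va
  have hiWa : ∀ a, ∀ x ∈ Wa a, i x ∈ Va a := by
    intro a x hx
    rw [hVa a, Module.End.mem_maxGenEigenspace]
    refine ⟨1, ?_⟩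
    rw [pow_one]
    have hsymm : h.symm x = (t a)⁻¹ • x := by
      apply_fun h using h.injective
      rw [h.apply_symm_apply, map_smul, hh a x hx, smul_smul,
        inv_mul_cancel₀ (ht0 a), one_smul]
    have hAi : A (i x) = (t a)⁻¹ • i x := by
      rw [show A (i x) = g (i x) from rfl, hgi x, hsymm, map_smul]
    simp [LinearMap.sub_apply, LinearMap.smul_apply, hAi, sub_self]
  -- generalized eigenspaces for other eigenvalues vanish
  have hinjA : ∀ k : ℕ, Function.Injective ((A : Module.End ℂ V) ^ k) := by
    intro k
    induction k with
    | zero => intro x y hxy; simpa [Module.End.one_apply] using hxy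
    | succ n ih =>
        rw [pow_succ]
        intro x y hxy
        exact g.injective (ih (show (A ^ n) (A x) = (A ^ n) (A y) from hxy))
  have hbot : ∀ μ : ℂ, (∀ a, μ ≠ (t a)⁻¹) → A.maxGenEigenspace μ = ⊥ := by
    intro μ hμ
    by_cases hμ0 : μ = 0
    · subst hμ0
      rw [eq_bot_iff]; intro x hx
      rw [Module.End.mem_maxGenEigenspace] at hx
      obtain ⟨k, hk⟩ := hx
      have h1 : ((A : Module.End ℂ V) ^ k) x = 0 := by simpa using hk
      have h2 : x = 0 := hinjA k (by simpa using h1)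
      simpa using h2
    · apply hstable
      · intro v hv
        rw [Module.End.mem_maxGenEigenspace] at hv
        obtain ⟨k, hk⟩ := hv
        have h1 := aux_key_inv_pow g μ hμ0 k v hk
        have h2 : ((H - μ⁻¹ • 1) ^ k) (j v) = 0 := by rw [← hjmap μ⁻¹ k v, h1, map_zero]
        have h3 : j v ∈ H.maxGenEigenspace μ⁻¹ :=
          (Module.End.mem_maxGenEigenspace H μ⁻¹ (j v)).mpr ⟨k, h2⟩
        have h4 : H.maxGenEigenspace μ⁻¹ = ⊥ :=
          hHbot μ⁻¹ (fun a e => hμ a (by rw [← e, inv_inv]))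
        rw [h4] at h3
        simpa using h3
      · intro v hv; exact Module.End.mapsTo_maxGenEigenspace_of_comm hcBx μ hv
      · intro v hv; exact Module.End.mapsTo_maxGenEigenspace_of_comm hcBy μ hv
  have hinternal : DirectSum.IsInternal Va := by
    have hVaeq : Va = fun a => A.maxGenEigenspace (t a)⁻¹ := funext hVa
    rw [hVaeq, DirectSum.isInternal_submodule_iff_iSupIndep_and_iSup_eq_top]
    constructor
    · exact (Module.End.independent_maxGenEigenspace A).comp
        (fun a b e => htinj (inv_injective e))
    · apply le_antisymm le_top
      calc (⊤ : Submodule ℂ V) = ⨆ μ : ℂ, A.maxGenEigenspace μ :=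
            (Module.End.iSup_maxGenEigenspace_eq_top A).symm
        _ ≤ ⨆ a, A.maxGenEigenspace (t a)⁻¹ := by
            apply iSup_le; intro μ
            by_cases hμ : ∃ a, μ = (t a)⁻¹
            · obtain ⟨a, rfl⟩ := hμ
              exact le_iSup (fun a => A.maxGenEigenspace (t a)⁻¹) a
            · push_neg at hμ
              rw [hbot μ hμ]
              exact bot_le
  exact ⟨hinternal, hBxVa, hByVa, hiWa, hjVa,
    fun a V' _ h1 h2 h3 => hstable V' h1 h2 h3⟩
end

section
/- For every multipartition λ = (λ_1,…,λ_w), the identity (tS^{−1} + qS − 1 − qt)·V_λ + W = I_λ − qt·R_λ holds in the group algebra R[ℤ/nℤ]. (Lemma 7.) -/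
open scoped Classical

noncomputable section

/-- A cell `c ∉ Y` is *addable* if `Y ∪ {c}` is again a Young diagram. -/
def YoungDiagram.Addable (Y : YoungDiagram) (c : ℕ × ℕ) : Prop :=
  c ∉ Y ∧ IsLowerSet (insert c (Y.cells : Set (ℕ × ℕ)))

/-- A cell `c ∈ Y` is *removable* if `Y \ {c}` is again a Young diagram. -/
def YoungDiagram.Removable (Y : YoungDiagram) (c : ℕ × ℕ) : Prop :=
  c ∈ Y ∧ IsLowerSet ((Y.cells : Set (ℕ × ℕ)) \ {c})

/-- The (finite) set of addable cells of a Young diagram. -/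
def YoungDiagram.addables (Y : YoungDiagram) : Finset (ℕ × ℕ) :=
  (Finset.range (Y.cells.card + 1) ×ˢ Finset.range (Y.cells.card + 1)).filter
    fun c => Y.Addable c

/-- The (finite) set of removable cells of a Young diagram. -/
def YoungDiagram.removables (Y : YoungDiagram) : Finset (ℕ × ℕ) :=
  Y.cells.filter fun c => Y.Removable c

/-- The Laurent-polynomial ring `R = ℂ[q^{±1}, t^{±1}, X_1^{±1}, …, X_w^{±1}]`,
realized as the algebra of the additive group `ℤ × ℤ × ℤ^w` over `ℂ`. -/
abbrev LaurentRing (w : ℕ) : Type := AddMonoidAlgebra ℂ ((ℤ × ℤ) × (Fin w → ℤ))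

def qL (w : ℕ) : LaurentRing w := AddMonoidAlgebra.single ((1, 0), 0) 1
def tL (w : ℕ) : LaurentRing w := AddMonoidAlgebra.single ((0, 1), 0) 1
def XL (w : ℕ) (a : Fin w) : LaurentRing w :=
  AddMonoidAlgebra.single ((0, 0), Pi.single a 1) 1

/-- The group algebra `R[ℤ/nℤ]`. -/
abbrev GrpAlg (n w : ℕ) : Type := AddMonoidAlgebra (LaurentRing w) (ZMod n)

/-- `S^m` with coefficient `r`, i.e. the element `r·S^m` of `R[ℤ/nℤ]`. -/
def el (n w : ℕ) (m : ZMod n) (r : LaurentRing w) : GrpAlg n w :=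
  AddMonoidAlgebra.single m r

/-- The monomial `q^i t^j X_a S^{k_a+i−j}` attached to the cell `c=(i,j)` of the
`a`-th component. -/
def cellEl (n w : ℕ) (k : Fin w → ZMod n) (a : Fin w) (c : ℕ × ℕ) : GrpAlg n w :=
  el n w (k a + (c.1 : ZMod n) - (c.2 : ZMod n)) (qL w ^ c.1 * tL w ^ c.2 * XL w a)


/-! ### Auxiliary material for `stmt_8` -/

section Aux

lemma aux_addable_iff (Y : YoungDiagram) (i j : ℕ) :
    Y.Addable (i, j) ↔ j = Y.rowLen i ∧ ∀ i' < i, Y.rowLen i < Y.rowLen i' := by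
  constructor
  · rintro ⟨hnm, hls⟩
    have hge : Y.rowLen i ≤ j := by
      by_contra h
      exact hnm (YoungDiagram.mem_iff_lt_rowLen.2 (lt_of_not_ge h))
    have key : ∀ i' j' : ℕ, (i', j') ≠ (i, j) → i' ≤ i → j' ≤ j → j' < Y.rowLen i' := by
      intro i' j' hne hi' hj'
      have hmem : (i', j') ∈ insert ((i:ℕ), j) (Y.cells : Set (ℕ × ℕ)) :=
        hls (Prod.mk_le_mk.2 ⟨hi', hj'⟩) (Set.mem_insert _ _)
      rcases hmem with h | h
      · exact absurd h hne
      · exact YoungDiagram.mem_iff_lt_rowLen.1 (Y.mem_cells _ |>.1 h)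
    have hj : j = Y.rowLen i := by
      rcases Nat.eq_zero_or_pos j with h0 | hpos
      · omega
      · have := key i (j - 1) (by simp [Prod.ext_iff]; omega) le_rfl (by omega)
        omega
    refine ⟨hj, fun i' hi' => ?_⟩
    have := key i' j (by simp [Prod.ext_iff]; omega) (le_of_lt hi') le_rfl
    omega
  · rintro ⟨hj, hP⟩
    constructor
    · intro hmem
      have := YoungDiagram.mem_iff_lt_rowLen.1 hmem; omega
    · rintro ⟨i1, j1⟩ ⟨i2, j2⟩ hle hmem
      simp only [Prod.mk_le_mk] at hle
      rcases hmem with h | h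
      · obtain ⟨hia, hja⟩ : i1 = i ∧ j1 = j := by simpa [Prod.ext_iff] using h
        by_cases hc : ((i2 : ℕ), j2) = ((i : ℕ), j)
        · exact hc ▸ Set.mem_insert _ _
        · right
          show ((i2 : ℕ), j2) ∈ Y.cells
          rw [YoungDiagram.mem_cells, YoungDiagram.mem_iff_lt_rowLen]
          have hle1 : i2 ≤ i := hia ▸ hle.1
          have hle2 : j2 ≤ j := hja ▸ hle.2
          rcases Nat.lt_or_ge j2 j with hlt | hge2
          · calc j2 < Y.rowLen i := hj ▸ hlt
              _ ≤ Y.rowLen i2 := Y.rowLen_anti _ _ hle1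
          · have hj2 : j2 = j := le_antisymm hle2 hge2
            have hi2 : i2 < i := by
              rcases Nat.lt_or_ge i2 i with h' | h'
              · exact h'
              · exact absurd (by simp [Prod.ext_iff]; omega) hc
            calc j2 = Y.rowLen i := by omega
              _ < Y.rowLen i2 := hP i2 hi2
      · exact Set.mem_insert_iff.2 (Or.inr (Y.isLowerSet hle h))

lemma aux_removable_iff (Y : YoungDiagram) (i j : ℕ) :
    Y.Removable (i, j) ↔ j + 1 = Y.rowLen i ∧ Y.rowLen (i + 1) < Y.rowLen i := by
  constructor
  · rintro ⟨hm, hls⟩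
    have hjlt : j < Y.rowLen i := YoungDiagram.mem_iff_lt_rowLen.1 hm
    have key : ∀ i' j' : ℕ, i ≤ i' → j ≤ j' → (i', j') ∈ Y → (i', j') = (i, j) := by
      intro i' j' hi' hj' hmem
      by_contra hne
      have : ((i:ℕ), j) ∈ (Y.cells : Set (ℕ × ℕ)) \ {((i:ℕ), j)} := by
        apply hls (Prod.mk_le_mk.2 ⟨hi', hj'⟩)
        exact ⟨(Y.mem_cells _).2 hmem, hne⟩
      exact this.2 rfl
    have h1 : j + 1 = Y.rowLen i := by
      by_contra h
      have : ((i:ℕ), j + 1) ∈ Y := YoungDiagram.mem_iff_lt_rowLen.2 (by omega)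
      have := key i (j+1) le_rfl (by omega) this
      simp [Prod.ext_iff] at this
    refine ⟨h1, ?_⟩
    by_contra h
    have hle : Y.rowLen (i+1) ≤ Y.rowLen i := Y.rowLen_anti _ _ (by omega)
    have : ((i:ℕ) + 1, j) ∈ Y := YoungDiagram.mem_iff_lt_rowLen.2 (by omega)
    have := key (i+1) j (by omega) le_rfl this
    simp [Prod.ext_iff] at this
  · rintro ⟨h1, h2⟩
    refine ⟨YoungDiagram.mem_iff_lt_rowLen.2 (by omega), ?_⟩
    rintro ⟨i1, j1⟩ ⟨i2, j2⟩ hle ⟨hmem, hne⟩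
    simp only [Prod.mk_le_mk] at hle
    constructor
    · exact (Y.mem_cells _).2 (Y.isLowerSet (Prod.mk_le_mk.2 hle) ((Y.mem_cells _).1 hmem))
    · intro hc
      obtain ⟨hia, hja⟩ : i2 = i ∧ j2 = j := by simpa [Prod.ext_iff] using hc
      have hm1 : j1 < Y.rowLen i1 := YoungDiagram.mem_iff_lt_rowLen.1 ((Y.mem_cells _).1 hmem)
      have hle1 : i ≤ i1 := hia ▸ hle.1
      have hle2 : j ≤ j1 := hja ▸ hle.2
      rcases Nat.lt_or_ge i i1 with h' | h'
      · have : Y.rowLen i1 ≤ Y.rowLen (i+1) := Y.rowLen_anti _ _ (by omega)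
        omega
      · have hi1 : i1 = i := by omega
        have hj1 : j1 = j := by
          have := Y.rowLen_anti i i1 hle1
          omega
        exact hne (by simp [Prod.ext_iff]; omega)

lemma aux_rowLen_pos_iff (Y : YoungDiagram) (i : ℕ) : 0 < Y.rowLen i ↔ i < Y.colLen 0 := by
  rw [← YoungDiagram.mem_iff_lt_rowLen, YoungDiagram.mem_iff_lt_colLen]

lemma aux_rowLen_le_card (Y : YoungDiagram) (i : ℕ) : Y.rowLen i ≤ Y.cells.card := by
  rw [Y.rowLen_eq_card]
  exact Finset.card_le_card (fun c hc => (YoungDiagram.mem_row_iff.1 hc).1)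

lemma aux_colLen_le_card (Y : YoungDiagram) : Y.colLen 0 ≤ Y.cells.card := by
  rw [Y.colLen_eq_card]
  exact Finset.card_le_card (fun c hc => (YoungDiagram.mem_col_iff.1 hc).1)

lemma aux_sum_cells {M : Type*} [AddCommMonoid M] (Y : YoungDiagram) (f : ℕ × ℕ → M) :
    ∑ c ∈ Y.cells, f c
      = ∑ i ∈ Finset.range (Y.colLen 0), ∑ j ∈ Finset.range (Y.rowLen i), f (i, j) := by
  rw [Finset.sum_sigma']
  apply Finset.sum_nbij' (i := fun c => ⟨c.1, c.2⟩) (j := fun x => (x.1, x.2))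
  · intro c hc
    have hm := (Y.mem_cells c).1 hc
    simp only [Finset.mem_sigma, Finset.mem_range]
    have h2 : c.2 < Y.rowLen c.1 := YoungDiagram.mem_iff_lt_rowLen.1 (by
      rw [show ((c.1 : ℕ), c.2) = c from rfl]; exact hm)
    constructor
    · rw [← aux_rowLen_pos_iff]; omega
    · exact h2
  · intro x hx
    simp only [Finset.mem_sigma, Finset.mem_range] at hx
    exact (Y.mem_cells _).2 (YoungDiagram.mem_iff_lt_rowLen.2 hx.2)
  · intro c _; rfl
  · intro x _; rfl
  · intro c _; rfl

lemma aux_addables_eq (Y : YoungDiagram) :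
    Y.addables = ((Finset.range (Y.colLen 0 + 1)).filter
        (fun i => ∀ i' < i, Y.rowLen i < Y.rowLen i')).image (fun i => (i, Y.rowLen i)) := by
  ext c
  obtain ⟨i, j⟩ := c
  simp only [YoungDiagram.addables, Finset.mem_filter, Finset.mem_product, Finset.mem_range,
    Finset.mem_image, aux_addable_iff, Prod.ext_iff]
  constructor
  · rintro ⟨-, hj, hP⟩
    refine ⟨i, ⟨?_, ?_⟩, rfl, hj.symm⟩
    · rcases Nat.eq_zero_or_pos i with h0 | hpos
      · omega
      · have h1 : 0 < Y.rowLen (i-1) := by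
          have := hP (i-1) (by omega); omega
        have := (aux_rowLen_pos_iff Y (i-1)).1 h1
        omega
    · exact hP
  · rintro ⟨i', ⟨hi', hP⟩, rfl, rfl⟩
    refine ⟨⟨?_, ?_⟩, rfl, hP⟩
    · have := aux_colLen_le_card Y; omega
    · have := aux_rowLen_le_card Y i'; omega

lemma aux_removables_eq (Y : YoungDiagram) :
    Y.removables = ((Finset.range (Y.colLen 0)).filter
        (fun i => Y.rowLen (i+1) < Y.rowLen i)).image (fun i => (i, Y.rowLen i - 1)) := by
  ext c
  obtain ⟨i, j⟩ := c
  simp only [YoungDiagram.removables, Finset.mem_filter, Finset.mem_image, Finset.mem_range,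
    YoungDiagram.mem_cells, YoungDiagram.mem_iff_lt_rowLen, aux_removable_iff, Prod.ext_iff]
  constructor
  · rintro ⟨-, hj, hQ⟩
    exact ⟨i, ⟨(aux_rowLen_pos_iff Y i).1 (by omega), hQ⟩, rfl, by omega⟩
  · rintro ⟨i', ⟨hi', hQ⟩, rfl, rfl⟩
    have hpos : 0 < Y.rowLen i' := (aux_rowLen_pos_iff Y i').2 hi'
    exact ⟨by omega, by omega, hQ⟩

lemma el_mul (n w : ℕ) (m m' : ZMod n) (s s' : LaurentRing w) :
    el n w m s * el n w m' s' = el n w (m + m') (s * s') :=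
  AddMonoidAlgebra.single_mul_single m m' s s'

lemma el_congr (n w : ℕ) {m m' : ZMod n} {s s' : LaurentRing w} (h : m = m') (h' : s = s') :
    el n w m s = el n w m' s' := by rw [h, h']

/-- `FF n w i r = q^i t^r S^{i-r}` -/
def FF (n w : ℕ) (i r : ℕ) : GrpAlg n w :=
  el n w ((i : ZMod n) - (r : ZMod n)) (qL w ^ i * tL w ^ r)

/-- `DD = tS⁻¹ + qS - 1 - qt` -/
def DD (n w : ℕ) : GrpAlg n w :=
  el n w (-1) (tL w) + el n w 1 (qL w) - el n w 0 1 - el n w 0 (qL w * tL w)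

lemma Dstep (n w : ℕ) (i r : ℕ) :
    DD n w * FF n w i r
      = FF n w i (r+1) - FF n w i r + FF n w (i+1) r - FF n w (i+1) (r+1) := by
  have h1 : el n w (-1) (tL w) * FF n w i r = FF n w i (r+1) := by
    simp only [FF]; rw [el_mul]
    exact el_congr n w (by push_cast; ring) (by ring)
  have h2 : el n w 1 (qL w) * FF n w i r = FF n w (i+1) r := by
    simp only [FF]; rw [el_mul]
    exact el_congr n w (by push_cast; ring) (by ring)
  have h3 : el n w 0 1 * FF n w i r = FF n w i r := by
    simp only [FF]; rw [el_mul]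
    exact el_congr n w (by ring) (by ring)
  have h4 : el n w 0 (qL w * tL w) * FF n w i r = FF n w (i+1) (r+1) := by
    simp only [FF]; rw [el_mul]
    exact el_congr n w (by push_cast; ring) (by ring)
  simp only [DD]; rw [sub_mul, sub_mul, add_mul, h1, h2, h3, h4]
  ring

lemma rowtel (n w : ℕ) (i r : ℕ) :
    DD n w * ∑ j ∈ Finset.range r, FF n w i j
      = FF n w i r - FF n w i 0 + FF n w (i+1) 0 - FF n w (i+1) r := by
  induction r with
  | zero => simp
  | succ r ih =>
    rw [Finset.sum_range_succ, mul_add, ih, Dstep]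
    ring

lemma core (n w : ℕ) (Y : YoungDiagram) :
    DD n w * (∑ c ∈ Y.cells, FF n w c.1 c.2) + el n w 0 1
      = (∑ c ∈ Y.addables, FF n w c.1 c.2)
        - el n w 0 (qL w * tL w) * (∑ c ∈ Y.removables, FF n w c.1 c.2) := by
  set N := Y.colLen 0 with hN
  set r := Y.rowLen with hr
  have hrN : r N = 0 := by
    by_contra h
    have := (aux_rowLen_pos_iff Y N).1 (Nat.pos_of_ne_zero h)
    omega
  have hL : DD n w * (∑ c ∈ Y.cells, FF n w c.1 c.2) + el n w 0 1
      = (∑ i ∈ Finset.range (N+1), FF n w i (r i))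
        - (∑ i ∈ Finset.range N, FF n w (i+1) (r i)) := by
    rw [aux_sum_cells Y (fun c => FF n w c.1 c.2), Finset.mul_sum]
    have h1 : ∀ i ∈ Finset.range N,
        DD n w * ∑ j ∈ Finset.range (r i), FF n w i j
          = (FF n w i (r i) - FF n w (i+1) (r i)) + (FF n w (i+1) 0 - FF n w i 0) := by
      intro i _
      rw [rowtel]; ring
    rw [Finset.sum_congr rfl h1, Finset.sum_add_distrib, Finset.sum_range_sub
      (f := fun i => FF n w i 0), Finset.sum_sub_distrib]
    have hF00 : FF n w 0 0 = el n w 0 1 := el_congr n w (by push_cast; ring) (by simp)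
    have hFN0 : FF n w N 0 = FF n w N (r N) := by rw [hrN]
    rw [hF00, hFN0, Finset.sum_range_succ]
    ring
  rw [hL, aux_addables_eq, aux_removables_eq, ← hN, ← hr]
  rw [Finset.sum_image (by intro a _ b _ h; exact (Prod.mk.injEq .. ▸ h).1),
      Finset.sum_image (by intro a _ b _ h; exact (Prod.mk.injEq .. ▸ h).1)]
  have h2 : ∀ i ∈ (Finset.range N).filter (fun i => r (i+1) < r i),
      el n w 0 (qL w * tL w) * FF n w i (r i - 1) = FF n w (i+1) (r i) := by
    intro i hi
    have hQ : r (i+1) < r i := (Finset.mem_filter.1 hi).2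
    have hpos : 1 ≤ r i := by omega
    have hcast : ((r i - 1 : ℕ) : ZMod n) = (r i : ZMod n) - 1 := by
      push_cast [Nat.cast_sub hpos]; ring
    simp only [FF]; rw [el_mul]
    apply el_congr
    · rw [hcast]; push_cast; ring
    · have hrw : r i - 1 + 1 = r i := by omega
      conv_rhs => rw [← hrw]
      ring
  rw [Finset.mul_sum, Finset.sum_congr rfl h2]
  rw [← Finset.sum_filter_add_sum_filter_not (Finset.range (N+1))
        (fun i => ∀ i' < i, r i < r i') (fun i => FF n w i (r i)),
      ← Finset.sum_filter_add_sum_filter_not (Finset.range N)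
        (fun i => r (i+1) < r i) (fun i => FF n w (i+1) (r i))]
  have key : ∑ i ∈ (Finset.range (N+1)).filter (fun i => ¬ ∀ i' < i, r i < r i'), FF n w i (r i)
      = ∑ i ∈ (Finset.range N).filter (fun i => ¬ r (i+1) < r i), FF n w (i+1) (r i) := by
    apply Finset.sum_nbij' (i := fun a => a - 1) (j := fun a => a + 1)
    · intro a ha
      simp only [Finset.mem_filter, Finset.mem_range] at ha ⊢
      obtain ⟨haN, hnP⟩ := ha
      push_neg at hnP
      obtain ⟨i', hi', hle⟩ := hnP
      have ha1 : 1 ≤ a := by omega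
      have hanti : r (a-1) ≤ r i' := Y.rowLen_anti _ _ (by omega)
      have hanti2 : r a ≤ r (a-1) := Y.rowLen_anti _ _ (by omega)
      have heq : r (a-1) = r a := by omega
      constructor
      · omega
      · intro hcon
        rw [show a - 1 + 1 = a from by omega] at hcon
        omega
    · intro a ha
      simp only [Finset.mem_filter, Finset.mem_range] at ha ⊢
      obtain ⟨haN, hnQ⟩ := ha
      refine ⟨by omega, ?_⟩
      push_neg
      exact ⟨a, by omega, by omega⟩
    · intro a ha
      simp only [Finset.mem_filter, Finset.mem_range] at ha
      obtain ⟨haN, hnP⟩ := ha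
      push_neg at hnP
      obtain ⟨i', hi', hle⟩ := hnP
      omega
    · intro a _; omega
    · intro a ha
      simp only [Finset.mem_filter, Finset.mem_range] at ha
      obtain ⟨haN, hnP⟩ := ha
      push_neg at hnP
      obtain ⟨i', hi', hle⟩ := hnP
      have ha1 : 1 ≤ a := by omega
      have hanti : r (a-1) ≤ r i' := Y.rowLen_anti _ _ (by omega)
      have hanti2 : r a ≤ r (a-1) := Y.rowLen_anti _ _ (by omega)
      have heq : r (a-1) = r a := by omega
      rw [show a - 1 + 1 = a from by omega, heq]
  rw [key]
  ring

lemma cellEl_eq (n w : ℕ) (k : Fin w → ZMod n) (a : Fin w) (c : ℕ × ℕ) :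
    cellEl n w k a c = el n w (k a) (XL w a) * FF n w c.1 c.2 := by
  simp only [cellEl, FF]; rw [el_mul]
  exact (el_congr n w (by ring) (by ring)).symm

end Aux

/-- Lemma 7.  For every multipartition `λ = (λ_1,…,λ_w)`,
`(tS⁻¹ + qS − 1 − qt)·V_λ + W = I_λ − qt·R_λ` in the group algebra `R[ℤ/nℤ]`. -/
theorem stmt_8 (n w : ℕ) (hn : 3 ≤ n) (hw : 1 ≤ w)
    (k : Fin w → ZMod n) (lam : Fin w → YoungDiagram) :
    (el n w (-1) (tL w) + el n w 1 (qL w) - el n w 0 1 - el n w 0 (qL w * tL w))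
        * (∑ a : Fin w, ∑ c ∈ (lam a).cells, cellEl n w k a c)
      + (∑ a : Fin w, el n w (k a) (XL w a))
    = (∑ a : Fin w, ∑ c ∈ (lam a).addables, cellEl n w k a c)
      - el n w 0 (qL w * tL w)
        * (∑ a : Fin w, ∑ c ∈ (lam a).removables, cellEl n w k a c) := by
  have hD : el n w (-1) (tL w) + el n w 1 (qL w) - el n w 0 1 - el n w 0 (qL w * tL w)
      = DD n w := rfl
  have hV : ∀ a : Fin w, ∑ c ∈ (lam a).cells, cellEl n w k a c
      = el n w (k a) (XL w a) * ∑ c ∈ (lam a).cells, FF n w c.1 c.2 := by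
    intro a
    rw [Finset.mul_sum]
    exact Finset.sum_congr rfl fun c _ => cellEl_eq n w k a c
  have hI : ∀ a : Fin w, ∑ c ∈ (lam a).addables, cellEl n w k a c
      = el n w (k a) (XL w a) * ∑ c ∈ (lam a).addables, FF n w c.1 c.2 := by
    intro a
    rw [Finset.mul_sum]
    exact Finset.sum_congr rfl fun c _ => cellEl_eq n w k a c
  have hR : ∀ a : Fin w, ∑ c ∈ (lam a).removables, cellEl n w k a c
      = el n w (k a) (XL w a) * ∑ c ∈ (lam a).removables, FF n w c.1 c.2 := by
    intro a
    rw [Finset.mul_sum]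
    exact Finset.sum_congr rfl fun c _ => cellEl_eq n w k a c
  have hW : ∀ a : Fin w, el n w (k a) (XL w a)
      = el n w (k a) (XL w a) * el n w 0 1 := by
    intro a
    rw [el_mul]
    exact el_congr n w (by ring) (by ring)
  rw [hD]
  rw [Finset.sum_congr rfl fun a _ => hV a, Finset.sum_congr rfl fun a _ => hI a,
      Finset.sum_congr rfl fun a _ => hR a, Finset.sum_congr rfl fun a _ => hW a]
  rw [Finset.mul_sum, Finset.mul_sum (f := fun a : Fin w =>
        el n w (k a) (XL w a) * ∑ c ∈ (lam a).removables, FF n w c.1 c.2),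
      ← Finset.sum_add_distrib, ← Finset.sum_sub_distrib]
  apply Finset.sum_congr rfl
  intro a _
  have := core n w (lam a)
  calc DD n w * (el n w (k a) (XL w a) * ∑ c ∈ (lam a).cells, FF n w c.1 c.2)
        + el n w (k a) (XL w a) * el n w 0 1
      = el n w (k a) (XL w a)
          * (DD n w * (∑ c ∈ (lam a).cells, FF n w c.1 c.2) + el n w 0 1) := by ring
    _ = el n w (k a) (XL w a)
          * ((∑ c ∈ (lam a).addables, FF n w c.1 c.2)
            - el n w 0 (qL w * tL w) * (∑ c ∈ (lam a).removables, FF n w c.1 c.2)) := by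
        rw [this]
    _ = el n w (k a) (XL w a) * (∑ c ∈ (lam a).addables, FF n w c.1 c.2)
        - el n w 0 (qL w * tL w)
          * (el n w (k a) (XL w a) * ∑ c ∈ (lam a).removables, FF n w c.1 c.2) := by ring

end
end

section
/- In the fixed-point model, the following identities of operator-valued formal series on K hold (coefficientwise in z and w), for all k,l ∈ ℤ/nℤ: (1) if l ≠ k, k+1, k−1 then h⁺_l(w)x⁺_k(z) = x⁺_k(z)h⁺_l(w); (2) (w−qtz)·h⁺_k(w)x⁺_k(z) = (qtw−z)·x⁺_k(z)h⁺_k(w); (3) (tw−z)·h⁺_{k+1}(w)x⁺_k(z) = (qz−w)·x⁺_k(z)h⁺_{k+1}(w). (Lemma 11.) -/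
open scoped Classical

noncomputable section

/-- Add a cell to a Young diagram (junk value `Y` if the result is not a diagram). -/
def YoungDiagram.insertCell (Y : YoungDiagram) (c : ℕ × ℕ) : YoungDiagram :=
  if h : IsLowerSet (((insert c Y.cells : Finset (ℕ × ℕ))) : Set (ℕ × ℕ)) then
    ⟨insert c Y.cells, h⟩ else Y

/-- Remove a cell from a Young diagram (junk value `Y` if the result is not a diagram). -/
def YoungDiagram.eraseCell (Y : YoungDiagram) (c : ℕ × ℕ) : YoungDiagram :=
  if h : IsLowerSet (((Y.cells.erase c : Finset (ℕ × ℕ))) : Set (ℕ × ℕ)) then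
    ⟨Y.cells.erase c, h⟩ else Y

/-- Multipartitions: `w`-tuples of Young diagrams. -/
abbrev MP (w : ℕ) : Type := Fin w → YoungDiagram

/-- The residue `k_a + i − j ∈ ℤ/nℤ` of the cell `c=(i,j)` of the `a`-th component. -/
def resid (n w : ℕ) (k : Fin w → ZMod n) (a : Fin w) (c : ℕ × ℕ) : ZMod n :=
  k a + (c.1 : ZMod n) - (c.2 : ZMod n)

variable (n w : ℕ) (k : Fin w → ZMod n) (F : Type) [Field F] (q t : F) (X : Fin w → F)

/-- The monomial `q^i t^j X_a` of the cell `c=(i,j)` of the `a`-th component. -/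
def mon (p : Fin w × (ℕ × ℕ)) : F := q ^ p.2.1 * t ^ p.2.2 * X p.1

/-- The addable cells (with their component) of residue `kk` of a multipartition. -/
def addRes (lam : MP w) (kk : ZMod n) : Finset (Fin w × (ℕ × ℕ)) :=
  Finset.univ.biUnion fun a : Fin w =>
    (((lam a).addables).filter fun c => resid n w k a c = kk).image fun c => (a, c)

/-- The removable cells (with their component) of residue `kk` of a multipartition. -/
def remRes (lam : MP w) (kk : ZMod n) : Finset (Fin w × (ℕ × ℕ)) :=
  Finset.univ.biUnion fun a : Fin w =>
    (((lam a).removables).filter fun c => resid n w k a c = kk).image fun c => (a, c)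

/-- Add a cell to a multipartition. -/
def insertMP (lam : MP w) (p : Fin w × (ℕ × ℕ)) : MP w :=
  Function.update lam p.1 ((lam p.1).insertCell p.2)

/-- Remove a cell from a multipartition. -/
def removeMP (lam : MP w) (p : Fin w × (ℕ × ℕ)) : MP w :=
  Function.update lam p.1 ((lam p.1).eraseCell p.2)

/-- The number `v_{λ,k}` of cells of residue `kk` of a multipartition. -/
def vcount (lam : MP w) (kk : ZMod n) : ℕ :=
  ∑ a : Fin w, ((lam a).cells.filter fun c => resid n w k a c = kk).card

/-- `γ_{λ,k} = q^{v_{λ,k}−v_{λ,k−1}} t^{v_{λ,k}−v_{λ,k+1}}`. -/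
def gam (lam : MP w) (kk : ZMod n) : F :=
  q ^ ((vcount n w k lam kk : ℤ) - (vcount n w k lam (kk - 1) : ℤ))
    * t ^ ((vcount n w k lam kk : ℤ) - (vcount n w k lam (kk + 1) : ℤ))

/-- `h_{λ,k} = |A_{λ,k}| − |R_{λ,k}|`. -/
def hlk (lam : MP w) (kk : ZMod n) : ℤ :=
  ((addRes n w k lam kk).card : ℤ) - ((remRes n w k lam kk).card : ℤ)

/-- The vector space `K` with basis `{b_λ}` indexed by multipartitions. -/
abbrev KV : Type := MP w →₀ F

/-- The basis vector `b_λ`. -/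
def bv (lam : MP w) : KV w F := Finsupp.single lam 1

/-- The operator `x⁺_{k,s}`. -/
def xp (kk : ZMod n) (s : ℤ) : KV w F →ₗ[F] KV w F :=
  Finsupp.linearCombination F fun lam =>
    ∑ p ∈ remRes n w k lam kk,
      ((mon w F q t X p) ^ s * (q * t) ^ (addRes n w k lam kk).card
        * (∏ m ∈ remRes n w k lam kk, mon w F q t X m)
        * (∏ m ∈ addRes n w k lam kk, mon w F q t X m)⁻¹
        * (∏ m ∈ addRes n w k lam kk,
            (1 - q⁻¹ * t⁻¹ * mon w F q t X m * (mon w F q t X p)⁻¹))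
        * (∏ m ∈ remRes n w k (removeMP w lam p) kk,
            (1 - mon w F q t X m * (mon w F q t X p)⁻¹))⁻¹)
        • bv w F (removeMP w lam p)

/-- The operator `x⁻_{k,s}`. -/
def xm (kk : ZMod n) (s : ℤ) : KV w F →ₗ[F] KV w F :=
  Finsupp.linearCombination F fun lam =>
    ∑ p ∈ addRes n w k lam kk,
      ((mon w F q t X p) ^ (s + hlk n w k (insertMP w lam p) kk)
        * gam n w k F q t (insertMP w lam p) kk
        * (∏ m ∈ remRes n w k lam kk,
            (1 - q⁻¹ * t⁻¹ * mon w F q t X p * (mon w F q t X m)⁻¹))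
        * (∏ m ∈ addRes n w k (insertMP w lam p) kk,
            (1 - mon w F q t X p * (mon w F q t X m)⁻¹))⁻¹)
        • bv w F (insertMP w lam p)

/-- The rational function `Θ_{λ,k}`, evaluated in the Laurent-series field at `y`. -/
def Theta (lam : MP w) (kk : ZMod n) (y : LaurentSeries F) : LaurentSeries F :=
  HahnSeries.C ((-1 : F) ^ hlk n w k lam kk * gam n w k F q t lam kk)
    * (∏ p ∈ addRes n w k lam kk,
        (1 - HahnSeries.C (q * t * (mon w F q t X p)⁻¹) * y)
          * (1 - HahnSeries.C (mon w F q t X p)⁻¹ * y)⁻¹)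
    * (∏ p ∈ remRes n w k lam kk,
        (1 - HahnSeries.C (q⁻¹ * t⁻¹ * (mon w F q t X p)⁻¹) * y)
          * (1 - HahnSeries.C (mon w F q t X p)⁻¹ * y)⁻¹)

/-- The variable `z` of the Laurent-series field `F((z))`. -/
def ZL : LaurentSeries F := HahnSeries.single (1 : ℤ) 1

/-- `c⁺_{λ,k,m}`: the coefficient of `z^{−m}` in the expansion of `Θ_{λ,k}(z)` as a
formal power series in `z⁻¹` (i.e. the coefficient of `u^m` in `Θ_{λ,k}(u⁻¹)`). -/
def cplus (lam : MP w) (kk : ZMod n) (m : ℤ) : F :=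
  (Theta n w k F q t X lam kk (ZL F)⁻¹).coeff m

/-- `c⁻_{λ,k,m}`: the coefficient of `z^{−m}` in the expansion of `Θ_{λ,k}(z)` as a
formal power series in `z`. -/
def cminus (lam : MP w) (kk : ZMod n) (m : ℤ) : F :=
  (Theta n w k F q t X lam kk (ZL F)).coeff (-m)

/-- The diagonal operator `h⁺_{k,m}`. -/
def hp (kk : ZMod n) (m : ℤ) : KV w F →ₗ[F] KV w F :=
  Finsupp.linearCombination F fun lam => cplus n w k F q t X lam kk m • bv w F lam

/-- The diagonal operator `h⁻_{k,m}`. -/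
def hm (kk : ZMod n) (m : ℤ) : KV w F →ₗ[F] KV w F :=
  Finsupp.linearCombination F fun lam => cminus n w k F q t X lam kk m • bv w F lam

section Comb

open Finset

lemma yd_addable_iff (Y : YoungDiagram) (c : ℕ × ℕ) :
    Y.Addable c ↔ c ∉ Y ∧ (∀ i j : ℕ, (i + 1, j) = c → (i, j) ∈ Y)
      ∧ (∀ i j : ℕ, (i, j + 1) = c → (i, j) ∈ Y) := by
  constructor
  · rintro ⟨hc, hls⟩
    refine ⟨hc, ?_, ?_⟩
    · intro i j hij
      have h1 : ((i, j) : ℕ × ℕ) ≤ c := by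
        rw [← hij]; exact ⟨Nat.le_succ i, le_refl j⟩
      have := hls h1 (Set.mem_insert c _)
      rcases this with h | h
      · exfalso; rw [← hij] at h; exact absurd (congrArg Prod.fst h) (by simp)
      · exact h
    · intro i j hij
      have h1 : ((i, j) : ℕ × ℕ) ≤ c := by
        rw [← hij]; exact ⟨le_refl i, Nat.le_succ j⟩
      have := hls h1 (Set.mem_insert c _)
      rcases this with h | h
      · exfalso; rw [← hij] at h; exact absurd (congrArg Prod.snd h) (by simp)
      · exact h
  · rintro ⟨hc, h1, h2⟩
    refine ⟨hc, ?_⟩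
    intro e d hde he
    -- d ≤ e, e ∈ insert c Y, show d ∈ insert c Y
    rcases he with he | he
    · -- e = c
      subst he
      by_cases hdc : d = e
      · subst hdc; exact Set.mem_insert _ _
      · right
        rcases lt_or_eq_of_le hde.1 with hlt | heq
        · obtain ⟨i, hi⟩ : ∃ i, e.1 = i + 1 := ⟨e.1 - 1, by omega⟩
          have hmem : (i, e.2) ∈ Y := h1 i e.2 (by rw [← hi])
          exact Y.isLowerSet (show d ≤ (i, e.2) from ⟨by omega, hde.2⟩) hmem
        · have hlt2 : d.2 < e.2 := by
            rcases lt_or_eq_of_le hde.2 with h | h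
            · exact h
            · exact absurd (Prod.ext heq h) hdc
          obtain ⟨j, hj⟩ : ∃ j, e.2 = j + 1 := ⟨e.2 - 1, by omega⟩
          have hmem : (e.1, j) ∈ Y := h2 e.1 j (by rw [← hj])
          exact Y.isLowerSet (show d ≤ (e.1, j) from ⟨hde.1, by omega⟩) hmem
    · exact Set.mem_insert_of_mem _ (Y.isLowerSet hde he)

lemma yd_removable_iff (Y : YoungDiagram) (c : ℕ × ℕ) :
    Y.Removable c ↔ c ∈ Y ∧ (c.1 + 1, c.2) ∉ Y ∧ (c.1, c.2 + 1) ∉ Y := by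
  constructor
  · rintro ⟨hc, hls⟩
    refine ⟨hc, ?_, ?_⟩
    · intro hmem
      have h1 : ((c.1 + 1, c.2) : ℕ × ℕ) ∈ ((Y.cells : Set (ℕ × ℕ)) \ {c}) := by
        refine ⟨hmem, ?_⟩
        simp only [Set.mem_singleton_iff]
        intro h; exact absurd (congrArg Prod.fst h) (by simp)
      have := hls (show c ≤ (c.1 + 1, c.2) from ⟨Nat.le_succ _, le_refl _⟩) h1
      exact this.2 rfl
    · intro hmem
      have h1 : ((c.1, c.2 + 1) : ℕ × ℕ) ∈ ((Y.cells : Set (ℕ × ℕ)) \ {c}) := by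
        refine ⟨hmem, ?_⟩
        simp only [Set.mem_singleton_iff]
        intro h; exact absurd (congrArg Prod.snd h) (by simp)
      have := hls (show c ≤ (c.1, c.2 + 1) from ⟨le_refl _, Nat.le_succ _⟩) h1
      exact this.2 rfl
  · rintro ⟨hc, h1, h2⟩
    refine ⟨hc, ?_⟩
    intro e d hde he
    -- d ≤ e, e ∈ Y \ {c}, show d ∈ Y \ {c}
    refine ⟨Y.isLowerSet hde he.1, ?_⟩
    simp only [Set.mem_singleton_iff]
    intro hdc
    subst hdc
    have hne : e ≠ d := fun h => he.2 (by simp [h])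
    rcases lt_or_eq_of_le hde.1 with hlt | heq
    · exact h1 (Y.isLowerSet (show ((d.1 + 1, d.2) : ℕ × ℕ) ≤ e from ⟨by omega, hde.2⟩) he.1)
    · have hlt2 : d.2 < e.2 := by
        rcases lt_or_eq_of_le hde.2 with h | h
        · exact h
        · exact absurd (Prod.ext heq.symm h.symm) hne
      exact h2 (Y.isLowerSet (show ((d.1, d.2 + 1) : ℕ × ℕ) ≤ e from ⟨heq.le, by omega⟩) he.1)

lemma yd_addable_bound (Y : YoungDiagram) (c : ℕ × ℕ) (h : Y.Addable c) :
    c.1 ≤ Y.cells.card ∧ c.2 ≤ Y.cells.card := by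
  rw [yd_addable_iff] at h
  constructor
  · rcases Nat.eq_zero_or_pos c.1 with h0 | h0
    · omega
    · obtain ⟨i, hi⟩ : ∃ i, c.1 = i + 1 := ⟨c.1 - 1, by omega⟩
      have hmem : (i, c.2) ∈ Y := h.2.1 i c.2 (by rw [← hi])
      have hall : ∀ a ∈ Finset.range c.1, ((a, c.2) : ℕ × ℕ) ∈ Y.cells := by
        intro a ha
        rw [Finset.mem_range] at ha
        exact Y.isLowerSet (show ((a, c.2) : ℕ × ℕ) ≤ (i, c.2) from ⟨by omega, le_refl _⟩) hmem
      calc c.1 = (Finset.range c.1).card := (Finset.card_range _).symm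
        _ ≤ Y.cells.card := Finset.card_le_card_of_injOn (fun a => (a, c.2)) hall
            (fun a _ b _ hab => congrArg Prod.fst hab)
  · rcases Nat.eq_zero_or_pos c.2 with h0 | h0
    · omega
    · obtain ⟨j, hj⟩ : ∃ j, c.2 = j + 1 := ⟨c.2 - 1, by omega⟩
      have hmem : (c.1, j) ∈ Y := h.2.2 c.1 j (by rw [← hj])
      have hall : ∀ a ∈ Finset.range c.2, ((c.1, a) : ℕ × ℕ) ∈ Y.cells := by
        intro a ha
        rw [Finset.mem_range] at ha
        exact Y.isLowerSet (show ((c.1, a) : ℕ × ℕ) ≤ (c.1, j) from ⟨le_refl _, by omega⟩) hmem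
      calc c.2 = (Finset.range c.2).card := (Finset.card_range _).symm
        _ ≤ Y.cells.card := Finset.card_le_card_of_injOn (fun a => (c.1, a)) hall
            (fun a _ b _ hab => congrArg Prod.snd hab)

lemma yd_mem_addables (Y : YoungDiagram) (c : ℕ × ℕ) :
    c ∈ Y.addables ↔ Y.Addable c := by
  rw [YoungDiagram.addables, Finset.mem_filter]
  constructor
  · exact fun h => h.2
  · intro h
    refine ⟨?_, h⟩
    have := yd_addable_bound Y c h
    rw [Finset.mem_product, Finset.mem_range, Finset.mem_range]
    omega

lemma yd_mem_removables (Y : YoungDiagram) (c : ℕ × ℕ) :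
    c ∈ Y.removables ↔ Y.Removable c := by
  rw [YoungDiagram.removables, Finset.mem_filter]
  exact ⟨fun h => h.2, fun h => ⟨h.1, h⟩⟩

lemma yd_mem_eraseCell (Y : YoungDiagram) (c : ℕ × ℕ) (hc : Y.Removable c) (d : ℕ × ℕ) :
    d ∈ Y.eraseCell c ↔ d ∈ Y ∧ d ≠ c := by
  rw [YoungDiagram.eraseCell]
  have hls : IsLowerSet (((Y.cells.erase c : Finset (ℕ × ℕ))) : Set (ℕ × ℕ)) := by
    have := hc.2
    rwa [Finset.coe_erase]
  rw [dif_pos hls]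
  show d ∈ YoungDiagram.mk (Y.cells.erase c) hls ↔ _
  rw [YoungDiagram.mem_mk, Finset.mem_erase]
  exact ⟨fun h => ⟨h.2, h.1⟩, fun h => ⟨h.2, h.1⟩⟩

lemma yd_cells_eraseCell (Y : YoungDiagram) (c : ℕ × ℕ) (hc : Y.Removable c) :
    (Y.eraseCell c).cells = Y.cells.erase c := by
  rw [YoungDiagram.eraseCell]
  have hls : IsLowerSet (((Y.cells.erase c : Finset (ℕ × ℕ))) : Set (ℕ × ℕ)) := by
    have := hc.2
    rwa [Finset.coe_erase]
  rw [dif_pos hls]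

end Comb
section Comb2

variable {Y : YoungDiagram} {c : ℕ × ℕ}

lemma yd_addable_erase_generic (hc : Y.Removable c) {d : ℕ × ℕ}
    (h1 : d ≠ c) (h2 : d ≠ (c.1 + 1, c.2)) (h3 : d ≠ (c.1, c.2 + 1)) :
    (Y.eraseCell c).Addable d ↔ Y.Addable d := by
  rw [yd_addable_iff, yd_addable_iff]
  constructor
  · rintro ⟨hd, ha, hb⟩
    refine ⟨fun hdY => hd ((yd_mem_eraseCell Y c hc d).2 ⟨hdY, h1⟩), ?_, ?_⟩
    · intro i j hij
      exact ((yd_mem_eraseCell Y c hc _).1 (ha i j hij)).1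
    · intro i j hij
      exact ((yd_mem_eraseCell Y c hc _).1 (hb i j hij)).1
  · rintro ⟨hd, ha, hb⟩
    refine ⟨fun hdY => hd ((yd_mem_eraseCell Y c hc d).1 hdY).1, ?_, ?_⟩
    · intro i j hij
      refine (yd_mem_eraseCell Y c hc _).2 ⟨ha i j hij, ?_⟩
      intro hijc
      apply h2
      rw [← hij, ← hijc]
    · intro i j hij
      refine (yd_mem_eraseCell Y c hc _).2 ⟨hb i j hij, ?_⟩
      intro hijc
      apply h3
      rw [← hij, ← hijc]

lemma yd_removable_erase_generic (hc : Y.Removable c) {d : ℕ × ℕ}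
    (h1 : d ≠ c) (h2 : (d.1 + 1, d.2) ≠ c) (h3 : (d.1, d.2 + 1) ≠ c) :
    (Y.eraseCell c).Removable d ↔ Y.Removable d := by
  rw [yd_removable_iff, yd_removable_iff]
  simp only [yd_mem_eraseCell Y c hc]
  constructor
  · rintro ⟨⟨hd, _⟩, ha, hb⟩
    exact ⟨hd, fun h => ha ⟨h, h2⟩, fun h => hb ⟨h, h3⟩⟩
  · rintro ⟨hd, ha, hb⟩
    exact ⟨⟨hd, h1⟩, fun h => ha h.1, fun h => hb h.1⟩

lemma yd_addable_erase_self (hc : Y.Removable c) : (Y.eraseCell c).Addable c := by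
  rw [yd_addable_iff]
  refine ⟨fun h => (((yd_mem_eraseCell Y c hc c).1 h).2 rfl), ?_, ?_⟩
  · intro i j hij
    refine (yd_mem_eraseCell Y c hc _).2 ⟨?_, ?_⟩
    · exact Y.isLowerSet (show ((i, j) : ℕ × ℕ) ≤ c by rw [← hij]; exact ⟨Nat.le_succ _, le_refl _⟩) hc.1
    · intro h
      have := congrArg Prod.fst (h.trans hij.symm)
      simp at this
  · intro i j hij
    refine (yd_mem_eraseCell Y c hc _).2 ⟨?_, ?_⟩
    · exact Y.isLowerSet (show ((i, j) : ℕ × ℕ) ≤ c by rw [← hij]; exact ⟨le_refl _, Nat.le_succ _⟩) hc.1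
    · intro h
      have := congrArg Prod.snd (h.trans hij.symm)
      simp at this

lemma yd_not_addable_self (hc : Y.Removable c) : ¬ Y.Addable c := by
  rw [yd_addable_iff]
  rintro ⟨h, -⟩
  exact h hc.1

lemma yd_not_removable_erase_self (hc : Y.Removable c) : ¬ (Y.eraseCell c).Removable c := by
  rw [yd_removable_iff]
  rintro ⟨h, -⟩
  exact ((yd_mem_eraseCell Y c hc c).1 h).2 rfl

lemma yd_not_addable_erase_up (hc : Y.Removable c) :
    ¬ (Y.eraseCell c).Addable (c.1 + 1, c.2) := by
  rw [yd_addable_iff]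
  rintro ⟨-, h, -⟩
  exact ((yd_mem_eraseCell Y c hc c).1 (h c.1 c.2 rfl)).2 rfl

lemma yd_addable_up_zero (hc : Y.Removable c) (h0 : c.2 = 0) :
    Y.Addable (c.1 + 1, c.2) := by
  rw [yd_addable_iff]
  refine ⟨(yd_removable_iff Y c).1 hc |>.2.1, ?_, ?_⟩
  · intro i j hij
    have h1 : i = c.1 := by
      have := congrArg Prod.fst hij; simpa using this
    have h2 : j = c.2 := congrArg Prod.snd hij
    rw [h1, h2]; exact hc.1
  · intro i j hij
    exfalso
    have := congrArg Prod.snd hij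
    simp only [h0] at this
    exact Nat.succ_ne_zero j this

lemma yd_addable_up_pos (hc : Y.Removable c) {j : ℕ} (hj : c.2 = j + 1) :
    Y.Addable (c.1 + 1, c.2) ↔ (c.1 + 1, j) ∈ Y := by
  rw [yd_addable_iff]
  constructor
  · rintro ⟨-, -, h⟩
    exact h (c.1 + 1) j (by rw [hj])
  · intro hmem
    refine ⟨(yd_removable_iff Y c).1 hc |>.2.1, ?_, ?_⟩
    · intro i j' hij
      have h1 : i = c.1 := by
        have := congrArg Prod.fst hij; simpa using this
      have h2 : j' = c.2 := congrArg Prod.snd hij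
      rw [h1, h2]; exact hc.1
    · intro i j' hij
      have h1 : i = c.1 + 1 := congrArg Prod.fst hij
      have h2 : j' = j := by
        have := congrArg Prod.snd hij
        simp only [hj] at this
        omega
      rw [h1, h2]; exact hmem

lemma yd_not_addable_up_of_not_mem (hc : Y.Removable c) {j : ℕ} (hj : c.2 = j + 1)
    (hmem : (c.1 + 1, j) ∉ Y) : ¬ Y.Addable (c.1 + 1, c.2) := by
  rw [yd_addable_up_pos hc hj]; exact hmem

lemma yd_not_removable_left (hc : Y.Removable c) {j : ℕ} (hj : c.2 = j + 1) :
    ¬ Y.Removable (c.1, j) := by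
  rw [yd_removable_iff]
  rintro ⟨-, -, h⟩
  apply h
  rw [show ((c.1, j + 1) : ℕ × ℕ) = c from Prod.ext rfl (by omega)]
  exact hc.1

lemma yd_removable_erase_left (hc : Y.Removable c) {j : ℕ} (hj : c.2 = j + 1) :
    (Y.eraseCell c).Removable (c.1, j) ↔ (c.1 + 1, j) ∉ Y := by
  rw [yd_removable_iff]
  simp only [yd_mem_eraseCell Y c hc]
  constructor
  · rintro ⟨-, h, -⟩
    intro hmem
    exact h ⟨hmem, by intro hh; have := congrArg Prod.fst hh; simp at this⟩
  · intro hmem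
    refine ⟨⟨?_, ?_⟩, ?_, ?_⟩
    · exact Y.isLowerSet (show ((c.1, j) : ℕ × ℕ) ≤ c from ⟨le_refl _, by omega⟩) hc.1
    · intro hh; have := congrArg Prod.snd hh; simp only [hj] at this; omega
    · rintro ⟨h1, -⟩; exact hmem h1
    · rintro ⟨-, h2⟩
      apply h2
      exact Prod.ext rfl (by omega)

end Comb2
section Comb3

lemma mem_addRes_iff (lam : MP w) (kk : ZMod n) (x : Fin w × (ℕ × ℕ)) :
    x ∈ addRes n w k lam kk ↔ (lam x.1).Addable x.2 ∧ resid n w k x.1 x.2 = kk := by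
  simp only [addRes, Finset.mem_biUnion, Finset.mem_univ, true_and, Finset.mem_image,
    Finset.mem_filter, yd_mem_addables]
  constructor
  · rintro ⟨a, c, ⟨hc, hr⟩, rfl⟩
    exact ⟨hc, hr⟩
  · rintro ⟨h1, h2⟩
    exact ⟨x.1, x.2, ⟨h1, h2⟩, rfl⟩

lemma mem_remRes_iff (lam : MP w) (kk : ZMod n) (x : Fin w × (ℕ × ℕ)) :
    x ∈ remRes n w k lam kk ↔ (lam x.1).Removable x.2 ∧ resid n w k x.1 x.2 = kk := by
  simp only [remRes, Finset.mem_biUnion, Finset.mem_univ, true_and, Finset.mem_image,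
    Finset.mem_filter, yd_mem_removables]
  constructor
  · rintro ⟨a, c, ⟨hc, hr⟩, rfl⟩
    exact ⟨hc, hr⟩
  · rintro ⟨h1, h2⟩
    exact ⟨x.1, x.2, ⟨h1, h2⟩, rfl⟩

lemma removeMP_apply_self (lam : MP w) (p : Fin w × (ℕ × ℕ)) :
    removeMP w lam p p.1 = (lam p.1).eraseCell p.2 :=
  Function.update_self _ _ _

lemma removeMP_apply_ne (lam : MP w) (p : Fin w × (ℕ × ℕ)) {a : Fin w} (h : a ≠ p.1) :
    removeMP w lam p a = lam a :=
  Function.update_of_ne h _ _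

lemma resid_up (a : Fin w) (c : ℕ × ℕ) :
    resid n w k a (c.1 + 1, c.2) = resid n w k a c + 1 := by
  simp only [resid]
  push_cast
  ring

lemma resid_right (a : Fin w) (c : ℕ × ℕ) :
    resid n w k a (c.1, c.2 + 1) = resid n w k a c - 1 := by
  simp only [resid]
  push_cast
  ring

variable {n w k}

lemma zmod_one_ne_zero (hn : 3 ≤ n) : (1 : ZMod n) ≠ 0 := by
  haveI : NeZero n := ⟨by omega⟩
  intro h
  rw [show (1 : ZMod n) = ((1 : ℕ) : ZMod n) by push_cast; ring] at h
  rw [ZMod.natCast_eq_zero_iff] at h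
  have := Nat.le_of_dvd one_pos h
  omega

lemma zmod_two_ne_zero (hn : 3 ≤ n) : (2 : ZMod n) ≠ 0 := by
  haveI : NeZero n := ⟨by omega⟩
  intro h
  rw [show (2 : ZMod n) = ((2 : ℕ) : ZMod n) by push_cast; ring] at h
  rw [ZMod.natCast_eq_zero_iff] at h
  have := Nat.le_of_dvd (by norm_num) h
  omega

lemma zmod_add_one_ne (hn : 3 ≤ n) (m : ZMod n) : m + 1 ≠ m := by
  intro h
  exact zmod_one_ne_zero hn (by linear_combination h)

lemma zmod_sub_one_ne (hn : 3 ≤ n) (m : ZMod n) : m - 1 ≠ m := by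
  intro h
  exact zmod_one_ne_zero hn (by linear_combination -h)

lemma zmod_add_two_ne (hn : 3 ≤ n) (m : ZMod n) : m + 2 ≠ m := by
  intro h
  exact zmod_two_ne_zero hn (by linear_combination h)

section RemoveLemmas

variable (hn : 3 ≤ n) (lam : MP w) (kk : ZMod n) (p : Fin w × (ℕ × ℕ))
  (hrem : (lam p.1).Removable p.2) (hres : resid n w k p.1 p.2 = kk)

include hrem hres

/-- Generic residue: addable sets unchanged. -/
lemma addRes_remove_of_ne (ll : ZMod n) (h1 : ll ≠ kk) (h2 : ll ≠ kk + 1) (h3 : ll ≠ kk - 1) :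
    addRes n w k (removeMP w lam p) ll = addRes n w k lam ll := by
  ext x
  rw [mem_addRes_iff, mem_addRes_iff]
  by_cases hx : x.1 = p.1
  · rw [hx, removeMP_apply_self]
    have key : ∀ (hr : resid n w k p.1 x.2 = ll),
        ((lam p.1).eraseCell p.2).Addable x.2 ↔ (lam p.1).Addable x.2 := by
      intro hr
      exact yd_addable_erase_generic hrem
        (fun h => h1 (by rw [← hr, h, hres]))
        (fun h => h2 (by rw [← hr, h, resid_up, hres]))
        (fun h => h3 (by rw [← hr, h, resid_right, hres]))
    constructor <;> rintro ⟨ha, hr⟩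
    · exact ⟨(key hr).1 ha, hr⟩
    · exact ⟨(key hr).2 ha, hr⟩
  · rw [removeMP_apply_ne (w := w) lam p hx]

/-- Generic residue: removable sets unchanged. -/
lemma remRes_remove_of_ne (ll : ZMod n) (h1 : ll ≠ kk) (h2 : ll ≠ kk + 1) (h3 : ll ≠ kk - 1) :
    remRes n w k (removeMP w lam p) ll = remRes n w k lam ll := by
  ext x
  rw [mem_remRes_iff, mem_remRes_iff]
  by_cases hx : x.1 = p.1
  · rw [hx, removeMP_apply_self]
    have key : ∀ (hr : resid n w k p.1 x.2 = ll),
        ((lam p.1).eraseCell p.2).Removable x.2 ↔ (lam p.1).Removable x.2 := by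
      intro hr
      refine yd_removable_erase_generic hrem
        (fun h => h1 (by rw [← hr, h, hres])) (fun h => h3 ?_) (fun h => h2 ?_)
      · have h5 := resid_up n w k p.1 x.2
        rw [h, hres] at h5
        rw [← hr]
        linear_combination -h5
      · have h5 := resid_right n w k p.1 x.2
        rw [h, hres] at h5
        rw [← hr]
        linear_combination -h5
    constructor <;> rintro ⟨ha, hr⟩
    · exact ⟨(key hr).1 ha, hr⟩
    · exact ⟨(key hr).2 ha, hr⟩
  · rw [removeMP_apply_ne (w := w) lam p hx]

include hn

/-- At the residue `kk` itself: the removed cell becomes addable. -/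
lemma addRes_remove_kk :
    addRes n w k (removeMP w lam p) kk = insert p (addRes n w k lam kk)
      ∧ p ∉ addRes n w k lam kk := by
  constructor
  · ext x
    rw [Finset.mem_insert, mem_addRes_iff, mem_addRes_iff]
    by_cases hxp : x = p
    · subst hxp
      simp only [true_or, iff_true]
      rw [removeMP_apply_self]
      exact ⟨yd_addable_erase_self hrem, hres⟩
    · simp only [hxp, false_or]
      by_cases hx : x.1 = p.1
      · rw [hx, removeMP_apply_self]
        have key : ∀ (hr : resid n w k p.1 x.2 = kk),
            ((lam p.1).eraseCell p.2).Addable x.2 ↔ (lam p.1).Addable x.2 := by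
          intro hr
          exact yd_addable_erase_generic hrem
            (fun h => hxp (Prod.ext hx h))
            (fun h => zmod_add_one_ne hn kk (by rw [h, resid_up, hres] at hr; exact hr))
            (fun h => zmod_sub_one_ne hn kk (by rw [h, resid_right, hres] at hr; exact hr))
        constructor <;> rintro ⟨ha, hr⟩
        · exact ⟨(key hr).1 ha, hr⟩
        · exact ⟨(key hr).2 ha, hr⟩
      · rw [removeMP_apply_ne (w := w) lam p hx]
  · rw [mem_addRes_iff]
    rintro ⟨ha, -⟩
    exact yd_not_addable_self hrem ha

/-- At the residue `kk` itself: the removed cell stops being removable. -/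
lemma remRes_remove_kk :
    remRes n w k lam kk = insert p (remRes n w k (removeMP w lam p) kk)
      ∧ p ∉ remRes n w k (removeMP w lam p) kk := by
  constructor
  · ext x
    rw [Finset.mem_insert, mem_remRes_iff, mem_remRes_iff]
    by_cases hxp : x = p
    · subst hxp
      simp only [true_or, iff_true]
      exact ⟨hrem, hres⟩
    · simp only [hxp, false_or]
      by_cases hx : x.1 = p.1
      · rw [hx, removeMP_apply_self]
        have key : ∀ (hr : resid n w k p.1 x.2 = kk),
            ((lam p.1).eraseCell p.2).Removable x.2 ↔ (lam p.1).Removable x.2 := by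
          intro hr
          refine yd_removable_erase_generic hrem
            (fun h => hxp (Prod.ext hx h)) (fun h => ?_) (fun h => ?_)
          · have h5 := resid_up n w k p.1 x.2
            rw [h, hres, hr] at h5
            exact zmod_add_one_ne hn kk (by linear_combination -h5)
          · have h5 := resid_right n w k p.1 x.2
            rw [h, hres, hr] at h5
            exact zmod_sub_one_ne hn kk (by linear_combination -h5)
        constructor <;> rintro ⟨ha, hr⟩
        · exact ⟨(key hr).2 ha, hr⟩
        · exact ⟨(key hr).1 ha, hr⟩
      · rw [removeMP_apply_ne (w := w) lam p hx]
  · rw [mem_remRes_iff, removeMP_apply_self]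
    rintro ⟨ha, -⟩
    exact yd_not_removable_erase_self hrem ha

end RemoveLemmas

end Comb3
section Comb4

variable {n w k}

section Dicho

variable (hn : 3 ≤ n) (lam : MP w) (kk : ZMod n) (p : Fin w × (ℕ × ℕ))
  (hrem : (lam p.1).Removable p.2) (hres : resid n w k p.1 p.2 = kk)

include hn hrem hres

/-- Case 1 at residue kk+1 : a new addable cell appears above the removed one. -/
lemma kk1_case1 (hcb : ∀ j, p.2.2 = j + 1 → (p.2.1 + 1, j) ∈ lam p.1) :
    addRes n w k lam (kk + 1)
        = insert (p.1, (p.2.1 + 1, p.2.2)) (addRes n w k (removeMP w lam p) (kk + 1))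
      ∧ (p.1, (p.2.1 + 1, p.2.2)) ∉ addRes n w k (removeMP w lam p) (kk + 1)
      ∧ remRes n w k (removeMP w lam p) (kk + 1) = remRes n w k lam (kk + 1) := by
  have hupres : resid n w k p.1 (p.2.1 + 1, p.2.2) = kk + 1 := by
    rw [resid_up, hres]
  have haddup : (lam p.1).Addable (p.2.1 + 1, p.2.2) := by
    rcases Nat.eq_zero_or_pos p.2.2 with h0 | h0
    · exact yd_addable_up_zero hrem h0
    · obtain ⟨j, hj⟩ : ∃ j, p.2.2 = j + 1 := ⟨p.2.2 - 1, by omega⟩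
      exact (yd_addable_up_pos hrem hj).2 (hcb j hj)
  refine ⟨?_, ?_, ?_⟩
  · ext x
    rw [Finset.mem_insert, mem_addRes_iff, mem_addRes_iff]
    by_cases hxs : x = (p.1, (p.2.1 + 1, p.2.2))
    · subst hxs
      simp only [true_or, iff_true]
      exact ⟨haddup, hupres⟩
    · simp only [hxs, false_or]
      by_cases hx : x.1 = p.1
      · rw [hx, removeMP_apply_self]
        have key : ∀ (hr : resid n w k p.1 x.2 = kk + 1),
            (lam p.1).Addable x.2 ↔ ((lam p.1).eraseCell p.2).Addable x.2 := by
          intro hr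
          refine (yd_addable_erase_generic hrem (fun h => ?_) (fun h => ?_) (fun h => ?_)).symm
          · rw [h, hres] at hr
            exact zmod_add_one_ne hn kk hr.symm
          · exact hxs (by rw [Prod.ext_iff]; exact ⟨hx, h⟩)
          · rw [h, resid_right, hres] at hr
            exact zmod_add_two_ne hn (kk - 1) (by linear_combination -hr)
        constructor <;> rintro ⟨ha, hr⟩
        · exact ⟨(key hr).1 ha, hr⟩
        · exact ⟨(key hr).2 ha, hr⟩
      · rw [removeMP_apply_ne (w := w) lam p hx]
  · rw [mem_addRes_iff, removeMP_apply_self]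
    rintro ⟨ha, -⟩
    exact yd_not_addable_erase_up hrem ha
  · ext x
    rw [mem_remRes_iff, mem_remRes_iff]
    by_cases hx : x.1 = p.1
    · rw [hx, removeMP_apply_self]
      by_cases hxs : x.2 = (p.2.1, p.2.2 - 1) ∧ 1 ≤ p.2.2
      · obtain ⟨j, hj⟩ : ∃ j, p.2.2 = j + 1 := ⟨p.2.2 - 1, by omega⟩
        have hx2 : x.2 = (p.2.1, j) := by rw [hxs.1, hj]; simp
        constructor <;> rintro ⟨ha, hr⟩ <;> exfalso
        · rw [hx2] at ha
          exact (yd_removable_erase_left hrem hj).1 ha (hcb j hj)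
        · rw [hx2] at ha
          exact yd_not_removable_left hrem hj ha
      · have key : ∀ (hr : resid n w k p.1 x.2 = kk + 1),
            ((lam p.1).eraseCell p.2).Removable x.2 ↔ (lam p.1).Removable x.2 := by
          intro hr
          refine yd_removable_erase_generic hrem (fun h => ?_) (fun h => ?_) (fun h => ?_)
          · rw [h, hres] at hr
            exact zmod_add_one_ne hn kk hr.symm
          · have h5 := resid_up n w k p.1 x.2
            rw [h, hres, hr] at h5
            exact zmod_add_two_ne hn kk (by linear_combination -h5)
          · apply hxs
            have hp2 : p.2 = (x.2.1, x.2.2 + 1) := h.symm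
            have h2 : x.2.2 + 1 = p.2.2 := by rw [hp2]
            constructor
            · rw [Prod.ext_iff]
              refine ⟨by rw [hp2], ?_⟩
              show x.2.2 = p.2.2 - 1
              omega
            · omega
        constructor <;> rintro ⟨ha, hr⟩
        · exact ⟨(key hr).1 ha, hr⟩
        · exact ⟨(key hr).2 ha, hr⟩
    · rw [removeMP_apply_ne (w := w) lam p hx]

/-- Case 2 at residue kk+1 : a new removable cell appears to the left of the removed one. -/
lemma kk1_case2 {j : ℕ} (hj : p.2.2 = j + 1) (hnm : (p.2.1 + 1, j) ∉ lam p.1) :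
    remRes n w k (removeMP w lam p) (kk + 1)
        = insert (p.1, (p.2.1, j)) (remRes n w k lam (kk + 1))
      ∧ (p.1, (p.2.1, j)) ∉ remRes n w k lam (kk + 1)
      ∧ addRes n w k lam (kk + 1) = addRes n w k (removeMP w lam p) (kk + 1) := by
  have hleftres : resid n w k p.1 (p.2.1, j) = kk + 1 := by
    have h5 := resid_right n w k p.1 (p.2.1, j)
    simp only at h5
    rw [show ((p.2.1, j + 1) : ℕ × ℕ) = p.2 by rw [Prod.ext_iff]; exact ⟨rfl, by omega⟩,
      hres] at h5
    linear_combination -h5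
  refine ⟨?_, ?_, ?_⟩
  · ext x
    rw [Finset.mem_insert, mem_remRes_iff, mem_remRes_iff]
    by_cases hxs : x = (p.1, (p.2.1, j))
    · subst hxs
      simp only [true_or, iff_true, removeMP_apply_self]
      exact ⟨(yd_removable_erase_left hrem hj).2 hnm, hleftres⟩
    · simp only [hxs, false_or]
      by_cases hx : x.1 = p.1
      · rw [hx, removeMP_apply_self]
        have key : ∀ (hr : resid n w k p.1 x.2 = kk + 1),
            ((lam p.1).eraseCell p.2).Removable x.2 ↔ (lam p.1).Removable x.2 := by
          intro hr
          refine yd_removable_erase_generic hrem (fun h => ?_) (fun h => ?_) (fun h => ?_)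
          · rw [h, hres] at hr
            exact zmod_add_one_ne hn kk hr.symm
          · have h5 := resid_up n w k p.1 x.2
            rw [h, hres, hr] at h5
            exact zmod_add_two_ne hn kk (by linear_combination -h5)
          · apply hxs
            have hp2 : p.2 = (x.2.1, x.2.2 + 1) := h.symm
            have h2 : x.2.2 + 1 = p.2.2 := by rw [hp2]
            rw [Prod.ext_iff]
            refine ⟨hx, ?_⟩
            rw [Prod.ext_iff]
            refine ⟨by rw [hp2], ?_⟩
            show x.2.2 = j
            omega
        constructor <;> rintro ⟨ha, hr⟩
        · exact ⟨(key hr).1 ha, hr⟩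
        · exact ⟨(key hr).2 ha, hr⟩
      · rw [removeMP_apply_ne (w := w) lam p hx]
  · rw [mem_remRes_iff]
    rintro ⟨ha, -⟩
    exact yd_not_removable_left hrem hj ha
  · ext x
    rw [mem_addRes_iff, mem_addRes_iff]
    by_cases hx : x.1 = p.1
    · rw [hx, removeMP_apply_self]
      by_cases hxs : x.2 = (p.2.1 + 1, p.2.2)
      · constructor <;> rintro ⟨ha, hr⟩ <;> exfalso
        · rw [hxs] at ha
          exact yd_not_addable_up_of_not_mem hrem hj hnm ha
        · rw [hxs] at ha
          exact yd_not_addable_erase_up hrem ha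
      · have key : ∀ (hr : resid n w k p.1 x.2 = kk + 1),
            (lam p.1).Addable x.2 ↔ ((lam p.1).eraseCell p.2).Addable x.2 := by
          intro hr
          refine (yd_addable_erase_generic hrem (fun h => ?_) (fun h => ?_) (fun h => ?_)).symm
          · rw [h, hres] at hr
            exact zmod_add_one_ne hn kk hr.symm
          · exact hxs h
          · rw [h, resid_right, hres] at hr
            exact zmod_add_two_ne hn (kk - 1) (by linear_combination -hr)
        constructor <;> rintro ⟨ha, hr⟩
        · exact ⟨(key hr).1 ha, hr⟩
        · exact ⟨(key hr).2 ha, hr⟩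
    · rw [removeMP_apply_ne (w := w) lam p hx]

end Dicho

section Vcount

variable (lam : MP w) (kk : ZMod n) (p : Fin w × (ℕ × ℕ))
  (hrem : (lam p.1).Removable p.2) (hres : resid n w k p.1 p.2 = kk)

include hrem hres

lemma vcount_remove (m : ZMod n) :
    vcount n w k lam m = vcount n w k (removeMP w lam p) m + (if m = kk then 1 else 0) := by
  unfold vcount
  have hstep : ∀ a : Fin w,
      ((lam a).cells.filter fun c => resid n w k a c = m).card
        = ((removeMP w lam p a).cells.filter fun c => resid n w k a c = m).card
          + (if a = p.1 ∧ m = kk then 1 else 0) := by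
    intro a
    by_cases ha : a = p.1
    · subst ha
      rw [removeMP_apply_self, yd_cells_eraseCell _ _ hrem, Finset.filter_erase]
      by_cases hm : m = kk
      · rw [if_pos ⟨rfl, hm⟩]
        have hp2 : p.2 ∈ (lam p.1).cells.filter (fun c => resid n w k p.1 c = m) :=
          Finset.mem_filter.2 ⟨(YoungDiagram.mem_cells _).2 hrem.1, by rw [hres, hm]⟩
        rw [Finset.card_erase_of_mem hp2]
        have h1 : 1 ≤ ((lam p.1).cells.filter (fun c => resid n w k p.1 c = m)).card :=
          Finset.card_pos.2 ⟨p.2, hp2⟩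
        omega
      · have hnot : p.2 ∉ (lam p.1).cells.filter (fun c => resid n w k p.1 c = m) := by
          intro hp2
          exact hm (((Finset.mem_filter.1 hp2).2).symm.trans hres)
        rw [if_neg (fun hc => hm hc.2), Finset.erase_eq_of_notMem hnot, add_zero]
    · rw [removeMP_apply_ne (w := w) lam p ha, if_neg (fun hc => ha hc.1), add_zero]
  rw [Finset.sum_congr rfl (fun a _ => hstep a), Finset.sum_add_distrib]
  congr 1
  by_cases hm : m = kk
  · simp [hm]
  · simp [hm]

end Vcount

end Comb4
section Alg

open HahnSeries

lemma LS_coeff_S_mul (f : LaurentSeries F) (m : ℤ) :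
    (HahnSeries.single (-1 : ℤ) (1 : F) * f).coeff m = f.coeff (m + 1) := by
  have h := HahnSeries.coeff_single_mul_add (r := (1:F)) (x := f) (a := m + 1) (b := (-1 : ℤ))
  rw [show (m + 1) + (-1 : ℤ) = m by ring] at h
  rw [h, one_mul]

lemma LS_coeff_C_mul (r : F) (f : LaurentSeries F) (m : ℤ) :
    (HahnSeries.C r * f).coeff m = r * f.coeff m := by
  have h := HahnSeries.coeff_single_mul_add (r := r) (x := f) (a := m) (b := (0 : ℤ))
  rw [add_zero] at h
  rw [HahnSeries.C_apply, h]

lemma LS_one_sub_ne (c : F) :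
    (1 : LaurentSeries F) - HahnSeries.C c * HahnSeries.single (-1 : ℤ) 1 ≠ 0 := by
  intro h
  have h0 := congrArg (fun g : LaurentSeries F => g.coeff 0) h
  simp only [HahnSeries.coeff_sub, HahnSeries.coeff_one, HahnSeries.C_apply,
    HahnSeries.single_mul_single, HahnSeries.coeff_zero] at h0
  rw [HahnSeries.coeff_single_of_ne (by norm_num)] at h0
  norm_num at h0

lemma ZL_inv_eq : (ZL F)⁻¹ = HahnSeries.single (-1 : ℤ) (1 : F) := by
  refine inv_eq_of_mul_eq_one_right ?_
  rw [ZL, HahnSeries.single_mul_single]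
  norm_num

variable {n w k F q t X}

lemma mon_ne_zero (hq0 : q ≠ 0) (ht0 : t ≠ 0) (hX0 : ∀ a, X a ≠ 0) (p : Fin w × (ℕ × ℕ)) :
    mon w F q t X p ≠ 0 := by
  simp only [mon]
  exact mul_ne_zero (mul_ne_zero (pow_ne_zero _ hq0) (pow_ne_zero _ ht0)) (hX0 p.1)

lemma mon_up (p : Fin w × (ℕ × ℕ)) :
    mon w F q t X (p.1, (p.2.1 + 1, p.2.2)) = q * mon w F q t X p := by
  simp only [mon, pow_succ]
  ring

lemma mon_left (p : Fin w × (ℕ × ℕ)) {j : ℕ} (hj : p.2.2 = j + 1) :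
    mon w F q t X (p.1, (p.2.1, j)) * t = mon w F q t X p := by
  simp only [mon, hj, pow_succ]
  ring

section GamLemmas

variable (hn : 3 ≤ n) (hq0 : q ≠ 0) (ht0 : t ≠ 0) (lam : MP w) (kk : ZMod n)
  (p : Fin w × (ℕ × ℕ)) (hrem : (lam p.1).Removable p.2) (hres : resid n w k p.1 p.2 = kk)

include hn hq0 ht0 hrem hres

lemma gam_remove_kk :
    gam n w k F q t lam kk = q * t * gam n w k F q t (removeMP w lam p) kk := by
  have h0 := vcount_remove lam kk p hrem hres kk
  have h1 := vcount_remove lam kk p hrem hres (kk - 1)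
  have h2 := vcount_remove lam kk p hrem hres (kk + 1)
  rw [if_pos rfl] at h0
  rw [if_neg (zmod_sub_one_ne hn kk)] at h1
  rw [if_neg (zmod_add_one_ne hn kk)] at h2
  rw [add_zero] at h1 h2
  unfold gam
  rw [h0, h1, h2]
  push_cast
  generalize (vcount n w k (removeMP w lam p) kk : ℤ) = A
  generalize (vcount n w k (removeMP w lam p) (kk - 1) : ℤ) = B
  generalize (vcount n w k (removeMP w lam p) (kk + 1) : ℤ) = Cc
  rw [show A + 1 - B = (A - B) + 1 by ring, show A + 1 - Cc = (A - Cc) + 1 by ring,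
    zpow_add_one₀ hq0, zpow_add_one₀ ht0]
  ring

lemma gam_remove_kk1 :
    gam n w k F q t (removeMP w lam p) (kk + 1) = q * gam n w k F q t lam (kk + 1) := by
  have h0 := vcount_remove lam kk p hrem hres kk
  have h1 := vcount_remove lam kk p hrem hres (kk + 1)
  have h2 := vcount_remove lam kk p hrem hres (kk + 1 + 1)
  rw [if_pos rfl] at h0
  rw [if_neg (zmod_add_one_ne hn kk)] at h1
  rw [if_neg (fun hc => zmod_add_two_ne hn kk (by linear_combination hc))] at h2
  rw [add_zero] at h1 h2
  unfold gam
  rw [show kk + 1 - 1 = kk by ring, h0, h1, h2]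
  push_cast
  generalize (vcount n w k (removeMP w lam p) kk : ℤ) = A
  generalize (vcount n w k (removeMP w lam p) (kk + 1) : ℤ) = B
  generalize (vcount n w k (removeMP w lam p) (kk + 1 + 1) : ℤ) = Cc
  rw [show B - (A + 1) = (B - A) - 1 by ring, zpow_sub_one₀ hq0]
  field_simp

end GamLemmas

end Alg
section Alg2

open HahnSeries

variable {n w k F q t X}

section ThetaLemmas

variable (hn : 3 ≤ n) (hq0 : q ≠ 0) (ht0 : t ≠ 0) (hX0 : ∀ a, X a ≠ 0) (lam : MP w)
  (kk : ZMod n) (p : Fin w × (ℕ × ℕ))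
  (hrem : (lam p.1).Removable p.2) (hres : resid n w k p.1 p.2 = kk)

include hrem hres

lemma theta_remove_of_ne (ll : ZMod n) (h1 : ll ≠ kk) (h2 : ll ≠ kk + 1) (h3 : ll ≠ kk - 1)
    (y : LaurentSeries F) :
    Theta n w k F q t X (removeMP w lam p) ll y = Theta n w k F q t X lam ll y := by
  have hA := addRes_remove_of_ne lam kk p hrem hres ll h1 h2 h3
  have hR := remRes_remove_of_ne lam kk p hrem hres ll h1 h2 h3
  have hv1 : vcount n w k (removeMP w lam p) ll = vcount n w k lam ll := by
    rw [vcount_remove lam kk p hrem hres ll, if_neg h1, add_zero]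
  have hv2 : vcount n w k (removeMP w lam p) (ll - 1) = vcount n w k lam (ll - 1) := by
    rw [vcount_remove lam kk p hrem hres (ll - 1),
      if_neg (fun hc => h2 (by linear_combination hc)), add_zero]
  have hv3 : vcount n w k (removeMP w lam p) (ll + 1) = vcount n w k lam (ll + 1) := by
    rw [vcount_remove lam kk p hrem hres (ll + 1),
      if_neg (fun hc => h3 (by linear_combination hc)), add_zero]
  unfold Theta hlk gam
  rw [hA, hR, hv1, hv2, hv3]

include hn hq0 ht0 hX0

lemma theta_rel_kk (y : LaurentSeries F) :
    HahnSeries.C (mon w F q t X p) * Theta n w k F q t X lam kk y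
        - HahnSeries.C (q * t) * (y * Theta n w k F q t X lam kk y)
      = HahnSeries.C (q * t * mon w F q t X p)
            * Theta n w k F q t X (removeMP w lam p) kk y
          - y * Theta n w k F q t X (removeMP w lam p) kk y := by
  have hv0 : mon w F q t X p ≠ 0 := mon_ne_zero hq0 ht0 hX0 p
  obtain ⟨hA, hAn⟩ := addRes_remove_kk hn lam kk p hrem hres
  obtain ⟨hR, hRn⟩ := remRes_remove_kk hn lam kk p hrem hres
  have hgam : gam n w k F q t lam kk = q * t * gam n w k F q t (removeMP w lam p) kk :=
    gam_remove_kk hn hq0 ht0 lam kk p hrem hres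
  have hhlk : hlk n w k (removeMP w lam p) kk = hlk n w k lam kk + 2 := by
    unfold hlk
    rw [hA, hR, Finset.card_insert_of_notMem hAn, Finset.card_insert_of_notMem hRn]
    push_cast
    ring
  unfold Theta
  rw [hA, hR, Finset.prod_insert hAn, Finset.prod_insert hRn, hgam, hhlk,
    zpow_add₀ (by norm_num : (-1 : F) ≠ 0),
    show ((-1 : F) ^ (2 : ℤ)) = 1 by norm_num, mul_one]
  set v := mon w F q t X p with hv
  set PA := ∏ m ∈ addRes n w k lam kk,
      ((1 - HahnSeries.C (q * t * (mon w F q t X m)⁻¹) * y)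
        * (1 - HahnSeries.C (mon w F q t X m)⁻¹ * y)⁻¹) with hPA
  set PR := ∏ m ∈ remRes n w k (removeMP w lam p) kk,
      ((1 - HahnSeries.C (q⁻¹ * t⁻¹ * (mon w F q t X m)⁻¹) * y)
        * (1 - HahnSeries.C (mon w F q t X m)⁻¹ * y)⁻¹) with hPR
  set B2 : LaurentSeries F := HahnSeries.C ((-1 : F) ^ hlk n w k lam kk
      * gam n w k F q t (removeMP w lam p) kk) with hB2
  set B1 : LaurentSeries F := HahnSeries.C ((-1 : F) ^ hlk n w k lam kk
      * (q * t * gam n w k F q t (removeMP w lam p) kk)) with hB1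
  set W := (1 - HahnSeries.C v⁻¹ * y)⁻¹ with hW
  have s4 : B1 = HahnSeries.C (q * t) * B2 := by
    rw [hB1, hB2, ← map_mul (HahnSeries.C : F →+* LaurentSeries F)]
    congr 1
    ring
  have s0 : HahnSeries.C (q * t) * HahnSeries.C v = HahnSeries.C (q * t * v) :=
    (map_mul (HahnSeries.C : F →+* LaurentSeries F) _ _).symm
  have s1 : HahnSeries.C (q * t) * HahnSeries.C v * HahnSeries.C (q⁻¹ * t⁻¹ * v⁻¹)
      = (1 : LaurentSeries F) := by
    rw [← map_mul (HahnSeries.C : F →+* LaurentSeries F), ← map_mul (HahnSeries.C : F →+* LaurentSeries F), show (1 : LaurentSeries F) = HahnSeries.C 1 from (map_one (HahnSeries.C : F →+* LaurentSeries F)).symm]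
    congr 1
    field_simp
  have s2 : HahnSeries.C (q * t * v) * HahnSeries.C (q * t * v⁻¹)
      = (HahnSeries.C (q * t) * HahnSeries.C (q * t) : LaurentSeries F) := by
    rw [← map_mul (HahnSeries.C : F →+* LaurentSeries F), ← map_mul (HahnSeries.C : F →+* LaurentSeries F)]
    congr 1
    field_simp
  have s3 : HahnSeries.C (q * t) * HahnSeries.C (q * t) * HahnSeries.C (q⁻¹ * t⁻¹ * v⁻¹)
      = (HahnSeries.C (q * t * v⁻¹) : LaurentSeries F) := by
    rw [← map_mul (HahnSeries.C : F →+* LaurentSeries F), ← map_mul (HahnSeries.C : F →+* LaurentSeries F)]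
    congr 1
    field_simp
  linear_combination
    (W * PA * PR * (1 - HahnSeries.C (q⁻¹ * t⁻¹ * v⁻¹) * y)
        * (HahnSeries.C v - HahnSeries.C (q * t) * y)) * s4
      + (W * PA * PR * B2) * s0
      - (W * PA * PR * B2 * y) * s1
      + (W * PA * PR * B2 * y) * s2
      + (W * PA * PR * B2 * y ^ 2) * s3

end ThetaLemmas

end Alg2
section Alg3

open HahnSeries

variable {n w k F q t X}

variable (hn : 3 ≤ n) (hq0 : q ≠ 0) (ht0 : t ≠ 0) (hX0 : ∀ a, X a ≠ 0) (lam : MP w)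
  (kk : ZMod n) (p : Fin w × (ℕ × ℕ))
  (hrem : (lam p.1).Removable p.2) (hres : resid n w k p.1 p.2 = kk)

include hn hq0 ht0 hX0 hrem hres

lemma theta_rel_kk1 (y : LaurentSeries F)
    (hy : ∀ c : F, (1 : LaurentSeries F) - HahnSeries.C c * y ≠ 0) :
    HahnSeries.C (q * mon w F q t X p) * Theta n w k F q t X lam (kk + 1) y
        - y * Theta n w k F q t X lam (kk + 1) y
      = HahnSeries.C t * (y * Theta n w k F q t X (removeMP w lam p) (kk + 1) y)
          - HahnSeries.C (mon w F q t X p)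
              * Theta n w k F q t X (removeMP w lam p) (kk + 1) y := by
  have hv0 : mon w F q t X p ≠ 0 := mon_ne_zero hq0 ht0 hX0 p
  have hgam1 : gam n w k F q t (removeMP w lam p) (kk + 1)
      = q * gam n w k F q t lam (kk + 1) :=
    gam_remove_kk1 hn hq0 ht0 lam kk p hrem hres
  by_cases hcb : ∀ j, p.2.2 = j + 1 → (p.2.1 + 1, j) ∈ lam p.1
  · -- Case 1
    obtain ⟨hA, hAn, hRe⟩ := kk1_case1 hn lam kk p hrem hres hcb
    have hhlk : hlk n w k lam (kk + 1) = hlk n w k (removeMP w lam p) (kk + 1) + 1 := by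
      unfold hlk
      rw [hA, hRe, Finset.card_insert_of_notMem hAn]
      push_cast
      ring
    unfold Theta
    rw [hA, Finset.prod_insert hAn, hRe, mon_up p, hgam1, hhlk,
      zpow_add₀ (by norm_num : (-1 : F) ≠ 0), zpow_one]
    set v := mon w F q t X p with hv
    set PA := ∏ m ∈ addRes n w k (removeMP w lam p) (kk + 1),
        ((1 - HahnSeries.C (q * t * (mon w F q t X m)⁻¹) * y)
          * (1 - HahnSeries.C (mon w F q t X m)⁻¹ * y)⁻¹) with hPA
    set PR := ∏ m ∈ remRes n w k lam (kk + 1),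
        ((1 - HahnSeries.C (q⁻¹ * t⁻¹ * (mon w F q t X m)⁻¹) * y)
          * (1 - HahnSeries.C (mon w F q t X m)⁻¹ * y)⁻¹) with hPR
    set B1 : LaurentSeries F := HahnSeries.C ((-1 : F) ^ hlk n w k (removeMP w lam p) (kk + 1)
        * -1 * gam n w k F q t lam (kk + 1)) with hB1
    set B2 : LaurentSeries F := HahnSeries.C ((-1 : F) ^ hlk n w k (removeMP w lam p) (kk + 1)
        * (q * gam n w k F q t lam (kk + 1))) with hB2
    set K := (1 : LaurentSeries F) - HahnSeries.C ((q * v)⁻¹) * y with hK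
    have hqv0 : q * v ≠ 0 := mul_ne_zero hq0 hv0
    have r1 : K * K⁻¹ = 1 := mul_inv_cancel₀ (hy ((q * v)⁻¹))
    have r2 : HahnSeries.C (q * v) * HahnSeries.C ((q * v)⁻¹) = (1 : LaurentSeries F) := by
      rw [← map_mul (HahnSeries.C : F →+* LaurentSeries F),
        show (1 : LaurentSeries F) = HahnSeries.C 1
          from (map_one (HahnSeries.C : F →+* LaurentSeries F)).symm]
      congr 1
      field_simp
    have m1 : HahnSeries.C (q * v) * B1 = -(HahnSeries.C v * B2) := by
      rw [hB1, hB2, ← map_mul (HahnSeries.C : F →+* LaurentSeries F),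
        ← map_mul (HahnSeries.C : F →+* LaurentSeries F),
        ← map_neg (HahnSeries.C : F →+* LaurentSeries F)]
      congr 1
      ring
    have m2 : HahnSeries.C (q * v) * HahnSeries.C (q * t * (q * v)⁻¹) * B1
        = -(HahnSeries.C t * B2) := by
      rw [hB1, hB2, ← map_mul (HahnSeries.C : F →+* LaurentSeries F),
        ← map_mul (HahnSeries.C : F →+* LaurentSeries F),
        ← map_mul (HahnSeries.C : F →+* LaurentSeries F),
        ← map_neg (HahnSeries.C : F →+* LaurentSeries F)]
      congr 1
      field_simp
    linear_combination
      (PA * PR) * m1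
        - (PA * PR * y) * m2
        + (PA * PR * HahnSeries.C (q * v) * B1
            * (1 - HahnSeries.C (q * t * (q * v)⁻¹) * y)) * r1
        + (PA * PR * y * B1 * (1 - HahnSeries.C (q * t * (q * v)⁻¹) * y) * K⁻¹) * r2
  · -- Case 2
    push_neg at hcb
    obtain ⟨j, hj, hnm⟩ := hcb
    obtain ⟨hR, hRn, hAe⟩ := kk1_case2 hn lam kk p hrem hres hj hnm
    have hu : mon w F q t X (p.1, (p.2.1, j)) * t = mon w F q t X p := mon_left p hj
    have hu0 : mon w F q t X (p.1, (p.2.1, j)) ≠ 0 := mon_ne_zero hq0 ht0 hX0 _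
    have hhlk : hlk n w k lam (kk + 1) = hlk n w k (removeMP w lam p) (kk + 1) + 1 := by
      unfold hlk
      rw [hR, hAe, Finset.card_insert_of_notMem hRn]
      push_cast
      ring
    unfold Theta
    rw [hR, Finset.prod_insert hRn, hAe, hgam1, hhlk,
      zpow_add₀ (by norm_num : (-1 : F) ≠ 0), zpow_one]
    set v := mon w F q t X p with hv
    set u := mon w F q t X (p.1, (p.2.1, j)) with huu
    set PA := ∏ m ∈ addRes n w k (removeMP w lam p) (kk + 1),
        ((1 - HahnSeries.C (q * t * (mon w F q t X m)⁻¹) * y)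
          * (1 - HahnSeries.C (mon w F q t X m)⁻¹ * y)⁻¹) with hPA
    set PR := ∏ m ∈ remRes n w k lam (kk + 1),
        ((1 - HahnSeries.C (q⁻¹ * t⁻¹ * (mon w F q t X m)⁻¹) * y)
          * (1 - HahnSeries.C (mon w F q t X m)⁻¹ * y)⁻¹) with hPR
    set B1 : LaurentSeries F := HahnSeries.C ((-1 : F) ^ hlk n w k (removeMP w lam p) (kk + 1)
        * -1 * gam n w k F q t lam (kk + 1)) with hB1
    set B2 : LaurentSeries F := HahnSeries.C ((-1 : F) ^ hlk n w k (removeMP w lam p) (kk + 1)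
        * (q * gam n w k F q t lam (kk + 1))) with hB2
    set K := (1 : LaurentSeries F) - HahnSeries.C (u⁻¹) * y with hK
    have r1 : K * K⁻¹ = 1 := mul_inv_cancel₀ (hy (u⁻¹))
    have r2 : HahnSeries.C u * HahnSeries.C (u⁻¹) = (1 : LaurentSeries F) := by
      rw [← map_mul (HahnSeries.C : F →+* LaurentSeries F),
        show (1 : LaurentSeries F) = HahnSeries.C 1
          from (map_one (HahnSeries.C : F →+* LaurentSeries F)).symm]
      congr 1
      field_simp
    have rv : (HahnSeries.C v : LaurentSeries F) = HahnSeries.C t * HahnSeries.C u := by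
      rw [← map_mul (HahnSeries.C : F →+* LaurentSeries F)]
      congr 1
      rw [← hu]
      ring
    have m1 : HahnSeries.C (q * v) * B1 = -(HahnSeries.C t * HahnSeries.C u * B2) := by
      rw [hB1, hB2, ← map_mul (HahnSeries.C : F →+* LaurentSeries F),
        ← map_mul (HahnSeries.C : F →+* LaurentSeries F),
        ← map_mul (HahnSeries.C : F →+* LaurentSeries F),
        ← map_neg (HahnSeries.C : F →+* LaurentSeries F)]
      congr 1
      rw [← hu]
      ring
    have m2 : B1 = -(HahnSeries.C t * HahnSeries.C u * HahnSeries.C (q⁻¹ * t⁻¹ * u⁻¹) * B2) := by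
      rw [hB1, hB2, ← map_mul (HahnSeries.C : F →+* LaurentSeries F),
        ← map_mul (HahnSeries.C : F →+* LaurentSeries F),
        ← map_mul (HahnSeries.C : F →+* LaurentSeries F),
        ← map_neg (HahnSeries.C : F →+* LaurentSeries F)]
      congr 1
      field_simp
    linear_combination
      (PA * PR) * m1
        - (PA * PR * y) * m2
        + (PA * PR * HahnSeries.C t * HahnSeries.C u * B2
            * (1 - HahnSeries.C (q⁻¹ * t⁻¹ * u⁻¹) * y)) * r1
        + (PA * PR * HahnSeries.C t * B2 * y
            * (1 - HahnSeries.C (q⁻¹ * t⁻¹ * u⁻¹) * y) * K⁻¹) * r2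
        + (PA * PR * (1 - HahnSeries.C (q⁻¹ * t⁻¹ * u⁻¹) * y) * K⁻¹ * B2) * rv

end Alg3
section Alg4

variable {n w k F q t X}

variable (hn : 3 ≤ n) (hq0 : q ≠ 0) (ht0 : t ≠ 0) (hX0 : ∀ a, X a ≠ 0) (lam : MP w)
  (kk : ZMod n) (p : Fin w × (ℕ × ℕ))
  (hrem : (lam p.1).Removable p.2) (hres : resid n w k p.1 p.2 = kk)

include hrem hres

lemma cplus_remove_of_ne (ll : ZMod n) (h1 : ll ≠ kk) (h2 : ll ≠ kk + 1) (h3 : ll ≠ kk - 1)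
    (m : ℤ) :
    cplus n w k F q t X (removeMP w lam p) ll m = cplus n w k F q t X lam ll m := by
  unfold cplus
  rw [theta_remove_of_ne lam kk p hrem hres ll h1 h2 h3]

include hn hq0 ht0 hX0

lemma cplus_rel_kk (a : ℤ) :
    cplus n w k F q t X (removeMP w lam p) kk (a + 1)
        - q * t * mon w F q t X p * cplus n w k F q t X (removeMP w lam p) kk a
      = q * t * cplus n w k F q t X lam kk (a + 1)
          - mon w F q t X p * cplus n w k F q t X lam kk a := by
  have key := theta_rel_kk hn hq0 ht0 hX0 lam kk p hrem hres
    (HahnSeries.single (-1 : ℤ) (1 : F))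
  have hc := congrArg (fun g : LaurentSeries F => g.coeff a) key
  simp only [HahnSeries.coeff_sub, LS_coeff_C_mul, LS_coeff_S_mul] at hc
  unfold cplus
  rw [ZL_inv_eq]
  linear_combination hc

lemma cplus_rel_kk1 (a : ℤ) :
    q * mon w F q t X p * cplus n w k F q t X lam (kk + 1) a
        - cplus n w k F q t X lam (kk + 1) (a + 1)
      = t * cplus n w k F q t X (removeMP w lam p) (kk + 1) (a + 1)
          - mon w F q t X p * cplus n w k F q t X (removeMP w lam p) (kk + 1) a := by
  have key := theta_rel_kk1 hn hq0 ht0 hX0 lam kk p hrem hres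
    (HahnSeries.single (-1 : ℤ) (1 : F)) (fun c => LS_one_sub_ne F c)
  have hc := congrArg (fun g : LaurentSeries F => g.coeff a) key
  simp only [HahnSeries.coeff_sub, LS_coeff_C_mul, LS_coeff_S_mul] at hc
  unfold cplus
  rw [ZL_inv_eq]
  linear_combination hc

end Alg4

/-- The scalar coefficient of `x⁺_{k,s}` on the path `λ → λ ∖ p`. -/
noncomputable def xcoef (kk : ZMod n) (lam : MP w) (pp : Fin w × (ℕ × ℕ)) (s : ℤ) : F :=
  (mon w F q t X pp) ^ s * (q * t) ^ (addRes n w k lam kk).card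
    * (∏ m ∈ remRes n w k lam kk, mon w F q t X m)
    * (∏ m ∈ addRes n w k lam kk, mon w F q t X m)⁻¹
    * (∏ m ∈ addRes n w k lam kk,
        (1 - q⁻¹ * t⁻¹ * mon w F q t X m * (mon w F q t X pp)⁻¹))
    * (∏ m ∈ remRes n w k (removeMP w lam pp) kk,
        (1 - mon w F q t X m * (mon w F q t X pp)⁻¹))⁻¹

section Op

variable {n w k F q t X}

lemma xp_apply (kk : ZMod n) (s : ℤ) (lam : MP w) :
    xp n w k F q t X kk s (bv w F lam)
      = ∑ pp ∈ remRes n w k lam kk,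
          xcoef n w k F q t X kk lam pp s • bv w F (removeMP w lam pp) := by
  unfold xp bv xcoef
  rw [Finsupp.linearCombination_single, one_smul]

lemma hp_apply (kk : ZMod n) (m : ℤ) (lam : MP w) :
    hp n w k F q t X kk m (bv w F lam) = cplus n w k F q t X lam kk m • bv w F lam := by
  unfold hp bv
  rw [Finsupp.linearCombination_single, one_smul]

lemma xcoef_succ (hq0 : q ≠ 0) (ht0 : t ≠ 0) (hX0 : ∀ a, X a ≠ 0) (kk : ZMod n) (lam : MP w)
    (pp : Fin w × (ℕ × ℕ)) (s : ℤ) :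
    xcoef n w k F q t X kk lam pp (s + 1)
      = mon w F q t X pp * xcoef n w k F q t X kk lam pp s := by
  unfold xcoef
  rw [zpow_add_one₀ (mon_ne_zero hq0 ht0 hX0 pp)]
  ring

lemma hpxp_apply (kk ll : ZMod n) (a b : ℤ) (lam : MP w) :
    (hp n w k F q t X ll a ∘ₗ xp n w k F q t X kk b) (bv w F lam)
      = ∑ pp ∈ remRes n w k lam kk,
          (xcoef n w k F q t X kk lam pp b
            * cplus n w k F q t X (removeMP w lam pp) ll a) • bv w F (removeMP w lam pp) := by
  rw [LinearMap.comp_apply, xp_apply, map_sum]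
  refine Finset.sum_congr rfl (fun pp _ => ?_)
  rw [map_smul, hp_apply, smul_smul]

lemma xphp_apply (kk ll : ZMod n) (a b : ℤ) (lam : MP w) :
    (xp n w k F q t X kk b ∘ₗ hp n w k F q t X ll a) (bv w F lam)
      = ∑ pp ∈ remRes n w k lam kk,
          (cplus n w k F q t X lam ll a
            * xcoef n w k F q t X kk lam pp b) • bv w F (removeMP w lam pp) := by
  rw [LinearMap.comp_apply, hp_apply, map_smul, xp_apply, Finset.smul_sum]
  refine Finset.sum_congr rfl (fun pp _ => ?_)
  rw [smul_smul]

lemma ext_by_bv {A B : KV w F →ₗ[F] KV w F} (h : ∀ lam : MP w, A (bv w F lam) = B (bv w F lam)) :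
    A = B := by
  apply Finsupp.lhom_ext
  intro lam c
  have hs : (Finsupp.single lam c : KV w F) = c • bv w F lam := by
    rw [bv, Finsupp.smul_single, smul_eq_mul, mul_one]
  rw [hs, map_smul, map_smul, h lam]

end Op
/-- Lemma 11.  In the fixed-point model over `F = ℂ(q,t,X_1,…,X_w)`,
the following hold coefficientwise (in the generating series
`x⁺_k(z) = Σ_s x⁺_{k,s} z^{−s}`, `h⁺_k(w) = Σ_m h⁺_{k,m} w^{−m}`), for all
`k, l ∈ ℤ/nℤ`:
(1) if `l ≠ k, k+1, k−1` then `h⁺_l(w)x⁺_k(z) = x⁺_k(z)h⁺_l(w)`;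
(2) `(w−qtz)·h⁺_k(w)x⁺_k(z) = (qtw−z)·x⁺_k(z)h⁺_k(w)`;
(3) `(tw−z)·h⁺_{k+1}(w)x⁺_k(z) = (qz−w)·x⁺_k(z)h⁺_{k+1}(w)`. -/
theorem stmt_13 (n w : ℕ) (hn : 3 ≤ n) (hw : 1 ≤ w) (k : Fin w → ZMod n)
    (F : Type) [Field F] [Algebra (MvPolynomial (Fin 2 ⊕ Fin w) ℂ) F]
    [IsFractionRing (MvPolynomial (Fin 2 ⊕ Fin w) ℂ) F]
    (q t : F) (X : Fin w → F)
    (hq : q = algebraMap (MvPolynomial (Fin 2 ⊕ Fin w) ℂ) F (MvPolynomial.X (Sum.inl 0)))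
    (ht : t = algebraMap (MvPolynomial (Fin 2 ⊕ Fin w) ℂ) F (MvPolynomial.X (Sum.inl 1)))
    (hX : ∀ a : Fin w, X a
      = algebraMap (MvPolynomial (Fin 2 ⊕ Fin w) ℂ) F (MvPolynomial.X (Sum.inr a)))
    (kk ll : ZMod n) :
    -- (1) if `l ≠ k, k+1, k−1` then `h⁺_l(w)` and `x⁺_k(z)` commute
    (ll ≠ kk → ll ≠ kk + 1 → ll ≠ kk - 1 →
      ∀ a b : ℤ,
        hp n w k F q t X ll a ∘ₗ xp n w k F q t X kk b
          = xp n w k F q t X kk b ∘ₗ hp n w k F q t X ll a) ∧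
    -- (2) coefficient of `w^{−a} z^{−b}` in `(w−qtz)h⁺_k(w)x⁺_k(z) = (qtw−z)x⁺_k(z)h⁺_k(w)`
    (∀ a b : ℤ,
      hp n w k F q t X kk (a + 1) ∘ₗ xp n w k F q t X kk b
          - (q * t) • (hp n w k F q t X kk a ∘ₗ xp n w k F q t X kk (b + 1))
        = (q * t) • (xp n w k F q t X kk b ∘ₗ hp n w k F q t X kk (a + 1))
          - xp n w k F q t X kk (b + 1) ∘ₗ hp n w k F q t X kk a) ∧
    -- (3) coefficient of `w^{−a} z^{−b}` in `(tw−z)h⁺_{k+1}(w)x⁺_k(z) = (qz−w)x⁺_k(z)h⁺_{k+1}(w)`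
    (∀ a b : ℤ,
      t • (hp n w k F q t X (kk + 1) (a + 1) ∘ₗ xp n w k F q t X kk b)
          - hp n w k F q t X (kk + 1) a ∘ₗ xp n w k F q t X kk (b + 1)
        = q • (xp n w k F q t X kk (b + 1) ∘ₗ hp n w k F q t X (kk + 1) a)
          - xp n w k F q t X kk b ∘ₗ hp n w k F q t X (kk + 1) (a + 1)) := by
  have hinj : Function.Injective (algebraMap (MvPolynomial (Fin 2 ⊕ Fin w) ℂ) F) :=
    IsFractionRing.injective _ _
  have hq0 : q ≠ 0 := by
    rw [hq]
    intro h
    exact MvPolynomial.X_ne_zero _ (hinj (by rw [h, map_zero]))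
  have ht0 : t ≠ 0 := by
    rw [ht]
    intro h
    exact MvPolynomial.X_ne_zero _ (hinj (by rw [h, map_zero]))
  have hX0 : ∀ a, X a ≠ 0 := by
    intro a
    rw [hX a]
    intro h
    exact MvPolynomial.X_ne_zero _ (hinj (by rw [h, map_zero]))
  refine ⟨?_, ?_, ?_⟩
  · -- part (1)
    intro h1 h2 h3 a b
    apply ext_by_bv
    intro lam
    rw [hpxp_apply, xphp_apply]
    refine Finset.sum_congr rfl (fun pp hpp => ?_)
    obtain ⟨hrem, hres⟩ := (mem_remRes_iff (n := n) (w := w) (k := k) lam kk pp).1 hpp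
    rw [cplus_remove_of_ne lam kk pp hrem hres ll h1 h2 h3 a, mul_comm]
  · -- part (2)
    intro a b
    apply ext_by_bv
    intro lam
    simp only [LinearMap.sub_apply, LinearMap.smul_apply]
    rw [hpxp_apply, hpxp_apply, xphp_apply, xphp_apply, Finset.smul_sum, Finset.smul_sum,
      ← Finset.sum_sub_distrib, ← Finset.sum_sub_distrib]
    refine Finset.sum_congr rfl (fun pp hpp => ?_)
    obtain ⟨hrem, hres⟩ := (mem_remRes_iff (n := n) (w := w) (k := k) lam kk pp).1 hpp
    rw [smul_smul, smul_smul, ← sub_smul, ← sub_smul]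
    congr 1
    rw [xcoef_succ hq0 ht0 hX0]
    have hrel := cplus_rel_kk hn hq0 ht0 hX0 lam kk pp hrem hres a
    linear_combination (xcoef n w k F q t X kk lam pp b) * hrel
  · -- part (3)
    intro a b
    apply ext_by_bv
    intro lam
    simp only [LinearMap.sub_apply, LinearMap.smul_apply]
    rw [hpxp_apply, hpxp_apply, xphp_apply, xphp_apply, Finset.smul_sum, Finset.smul_sum,
      ← Finset.sum_sub_distrib, ← Finset.sum_sub_distrib]
    refine Finset.sum_congr rfl (fun pp hpp => ?_)
    obtain ⟨hrem, hres⟩ := (mem_remRes_iff (n := n) (w := w) (k := k) lam kk pp).1 hpp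
    rw [smul_smul, smul_smul, ← sub_smul, ← sub_smul]
    congr 1
    rw [xcoef_succ hq0 ht0 hX0]
    have hrel := cplus_rel_kk1 hn hq0 ht0 hX0 lam kk pp hrem hres a
    linear_combination (-(xcoef n w k F q t X kk lam pp b)) * hrel

end
end
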